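/- arXiv:1711.00545 — 15 statements merged into one kernel-verified Lean document; each statement's English description precedes it below -/
import Mathlib

section
/- Let X and Y be locally compact Hausdorff spaces, H_X and H_Y Hausdorff spaces, and θ_X : X → H_X, θ_Y : Y → H_Y continuous maps. Suppose 𝒜(X) ⊆ C_c(X,θ_X) and 𝒜(Y) ⊆ C_c(Y,θ_Y) are weakly regular, and T : 𝒜(X) → 𝒜(Y) is a bijection such that for all f,g ∈ 𝒜(X), f ⊥⊥ g if and only if Tf ⊥⊥ Tg. Then there exists a unique homeomorphism φ : Y → X such that φ(supp^{θ_Y}(Tf)) = supp^{θ_X}(f) for all f ∈ 𝒜(X). -/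
open Set Topology

section Abstract

variable {X Y : Type*} [TopologicalSpace X] [LocallyCompactSpace X] [T2Space X]
  [TopologicalSpace Y] [LocallyCompactSpace Y] [T2Space Y] {ι : Type*}

/-- In a locally compact Hausdorff space, any point of an open set has a basis
element whose closure-set is contained in the open set. -/
private lemma shrink_aux {K : ι → Set X}
    (hKc : ∀ i, IsCompact (K i))
    (hKreg : ∀ i, closure (interior (K i)) = K i)
    (hKbasis : TopologicalSpace.IsTopologicalBasis (Set.range fun i => interior (K i)))
    {U : Set X} (hU : IsOpen U) {x : X} (hx : x ∈ U) :
    ∃ i, x ∈ interior (K i) ∧ K i ⊆ U := by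
  obtain ⟨C, hCc, hxC, hCU⟩ := exists_compact_subset hU hx
  obtain ⟨v, ⟨i, rfl⟩, hxv, hvC⟩ := hKbasis.exists_subset_of_mem_open hxC isOpen_interior
  refine ⟨i, hxv, ?_⟩
  calc K i = closure (interior (K i)) := (hKreg i).symm
    _ ⊆ closure (interior C) := closure_mono hvC
    _ ⊆ C := closure_minimal interior_subset hCc.isClosed
    _ ⊆ U := hCU

private lemma mono_transfer {K : ι → Set X} {L : ι → Set Y}
    (hKc : ∀ i, IsCompact (K i))
    (hKreg : ∀ i, closure (interior (K i)) = K i)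
    (hKbasis : TopologicalSpace.IsTopologicalBasis (Set.range fun i => interior (K i)))
    (hperp : ∀ i j, K i ∩ K j = ∅ ↔ L i ∩ L j = ∅)
    {i j : ι} (h : L i ⊆ L j) : K i ⊆ K j := by
  rw [← hKreg i]
  refine closure_minimal ?_ (hKc j).isClosed
  intro x hx
  by_contra hxj
  obtain ⟨g, hxg, hgsub⟩ := shrink_aux hKc hKreg hKbasis
    (isOpen_interior.inter (hKc j).isClosed.isOpen_compl)
    (show x ∈ interior (K i) ∩ (K j)ᶜ from ⟨hx, hxj⟩)
  have hgj : K g ∩ K j = ∅ := by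
    ext z
    simp only [Set.mem_inter_iff, Set.mem_empty_iff_false, iff_false, not_and]
    intro hz
    exact (hgsub hz).2
  have hLgj : L g ∩ L j = ∅ := (hperp g j).mp hgj
  have hLgi : L g ∩ L i = ∅ :=
    Set.eq_empty_of_subset_empty (by rw [← hLgj]; exact Set.inter_subset_inter_right _ h)
  have hKgi : K g ∩ K i = ∅ := (hperp g i).mpr hLgi
  have : x ∈ K g ∩ K i := ⟨interior_subset hxg, interior_subset hx⟩
  rw [hKgi] at this
  exact this

private lemma key {K : ι → Set X} {L : ι → Set Y}
    (hKc : ∀ i, IsCompact (K i))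
    (hKreg : ∀ i, closure (interior (K i)) = K i)
    (hKbasis : TopologicalSpace.IsTopologicalBasis (Set.range fun i => interior (K i)))
    (hLc : ∀ i, IsCompact (L i))
    (hLreg : ∀ i, closure (interior (L i)) = L i)
    (hLbasis : TopologicalSpace.IsTopologicalBasis (Set.range fun i => interior (L i)))
    (hperp : ∀ i j, K i ∩ K j = ∅ ↔ L i ∩ L j = ∅) (y : Y) :
    ∃ x : X, (∀ i, y ∈ interior (L i) → x ∈ K i)
      ∧ (∀ x', (∀ i, y ∈ interior (L i) → x' ∈ K i) → x' = x)
      ∧ (∀ V : Set X, IsOpen V → x ∈ V → ∃ j, y ∈ interior (L j) ∧ K j ⊆ V) := by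
  obtain ⟨v, ⟨i0, rfl⟩, hy0, -⟩ :=
    hLbasis.exists_subset_of_mem_open (Set.mem_univ y) isOpen_univ
  haveI : Nonempty {i : ι // y ∈ interior (L i)} := ⟨⟨i0, hy0⟩⟩
  -- each support is nonempty
  have hne : ∀ i : {i : ι // y ∈ interior (L i)}, (K i.1).Nonempty := by
    intro i
    rw [Set.nonempty_iff_ne_empty]
    intro hKe
    have hLi : L i.1 ∩ L i.1 = ∅ := (hperp i.1 i.1).mp (by rw [hKe]; exact Set.empty_inter _)
    rw [Set.inter_self] at hLi
    have hyL : y ∈ L i.1 := interior_subset i.2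
    rw [hLi] at hyL
    exact hyL
  -- directedness
  have hdir : ∀ i j : {i : ι // y ∈ interior (L i)},
      ∃ k : {i : ι // y ∈ interior (L i)}, (K k.1 ⊆ K i.1 ∩ K j.1) ∧ (L k.1 ⊆ L i.1 ∩ L j.1) := by
    intro i j
    obtain ⟨k, hyk, hksub⟩ := shrink_aux hLc hLreg hLbasis
      (isOpen_interior.inter isOpen_interior)
      (show y ∈ interior (L i.1) ∩ interior (L j.1) from ⟨i.2, j.2⟩)
    have hki : L k ⊆ L i.1 := fun z hz => interior_subset (hksub hz).1
    have hkj : L k ⊆ L j.1 := fun z hz => interior_subset (hksub hz).2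
    exact ⟨⟨k, hyk⟩,
      Set.subset_inter (mono_transfer hKc hKreg hKbasis hperp hki)
        (mono_transfer hKc hKreg hKbasis hperp hkj),
      Set.subset_inter hki hkj⟩
  have hdirK : Directed (· ⊇ ·) (fun i : {i : ι // y ∈ interior (L i)} => K i.1) := by
    intro i j
    obtain ⟨k, hk, -⟩ := hdir i j
    exact ⟨k, hk.trans Set.inter_subset_left, hk.trans Set.inter_subset_right⟩
  obtain ⟨x, hx⟩ := IsCompact.nonempty_iInter_of_directed_nonempty_isCompact_isClosed
    (fun i : {i : ι // y ∈ interior (L i)} => K i.1) hdirK hne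
    (fun i => hKc i.1) (fun i => (hKc i.1).isClosed)
  -- membership criterion on the `Y` side
  have hmemL : ∀ x₁, x₁ ∈ (⋂ i : {i : ι // y ∈ interior (L i)}, K i.1) →
      ∀ g, x₁ ∈ interior (K g) → y ∈ L g := by
    intro x₁ hx₁ g hg
    have hMne : ∀ i : {i : ι // y ∈ interior (L i)}, (L i.1 ∩ L g).Nonempty := by
      intro i
      rw [Set.nonempty_iff_ne_empty]
      intro hLe
      have hKe : K i.1 ∩ K g = ∅ := (hperp i.1 g).mpr hLe
      have : x₁ ∈ K i.1 ∩ K g := ⟨Set.mem_iInter.mp hx₁ i, interior_subset hg⟩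
      rw [hKe] at this
      exact this
    have hMdir : Directed (· ⊇ ·)
        (fun i : {i : ι // y ∈ interior (L i)} => L i.1 ∩ L g) := by
      intro i j
      obtain ⟨k, -, hk⟩ := hdir i j
      exact ⟨k, Set.inter_subset_inter_left _ (hk.trans Set.inter_subset_left),
        Set.inter_subset_inter_left _ (hk.trans Set.inter_subset_right)⟩
    obtain ⟨y', hy'⟩ := IsCompact.nonempty_iInter_of_directed_nonempty_isCompact_isClosed
      (fun i : {i : ι // y ∈ interior (L i)} => L i.1 ∩ L g) hMdir hMne
      (fun i => (hLc i.1).inter_right (hLc g).isClosed)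
      (fun i => (hLc i.1).isClosed.inter (hLc g).isClosed)
    have hy'eq : y' = y := by
      by_contra hne'
      obtain ⟨j, hyj, hjsub⟩ := shrink_aux hLc hLreg hLbasis
        (isOpen_compl_singleton (x := y'))
        (show y ∈ ({y'}ᶜ : Set Y) by
          intro hmem
          exact hne' (Set.mem_singleton_iff.mp hmem).symm)
      have : y' ∈ L j ∩ L g := Set.mem_iInter.mp hy' ⟨j, hyj⟩
      exact hjsub this.1 rfl
    have : y' ∈ L i0 ∩ L g := Set.mem_iInter.mp hy' ⟨i0, hy0⟩
    rw [hy'eq] at this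
    exact this.2
  -- the intersection is a singleton
  have hsing : ∀ x₁, x₁ ∈ (⋂ i : {i : ι // y ∈ interior (L i)}, K i.1) → x₁ = x := by
    intro x₁ hx₁
    by_contra hne12
    obtain ⟨u, v, hu, hv, hx₁u, hxv, huv⟩ := t2_separation hne12
    obtain ⟨g₁, hg₁, hg₁u⟩ := shrink_aux hKc hKreg hKbasis hu hx₁u
    obtain ⟨g₂, hg₂, hg₂v⟩ := shrink_aux hKc hKreg hKbasis hv hxv
    have hK12 : K g₁ ∩ K g₂ = ∅ := by
      have huv' := Set.disjoint_iff_inter_eq_empty.mp huv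
      have hsub : K g₁ ∩ K g₂ ⊆ u ∩ v := Set.inter_subset_inter hg₁u hg₂v
      rw [huv'] at hsub
      exact Set.eq_empty_of_subset_empty hsub
    have hL12 : L g₁ ∩ L g₂ = ∅ := (hperp g₁ g₂).mp hK12
    have hy1 : y ∈ L g₁ := hmemL x₁ hx₁ g₁ hg₁
    have hy2 : y ∈ L g₂ := hmemL x hx g₂ hg₂
    have : y ∈ L g₁ ∩ L g₂ := ⟨hy1, hy2⟩
    rw [hL12] at this
    exact this
  refine ⟨x, fun i hi => Set.mem_iInter.mp hx ⟨i, hi⟩,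
    fun x' hx' => hsing x' (Set.mem_iInter.mpr fun i => hx' i.1 i.2), ?_⟩
  -- shrinking property
  intro V hV hxV
  obtain ⟨g, hxg, hgV⟩ := shrink_aux hKc hKreg hKbasis hV hxV
  by_contra hcon
  push_neg at hcon
  have hNne : ∀ i : {i : ι // y ∈ interior (L i)},
      (K i.1 ∩ (interior (K g))ᶜ).Nonempty := by
    intro i
    have hnot : ¬ K i.1 ⊆ interior (K g) := by
      intro hsub
      exact hcon i.1 i.2 (hsub.trans ((interior_subset).trans hgV))
    obtain ⟨z, hz, hz'⟩ := Set.not_subset.mp hnot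
    exact ⟨z, hz, hz'⟩
  have hNdir : Directed (· ⊇ ·)
      (fun i : {i : ι // y ∈ interior (L i)} => K i.1 ∩ (interior (K g))ᶜ) := by
    intro i j
    obtain ⟨k, hk, -⟩ := hdir i j
    exact ⟨k, Set.inter_subset_inter_left _ (hk.trans Set.inter_subset_left),
      Set.inter_subset_inter_left _ (hk.trans Set.inter_subset_right)⟩
  obtain ⟨x₁, hx₁⟩ := IsCompact.nonempty_iInter_of_directed_nonempty_isCompact_isClosed
    (fun i : {i : ι // y ∈ interior (L i)} => K i.1 ∩ (interior (K g))ᶜ) hNdir hNne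
    (fun i => (hKc i.1).inter_right isOpen_interior.isClosed_compl)
    (fun i => (hKc i.1).isClosed.inter isOpen_interior.isClosed_compl)
  have hx₁K : x₁ ∈ ⋂ i : {i : ι // y ∈ interior (L i)}, K i.1 :=
    Set.mem_iInter.mpr fun i => (Set.mem_iInter.mp hx₁ i).1
  have : x₁ = x := hsing x₁ hx₁K
  have hx₁c : x₁ ∈ (interior (K g))ᶜ := (Set.mem_iInter.mp hx₁ ⟨i0, hy0⟩).2
  rw [this] at hx₁c
  exact hx₁c hxg

private lemma exists_map {K : ι → Set X} {L : ι → Set Y}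
    (hKc : ∀ i, IsCompact (K i))
    (hKreg : ∀ i, closure (interior (K i)) = K i)
    (hKbasis : TopologicalSpace.IsTopologicalBasis (Set.range fun i => interior (K i)))
    (hLc : ∀ i, IsCompact (L i))
    (hLreg : ∀ i, closure (interior (L i)) = L i)
    (hLbasis : TopologicalSpace.IsTopologicalBasis (Set.range fun i => interior (L i)))
    (hperp : ∀ i j, K i ∩ K j = ∅ ↔ L i ∩ L j = ∅) :
    ∃ φ : Y → X, Continuous φ ∧ (∀ i y, y ∈ interior (L i) → φ y ∈ K i)
      ∧ (∀ y x, (∀ i, y ∈ interior (L i) → x ∈ K i) → x = φ y) := by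
  choose φ h1 h2 h3 using fun y => key hKc hKreg hKbasis hLc hLreg hLbasis hperp y
  refine ⟨φ, ?_, fun i y hy => h1 y i hy, fun y x hx => h2 y x hx⟩
  rw [continuous_def]
  intro V hV
  rw [isOpen_iff_forall_mem_open]
  intro y hy
  obtain ⟨j, hyj, hjV⟩ := h3 y V hV hy
  exact ⟨interior (L j), fun y' hy' => hjV (h1 y' j hy'), isOpen_interior, hyj⟩

private lemma abstract_main {K : ι → Set X} {L : ι → Set Y}
    (hKc : ∀ i, IsCompact (K i))
    (hKreg : ∀ i, closure (interior (K i)) = K i)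
    (hKbasis : TopologicalSpace.IsTopologicalBasis (Set.range fun i => interior (K i)))
    (hLc : ∀ i, IsCompact (L i))
    (hLreg : ∀ i, closure (interior (L i)) = L i)
    (hLbasis : TopologicalSpace.IsTopologicalBasis (Set.range fun i => interior (L i)))
    (hperp : ∀ i j, K i ∩ K j = ∅ ↔ L i ∩ L j = ∅) :
    ∃! φ : Y ≃ₜ X, ∀ i, φ '' L i = K i := by
  obtain ⟨φ, hφc, hφ1, hφ2⟩ := exists_map hKc hKreg hKbasis hLc hLreg hLbasis hperp
  have hperp' : ∀ i j, L i ∩ L j = ∅ ↔ K i ∩ K j = ∅ := fun i j => (hperp i j).symm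
  obtain ⟨ψ, hψc, hψ1, hψ2⟩ := exists_map hLc hLreg hLbasis hKc hKreg hKbasis hperp'
  have cross : ∀ (x : X) (i : ι), ψ x ∈ interior (L i) → x ∈ K i := by
    intro x i hxi
    by_contra hxK
    obtain ⟨j, hxj, hjsub⟩ := shrink_aux hKc hKreg hKbasis (hKc i).isClosed.isOpen_compl hxK
    have h1 : K j ∩ K i = ∅ := by
      ext z
      simp only [Set.mem_inter_iff, Set.mem_empty_iff_false, iff_false, not_and]
      exact fun hz => hjsub hz
    have h2 : L j ∩ L i = ∅ := (hperp j i).mp h1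
    have : ψ x ∈ L j ∩ L i := ⟨hψ1 j x hxj, interior_subset hxi⟩
    rw [h2] at this
    exact this
  have cross' : ∀ (y : Y) (i : ι), φ y ∈ interior (K i) → y ∈ L i := by
    intro y i hyi
    by_contra hyL
    obtain ⟨j, hyj, hjsub⟩ := shrink_aux hLc hLreg hLbasis (hLc i).isClosed.isOpen_compl hyL
    have h1 : L j ∩ L i = ∅ := by
      ext z
      simp only [Set.mem_inter_iff, Set.mem_empty_iff_false, iff_false, not_and]
      exact fun hz => hjsub hz
    have h2 : K j ∩ K i = ∅ := (hperp j i).mpr h1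
    have : φ y ∈ K j ∩ K i := ⟨hφ1 j y hyj, interior_subset hyi⟩
    rw [h2] at this
    exact this
  have hright : ∀ x, φ (ψ x) = x := fun x => (hφ2 (ψ x) x (fun i hi => cross x i hi)).symm
  have hleft : ∀ y, ψ (φ y) = y := fun y => (hψ2 (φ y) y (fun i hi => cross' y i hi)).symm
  refine ⟨Homeomorph.mk ⟨φ, ψ, hleft, hright⟩ hφc hψc, ?_, ?_⟩
  · intro i
    show φ '' L i = K i
    apply subset_antisymm
    · calc φ '' L i = φ '' closure (interior (L i)) := by rw [hLreg i]
        _ ⊆ closure (φ '' interior (L i)) := image_closure_subset_closure_image hφc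
        _ ⊆ closure (K i) := closure_mono (Set.image_subset_iff.mpr fun y hy => hφ1 i y hy)
        _ = K i := (hKc i).isClosed.closure_eq
    · intro x hx
      have hψim : ψ '' K i ⊆ L i := by
        calc ψ '' K i = ψ '' closure (interior (K i)) := by rw [hKreg i]
          _ ⊆ closure (ψ '' interior (K i)) := image_closure_subset_closure_image hψc
          _ ⊆ closure (L i) := closure_mono (Set.image_subset_iff.mpr fun x' hx' => hψ1 i x' hx')
          _ = L i := (hLc i).isClosed.closure_eq
      exact ⟨ψ x, hψim ⟨x, hx, rfl⟩, hright x⟩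
  · intro Φ' hΦ'
    apply Homeomorph.ext
    intro y
    exact hφ2 y (Φ' y) (fun i hi =>
      (hΦ' i) ▸ Set.mem_image_of_mem _ (interior_subset hi))

end Abstract

private lemma regclosure {Z : Type*} [TopologicalSpace Z] {U : Set Z} (hU : IsOpen U) :
    closure (interior (closure U)) = closure U := by
  apply subset_antisymm
  · calc closure (interior (closure U)) ⊆ closure (closure U) :=
        closure_mono interior_subset
      _ = closure U := closure_closure
  · exact closure_mono (interior_maximal subset_closure hU)

/-- **Main recovery theorem.** If `𝒜(X)` and `𝒜(Y)` are weakly regular families of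
compactly supported (relative to `θX`, `θY`) continuous functions and
`T : 𝒜(X) → 𝒜(Y)` is a `⊥⊥`-isomorphism, then there is a unique homeomorphism
`φ : Y → X` with `φ(supp(Tf)) = supp(f)` for all `f`. -/
theorem stmt_0
    {X Y HX HY : Type*}
    [TopologicalSpace X] [LocallyCompactSpace X] [T2Space X]
    [TopologicalSpace Y] [LocallyCompactSpace Y] [T2Space Y]
    [TopologicalSpace HX] [T2Space HX] [TopologicalSpace HY] [T2Space HY]
    (θX : C(X, HX)) (θY : C(Y, HY))
    (A : Set C(X, HX)) (B : Set C(Y, HY))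
    -- `A ⊆ C_c(X, θX)` and `B ⊆ C_c(Y, θY)`
    (hAc : ∀ f ∈ A, IsCompact (closure {x | f x ≠ θX x}))
    (hBc : ∀ g ∈ B, IsCompact (closure {y | g y ≠ θY y}))
    -- weak regularity
    (hθA : θX ∈ A) (hθB : θY ∈ B)
    (hAreg : TopologicalSpace.IsTopologicalBasis
      ((fun f : C(X, HX) => interior (closure {x | f x ≠ θX x})) '' A))
    (hBreg : TopologicalSpace.IsTopologicalBasis
      ((fun g : C(Y, HY) => interior (closure {y | g y ≠ θY y})) '' B))
    -- `T` is a `⊥⊥`-isomorphism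
    (T : A → B) (hT : Function.Bijective T)
    (hTperp : ∀ f g : A,
      closure {x | (f : C(X, HX)) x ≠ θX x} ∩ closure {x | (g : C(X, HX)) x ≠ θX x} = ∅ ↔
      closure {y | (T f : C(Y, HY)) y ≠ θY y} ∩ closure {y | (T g : C(Y, HY)) y ≠ θY y} = ∅) :
    ∃! φ : Y ≃ₜ X, ∀ f : A,
      φ '' closure {y | (T f : C(Y, HY)) y ≠ θY y} = closure {x | (f : C(X, HX)) x ≠ θX x} := by
  have hopenX : ∀ f : C(X, HX), IsOpen {x | f x ≠ θX x} := fun f =>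
    (isClosed_eq f.continuous θX.continuous).isOpen_compl
  have hopenY : ∀ g : C(Y, HY), IsOpen {y | g y ≠ θY y} := fun g =>
    (isClosed_eq g.continuous θY.continuous).isOpen_compl
  have hKc : ∀ i : A, IsCompact (closure {x | (i : C(X, HX)) x ≠ θX x}) :=
    fun i => hAc i.1 i.2
  have hKreg : ∀ i : A,
      closure (interior (closure {x | (i : C(X, HX)) x ≠ θX x}))
        = closure {x | (i : C(X, HX)) x ≠ θX x} :=
    fun i => regclosure (hopenX i.1)
  have hKbasis : TopologicalSpace.IsTopologicalBasis
      (Set.range fun i : A => interior (closure {x | (i : C(X, HX)) x ≠ θX x})) := by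
    rw [Set.image_eq_range] at hAreg
    exact hAreg
  have hLc : ∀ i : A, IsCompact (closure {y | (T i : C(Y, HY)) y ≠ θY y}) :=
    fun i => hBc (T i).1 (T i).2
  have hLreg : ∀ i : A,
      closure (interior (closure {y | (T i : C(Y, HY)) y ≠ θY y}))
        = closure {y | (T i : C(Y, HY)) y ≠ θY y} :=
    fun i => regclosure (hopenY (T i).1)
  have hLbasis : TopologicalSpace.IsTopologicalBasis
      (Set.range fun i : A => interior (closure {y | (T i : C(Y, HY)) y ≠ θY y})) := by
    rw [Set.image_eq_range] at hBreg
    have hrc := hT.2.range_comp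
      (fun b : B => interior (closure {y | (b : C(Y, HY)) y ≠ θY y}))
    rw [← hrc] at hBreg
    exact hBreg
  exact abstract_main
    (K := fun i : A => closure {x | (i : C(X, HX)) x ≠ θX x})
    (L := fun i : A => closure {y | (T i : C(Y, HY)) y ≠ θY y})
    hKc hKreg hKbasis hLc hLreg hLbasis hTperp
end

section
/- Let X be a locally compact Hausdorff space, H a Hausdorff space, θ : X → H continuous, and 𝒜 ⊆ C_c(X,θ) weakly regular. For an open set U ⊆ X let I(U) = {f ∈ 𝒜 : supp^θ(f) ⊆ U}, and for a ⊥⊥-ideal I ⊆ 𝒜 let U(I) = ⋃_{f∈I} σ^θ(f). Then: (a) for every ⊥⊥-ideal I of 𝒜, I = I(U(I)); (b) for every open U ⊆ X, U = U(I(U)); (c) the map U ↦ I(U) is an order isomorphism (with respect to inclusion) between the lattice of open subsets of X and the lattice of ⊥⊥-ideals of 𝒜. -/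
open Set Topology

variable {X H : Type*} [TopologicalSpace X] [TopologicalSpace H]

/-- The `θ`-support of `f`: the closure of `{x | f x ≠ θ x}`. -/
def suppTheta (θ f : C(X, H)) : Set X := closure {x | f x ≠ θ x}

/-- `σ^θ(f)`: the interior of the `θ`-support of `f`. -/
def sigTheta (θ f : C(X, H)) : Set X := interior (suppTheta θ f)

/-- Weak disjointness: `f ⊥ g`. -/
def PerpTheta (θ f g : C(X, H)) : Prop := {x | f x ≠ θ x} ∩ {x | g x ≠ θ x} = ∅

/-- `f ⋐ g`: `supp^θ(f) ⊆ σ^θ(g)`. -/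
def WayBelowTheta (θ f g : C(X, H)) : Prop := suppTheta θ f ⊆ sigTheta θ g

/-- `S` is a cover of `b` (relative to the family `A`). -/
def IsCoverOf (θ : C(X, H)) (A S : Set C(X, H)) (b : C(X, H)) : Prop :=
  ∀ h ∈ A, (∀ a ∈ S, PerpTheta θ h a) → PerpTheta θ h b

/-- `B` is a strong cover of `a` (relative to the family `A`). -/
def IsStrongCoverOf (θ : C(X, H)) (A B : Set C(X, H)) (a : C(X, H)) : Prop :=
  B.Finite ∧ ∃ B' ⊆ A, B'.Finite ∧
    (∀ b' ∈ B', ∃ b ∈ B, WayBelowTheta θ b' b) ∧ IsCoverOf θ A B' a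

/-- `I` is a `⊥⊥`-ideal of `A`. -/
def IsPerpPerpIdeal (θ : C(X, H)) (A I : Set C(X, H)) : Prop :=
  I ⊆ A ∧ ∀ a ∈ A, (a ∈ I ↔ ∃ B ⊆ I, IsStrongCoverOf θ A B a)


section AuxPerpPerp

lemma isOpen_ne' [T2Space H] (θ f : C(X,H)) : IsOpen {x | f x ≠ θ x} := by
  have : IsClosed {x | f x = θ x} := isClosed_eq f.continuous θ.continuous
  simpa [Set.compl_setOf] using this.isOpen_compl

lemma ne_subset_sig [T2Space H] (θ f : C(X,H)) : {x | f x ≠ θ x} ⊆ sigTheta θ f :=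
  interior_maximal subset_closure (isOpen_ne' θ f)

lemma supp_eq_closure_sig [T2Space H] (θ f : C(X,H)) :
    suppTheta θ f = closure (sigTheta θ f) := by
  refine subset_antisymm (closure_mono (ne_subset_sig θ f)) ?_
  have h1 : closure (sigTheta θ f) ⊆ closure (suppTheta θ f) :=
    closure_mono interior_subset
  rwa [show closure (suppTheta θ f) = suppTheta θ f from
    (isClosed_closure).closure_eq] at h1

lemma perp_supp [T2Space H] {θ h a : C(X,H)} (hp : PerpTheta θ h a) :
    {x | h x ≠ θ x} ∩ suppTheta θ a = ∅ := by
  have := (isOpen_ne' θ h).inter_closure (t := {x | a x ≠ θ x})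
  rw [hp] at this
  simpa [suppTheta] using subset_antisymm (by simpa using this) (empty_subset _)

lemma exists_basic [LocallyCompactSpace X] [T2Space X] [T2Space H]
    {θ : C(X, H)} {A : Set C(X, H)}
    (hAreg : TopologicalSpace.IsTopologicalBasis (sigTheta θ '' A))
    {U : Set X} (hU : IsOpen U) {x : X} (hx : x ∈ U) :
    ∃ f ∈ A, x ∈ sigTheta θ f ∧ suppTheta θ f ⊆ U := by
  obtain ⟨K, hK, hxK, hKU⟩ := exists_compact_subset hU hx
  obtain ⟨s, ⟨f, hfA, rfl⟩, hxs, hsK⟩ := hAreg.exists_subset_of_mem_open hxK isOpen_interior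
  refine ⟨f, hfA, hxs, ?_⟩
  rw [supp_eq_closure_sig]
  exact (closure_minimal (hsK.trans interior_subset) hK.isClosed).trans hKU

lemma strongCover_of [LocallyCompactSpace X] [T2Space X] [T2Space H]
    {θ : C(X, H)} {A : Set C(X, H)}
    (hAc : ∀ f ∈ A, IsCompact (suppTheta θ f))
    (hAreg : TopologicalSpace.IsTopologicalBasis (sigTheta θ '' A))
    {I : Set C(X,H)} (hIA : I ⊆ A)
    {a : C(X,H)} (haA : a ∈ A) (hsub : suppTheta θ a ⊆ ⋃ g ∈ I, sigTheta θ g) :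
    ∃ B ⊆ I, IsStrongCoverOf θ A B a := by
  have hchoice : ∀ x : suppTheta θ a, ∃ g, g ∈ I ∧ ∃ f, f ∈ A ∧
      (x : X) ∈ sigTheta θ f ∧ suppTheta θ f ⊆ sigTheta θ g := by
    rintro ⟨x, hx⟩
    obtain ⟨g, hgI, hxg⟩ := mem_iUnion₂.1 (hsub hx)
    obtain ⟨f, hfA, hxf, hsf⟩ := exists_basic hAreg (isOpen_interior) hxg
    exact ⟨g, hgI, f, hfA, hxf, hsf⟩
  choose g hgI f hfA hxf hsf using hchoice
  obtain ⟨t, ht⟩ := (hAc a haA).elim_finite_subcover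
    (fun x : suppTheta θ a => sigTheta θ (f x)) (fun _ => isOpen_interior)
    (fun x hx => mem_iUnion.2 ⟨⟨x, hx⟩, hxf _⟩)
  refine ⟨g '' t, ?_, (t.finite_toSet.image g), f '' t,
    ?_, (t.finite_toSet.image f), ?_, ?_⟩
  · rintro b ⟨x, _, rfl⟩; exact hgI x
  · rintro b ⟨x, _, rfl⟩; exact hfA x
  · rintro b' ⟨x, hxt, rfl⟩
    exact ⟨g x, ⟨x, hxt, rfl⟩, hsf x⟩
  · intro h hhA hperp
    rw [PerpTheta, eq_empty_iff_forall_notMem]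
    rintro y ⟨hy1, hy2⟩
    obtain ⟨x, hxmem⟩ := mem_iUnion.1 (ht (subset_closure hy2))
    simp only [mem_iUnion] at hxmem
    obtain ⟨hxt, hyx⟩ := hxmem
    have hp := perp_supp (hperp (f x) ⟨x, hxt, rfl⟩)
    exact (eq_empty_iff_forall_notMem.1 hp y) ⟨hy1, interior_subset hyx⟩

lemma supp_subset_of_strongCover [T2Space H]
    {θ : C(X, H)} {A : Set C(X, H)}
    (hAreg : TopologicalSpace.IsTopologicalBasis (sigTheta θ '' A))
    {B : Set C(X,H)} {a : C(X,H)}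
    (hB : IsStrongCoverOf θ A B a) : suppTheta θ a ⊆ ⋃ b ∈ B, sigTheta θ b := by
  obtain ⟨hBfin, B', hB'A, hB'fin, hwb, hcov⟩ := hB
  have hclosed : IsClosed (⋃ b' ∈ B', suppTheta θ b') :=
    hB'fin.isClosed_biUnion (fun _ _ => isClosed_closure)
  have key : {x | a x ≠ θ x} ⊆ ⋃ b' ∈ B', suppTheta θ b' := by
    intro x hx
    by_contra hxn
    have hW : IsOpen ({x | a x ≠ θ x} \ ⋃ b' ∈ B', suppTheta θ b') :=
      (isOpen_ne' θ a).sdiff hclosed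
    have hxW : x ∈ {x | a x ≠ θ x} \ ⋃ b' ∈ B', suppTheta θ b' := ⟨hx, hxn⟩
    obtain ⟨s, ⟨h, hhA, rfl⟩, hxs, hsW⟩ := hAreg.exists_subset_of_mem_open hxW hW
    have hperp : ∀ b' ∈ B', PerpTheta θ h b' := by
      intro b' hb'
      rw [PerpTheta, eq_empty_iff_forall_notMem]
      rintro y ⟨hy1, hy2⟩
      exact (hsW (ne_subset_sig θ h hy1)).2 (mem_biUnion hb' (subset_closure hy2))
    have hha := hcov h hhA hperp
    have hne : ({x | h x ≠ θ x}).Nonempty := by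
      by_contra hne
      rw [not_nonempty_iff_eq_empty] at hne
      have hs : sigTheta θ h = ∅ := by simp [sigTheta, suppTheta, hne]
      exact (hs ▸ hxs : x ∈ (∅ : Set X))
    obtain ⟨y, hy⟩ := hne
    have hyNa : y ∈ {x | a x ≠ θ x} := (hsW (ne_subset_sig θ h hy)).1
    exact (eq_empty_iff_forall_notMem.1 hha y) ⟨hy, hyNa⟩
  have h2 : suppTheta θ a ⊆ ⋃ b' ∈ B', suppTheta θ b' := closure_minimal key hclosed
  intro x hx
  obtain ⟨b', hb', hxb'⟩ := mem_iUnion₂.1 (h2 hx)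
  obtain ⟨b, hbB, hwbb⟩ := hwb b' hb'
  exact mem_biUnion hbB (hwbb hxb')

end AuxPerpPerp

/-- The lattice of open subsets of `X` is order-isomorphic, via `U ↦ I(U)`, to the
lattice of `⊥⊥`-ideals of a weakly regular family `𝒜 ⊆ C_c(X, θ)`. -/
theorem stmt_1 [LocallyCompactSpace X] [T2Space X] [T2Space H]
    (θ : C(X, H)) (A : Set C(X, H))
    (hAc : ∀ f ∈ A, IsCompact (suppTheta θ f)) (hθA : θ ∈ A)
    (hAreg : TopologicalSpace.IsTopologicalBasis (sigTheta θ '' A)) :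
    -- (a) every `⊥⊥`-ideal `I` satisfies `I = I(U(I))`
    (∀ I : Set C(X, H), IsPerpPerpIdeal θ A I →
      I = {f ∈ A | suppTheta θ f ⊆ ⋃ g ∈ I, sigTheta θ g}) ∧
    -- (b) every open `U` satisfies `U = U(I(U))`
    (∀ U : Set X, IsOpen U → U = ⋃ f ∈ {f ∈ A | suppTheta θ f ⊆ U}, sigTheta θ f) ∧
    -- (c) `U ↦ I(U)` is an order isomorphism between the lattice of open sets of `X`
    -- and the lattice of `⊥⊥`-ideals of `A`
    (∀ U : Set X, IsOpen U → IsPerpPerpIdeal θ A {f ∈ A | suppTheta θ f ⊆ U}) ∧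
    Set.InjOn (fun U : Set X => {f ∈ A | suppTheta θ f ⊆ U}) {U | IsOpen U} ∧
    (∀ I : Set C(X, H), IsPerpPerpIdeal θ A I →
      ∃ U : Set X, IsOpen U ∧ {f ∈ A | suppTheta θ f ⊆ U} = I) ∧
    (∀ U V : Set X, IsOpen U → IsOpen V →
      (U ⊆ V ↔ {f ∈ A | suppTheta θ f ⊆ U} ⊆ {f ∈ A | suppTheta θ f ⊆ V})) := by
  have partB : ∀ U : Set X, IsOpen U →
      U = ⋃ f ∈ {f ∈ A | suppTheta θ f ⊆ U}, sigTheta θ f := by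
    intro U hU
    apply subset_antisymm
    · intro x hx
      obtain ⟨f, hfA, hxf, hsf⟩ := exists_basic hAreg hU hx
      exact mem_biUnion ⟨hfA, hsf⟩ hxf
    · intro x hx
      obtain ⟨f, hf, hxf⟩ := mem_iUnion₂.1 hx
      exact hf.2 (interior_subset hxf)
  have partC1 : ∀ U : Set X, IsOpen U →
      IsPerpPerpIdeal θ A {f ∈ A | suppTheta θ f ⊆ U} := by
    intro U hU
    refine ⟨fun f hf => hf.1, fun a haA => ⟨?_, ?_⟩⟩
    · intro haI
      have h : suppTheta θ a ⊆ ⋃ g ∈ {f ∈ A | suppTheta θ f ⊆ U}, sigTheta θ g := by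
        rw [← partB U hU]; exact haI.2
      exact strongCover_of hAc hAreg (fun f hf => hf.1) haA h
    · rintro ⟨B, hBI, hBsc⟩
      refine ⟨haA, (supp_subset_of_strongCover hAreg hBsc).trans ?_⟩
      exact iUnion₂_subset fun b hb => interior_subset.trans (hBI hb).2
  have partA : ∀ I : Set C(X, H), IsPerpPerpIdeal θ A I →
      I = {f ∈ A | suppTheta θ f ⊆ ⋃ g ∈ I, sigTheta θ g} := by
    intro I hI
    obtain ⟨hIA, hiff⟩ := hI
    apply subset_antisymm
    · intro a haI
      have haA := hIA haI
      obtain ⟨B, hBI, hBsc⟩ := (hiff a haA).1 haI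
      refine ⟨haA, (supp_subset_of_strongCover hAreg hBsc).trans ?_⟩
      exact iUnion₂_subset fun b hb => subset_biUnion_of_mem (hBI hb)
    · rintro a ⟨haA, hsub⟩
      exact (hiff a haA).2 (strongCover_of hAc hAreg hIA haA hsub)
  refine ⟨partA, partB, partC1, ?_, ?_, ?_⟩
  · intro U hU V hV hUV
    simp only at hUV
    rw [partB U hU, partB V hV, hUV]
  · intro I hI
    exact ⟨⋃ g ∈ I, sigTheta θ g, isOpen_biUnion fun _ _ => isOpen_interior,
      (partA I hI).symm⟩
  · intro U V hU hV
    constructor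
    · intro hUV f hf
      exact ⟨hf.1, hf.2.trans hUV⟩
    · intro hIJ
      rw [partB U hU, partB V hV]
      exact iUnion₂_subset fun f hf => subset_biUnion_of_mem (hIJ hf)
end

section
/- Let X and Y be locally compact Hausdorff spaces, H_X and H_Y Hausdorff spaces, θ_X : X → H_X, θ_Y : Y → H_Y continuous, and suppose 𝒜(X) ⊆ C_c(X,θ_X) and 𝒜(Y) ⊆ C_c(Y,θ_Y) are weakly regular. If T : 𝒜(X) → 𝒜(Y) is a bijection such that for all f,g ∈ 𝒜(X), f ⊥ g if and only if Tf ⊥ Tg, then for all f,g ∈ 𝒜(X): σ^{θ_X}(f) ⊆ σ^{θ_X}(g) if and only if σ^{θ_Y}(Tf) ⊆ σ^{θ_Y}(Tg). In particular, Z^{θ_X}(f) = ∅ if and only if Z^{θ_Y}(Tf) = ∅. -/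
open Set Topology

section Aux

variable {X H : Type*} [TopologicalSpace X] [TopologicalSpace H] [T2Space H]

private def sg (θ f : C(X, H)) : Set X := interior (closure {x | f x ≠ θ x})

private lemma openNe (θ f : C(X, H)) : IsOpen {x | f x ≠ θ x} :=
  (isClosed_eq f.continuous θ.continuous).isOpen_compl

private lemma ne_subset_sg (θ f : C(X, H)) : {x | f x ≠ θ x} ⊆ sg θ f :=
  interior_maximal subset_closure (openNe θ f)

private lemma disj_open_closure {s t : Set X} (hs : IsOpen s) (h : s ∩ t = ∅) :
    s ∩ closure t = ∅ := by
  apply eq_empty_of_subset_empty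
  calc s ∩ closure t ⊆ closure (s ∩ t) := hs.inter_closure
    _ = ∅ := by rw [h, closure_empty]

private lemma perp_iff (θ f g : C(X, H)) :
    {x | f x ≠ θ x} ∩ {x | g x ≠ θ x} = ∅ ↔ sg θ f ∩ sg θ g = ∅ := by
  constructor
  · intro h
    have h1 : {x | f x ≠ θ x} ∩ closure {x | g x ≠ θ x} = ∅ :=
      disj_open_closure (openNe θ f) h
    have h2 : sg θ g ∩ {x | f x ≠ θ x} = ∅ := by
      apply eq_empty_of_subset_empty
      intro z hz
      have : z ∈ {x | f x ≠ θ x} ∩ closure {x | g x ≠ θ x} :=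
        ⟨hz.2, interior_subset hz.1⟩
      rw [h1] at this; exact this
    have h3 : sg θ g ∩ closure {x | f x ≠ θ x} = ∅ :=
      disj_open_closure isOpen_interior h2
    apply eq_empty_of_subset_empty
    intro z hz
    have : z ∈ sg θ g ∩ closure {x | f x ≠ θ x} := ⟨hz.2, interior_subset hz.1⟩
    rw [h3] at this; exact this
  · intro h
    apply eq_empty_of_subset_empty
    intro z hz
    have : z ∈ sg θ f ∩ sg θ g := ⟨ne_subset_sg θ f hz.1, ne_subset_sg θ g hz.2⟩
    rw [h] at this; exact this

private lemma sg_subset_iff (θ : C(X, H)) (A : Set C(X, H))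
    (hAreg : TopologicalSpace.IsTopologicalBasis ((fun f => sg θ f) '' A))
    (f g : C(X, H)) :
    sg θ f ⊆ sg θ g ↔ ∀ h ∈ A, sg θ h ∩ sg θ g = ∅ → sg θ h ∩ sg θ f = ∅ := by
  constructor
  · intro hsub h _ hdisj
    apply eq_empty_of_subset_empty
    calc sg θ h ∩ sg θ f ⊆ sg θ h ∩ sg θ g := inter_subset_inter_right _ hsub
      _ = ∅ := hdisj
  · intro hall x hx
    by_contra hxg
    have hnot : ¬ sg θ f ⊆ closure {x | g x ≠ θ x} := fun hc =>
      hxg (interior_maximal hc isOpen_interior hx)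
    obtain ⟨y, hy1, hy2⟩ := not_subset.mp hnot
    have hyU : y ∈ sg θ f ∩ (closure {x | g x ≠ θ x})ᶜ := ⟨hy1, hy2⟩
    have hUopen : IsOpen (sg θ f ∩ (closure {x | g x ≠ θ x})ᶜ) :=
      isOpen_interior.inter isClosed_closure.isOpen_compl
    obtain ⟨s, hs, hys, hsU⟩ := hAreg.exists_subset_of_mem_open hyU hUopen
    obtain ⟨h, hhA, rfl⟩ := hs
    have hdisj : sg θ h ∩ sg θ g = ∅ := by
      apply eq_empty_of_subset_empty
      intro z hz
      exact absurd (interior_subset hz.2) (hsU hz.1).2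
    have hcontra := hall h hhA hdisj
    have : y ∈ sg θ h ∩ sg θ f := ⟨hys, hy1⟩
    rw [hcontra] at this; exact this

private lemma sg_univ_iff (θ : C(X, H)) (A : Set C(X, H))
    (hAreg : TopologicalSpace.IsTopologicalBasis ((fun f => sg θ f) '' A))
    (f : C(X, H)) :
    (closure {x | f x ≠ θ x})ᶜ = ∅ ↔ ∀ g ∈ A, sg θ g ⊆ sg θ f := by
  rw [compl_empty_iff]
  constructor
  · intro h g _
    simp only [sg]
    rw [h, interior_univ]
    exact subset_univ _
  · intro hall
    have hsg : sg θ f = univ := by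
      apply eq_univ_of_univ_subset
      rw [← hAreg.sUnion_eq]
      intro x hx
      obtain ⟨s, ⟨g, hgA, rfl⟩, hxs⟩ := hx
      exact hall g hgA hxs
    apply eq_univ_of_univ_subset
    rw [← hsg]
    exact interior_subset

end Aux

/-- A `⊥`-isomorphism between weakly regular families preserves the inclusion of the
sets `σ(f)`, and in particular preserves the property `Z(f) = ∅`. -/
theorem stmt_2
    {X Y HX HY : Type*}
    [TopologicalSpace X] [LocallyCompactSpace X] [T2Space X]
    [TopologicalSpace Y] [LocallyCompactSpace Y] [T2Space Y]
    [TopologicalSpace HX] [T2Space HX] [TopologicalSpace HY] [T2Space HY]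
    (θX : C(X, HX)) (θY : C(Y, HY))
    (A : Set C(X, HX)) (B : Set C(Y, HY))
    -- `A ⊆ C_c(X, θX)` and `B ⊆ C_c(Y, θY)`
    (hAc : ∀ f ∈ A, IsCompact (closure {x | f x ≠ θX x}))
    (hBc : ∀ g ∈ B, IsCompact (closure {y | g y ≠ θY y}))
    -- weak regularity
    (hθA : θX ∈ A) (hθB : θY ∈ B)
    (hAreg : TopologicalSpace.IsTopologicalBasis
      ((fun f : C(X, HX) => interior (closure {x | f x ≠ θX x})) '' A))
    (hBreg : TopologicalSpace.IsTopologicalBasis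
      ((fun g : C(Y, HY) => interior (closure {y | g y ≠ θY y})) '' B))
    -- `T` is a `⊥`-isomorphism
    (T : A → B) (hT : Function.Bijective T)
    (hTperp : ∀ f g : A,
      {x | (f : C(X, HX)) x ≠ θX x} ∩ {x | (g : C(X, HX)) x ≠ θX x} = ∅ ↔
      {y | (T f : C(Y, HY)) y ≠ θY y} ∩ {y | (T g : C(Y, HY)) y ≠ θY y} = ∅) :
    (∀ f g : A,
      interior (closure {x | (f : C(X, HX)) x ≠ θX x}) ⊆
        interior (closure {x | (g : C(X, HX)) x ≠ θX x}) ↔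
      interior (closure {y | (T f : C(Y, HY)) y ≠ θY y}) ⊆
        interior (closure {y | (T g : C(Y, HY)) y ≠ θY y})) ∧
    (∀ f : A,
      (closure {x | (f : C(X, HX)) x ≠ θX x})ᶜ = (∅ : Set X) ↔
      (closure {y | (T f : C(Y, HY)) y ≠ θY y})ᶜ = (∅ : Set Y)) := by
  -- reformulate `hTperp` in terms of `sg`
  have hTsg : ∀ f g : A,
      sg θX (f : C(X, HX)) ∩ sg θX (g : C(X, HX)) = ∅ ↔
      sg θY (T f : C(Y, HY)) ∩ sg θY (T g : C(Y, HY)) = ∅ := fun f g => by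
    rw [← perp_iff, ← perp_iff]; exact hTperp f g
  have main : ∀ f g : A,
      sg θX (f : C(X, HX)) ⊆ sg θX (g : C(X, HX)) ↔
      sg θY (T f : C(Y, HY)) ⊆ sg θY (T g : C(Y, HY)) := by
    intro f g
    rw [sg_subset_iff θX A hAreg, sg_subset_iff θY B hBreg]
    constructor
    · intro hall k hkB hdisj
      obtain ⟨h, hTh⟩ := hT.2 ⟨k, hkB⟩
      have hk : (T h : C(Y, HY)) = k := by rw [hTh]
      rw [← hk] at hdisj ⊢
      exact (hTsg h f).mp (hall (h : C(X, HX)) h.2 ((hTsg h g).mpr hdisj))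
    · intro hall h hhA hdisj
      have hh : h = ((⟨h, hhA⟩ : A) : C(X, HX)) := rfl
      rw [hh] at hdisj ⊢
      exact (hTsg ⟨h, hhA⟩ f).mpr
        (hall (T ⟨h, hhA⟩ : C(Y, HY)) (T ⟨h, hhA⟩).2 ((hTsg ⟨h, hhA⟩ g).mp hdisj))
  refine ⟨main, fun f => ?_⟩
  rw [sg_univ_iff θX A hAreg, sg_univ_iff θY B hBreg]
  constructor
  · intro hall k hkB
    obtain ⟨g, hTg⟩ := hT.2 ⟨k, hkB⟩
    have hk : (T g : C(Y, HY)) = k := by rw [hTg]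
    rw [← hk]
    exact (main g f).mp (hall (g : C(X, HX)) g.2)
  · intro hall g hgA
    have hg : g = ((⟨g, hgA⟩ : A) : C(X, HX)) := rfl
    rw [hg]
    exact (main ⟨g, hgA⟩ f).mpr (hall (T ⟨g, hgA⟩ : C(Y, HY)) (T ⟨g, hgA⟩).2)
end

section
/- Let X be a locally compact Hausdorff space, H a Hausdorff space, θ : X → H continuous, and 𝒜 ⊆ C_c(X,θ) weakly regular. Then for all f,g ∈ 𝒜: f ⊥⊥ g if and only if there exist n ≥ 0 and elements h_1,k_1,…,h_n,k_n ∈ 𝒜 such that {h_1,…,h_n} is a cover of f, h_i ⋐ k_i for all i, and k_i ⊥ g for all i. -/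
open Set Topology

variable {X H : Type*} [TopologicalSpace X] [TopologicalSpace H]

/-- Strong disjointness: `f ⊥⊥ g`. -/
def PerpPerpTheta (θ f g : C(X, H)) : Prop := suppTheta θ f ∩ suppTheta θ g = ∅

lemma isOpen_neSet [T2Space H] (θ p : C(X, H)) : IsOpen {x | p x ≠ θ x} :=
  isOpen_compl_iff.mpr (isClosed_eq p.continuous θ.continuous)

lemma neSet_subset_sig [T2Space H] (θ p : C(X, H)) :
    {x | p x ≠ θ x} ⊆ sigTheta θ p :=
  interior_maximal subset_closure (isOpen_neSet θ p)

lemma supp_subset_closure_sig [T2Space H] (θ p : C(X, H)) :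
    suppTheta θ p ⊆ closure (sigTheta θ p) :=
  closure_mono (neSet_subset_sig θ p)

/-- For a weakly regular family `𝒜 ⊆ C_c(X, θ)`: `f ⊥⊥ g` iff there are
`h₁, k₁, …, hₙ, kₙ ∈ 𝒜` with `{h₁, …, hₙ}` a cover of `f`, `hᵢ ⋐ kᵢ` and `kᵢ ⊥ g`. -/
theorem stmt_3 [LocallyCompactSpace X] [T2Space X] [T2Space H]
    (θ : C(X, H)) (A : Set C(X, H))
    (hAc : ∀ f ∈ A, IsCompact (suppTheta θ f)) (hθA : θ ∈ A)
    (hAreg : TopologicalSpace.IsTopologicalBasis (sigTheta θ '' A))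
    (f g : C(X, H)) (hf : f ∈ A) (hg : g ∈ A) :
    PerpPerpTheta θ f g ↔
      ∃ (n : ℕ) (h k : Fin n → C(X, H)),
        (∀ i, h i ∈ A) ∧ (∀ i, k i ∈ A) ∧
        IsCoverOf θ A (Set.range h) f ∧
        (∀ i, WayBelowTheta θ (h i) (k i)) ∧
        (∀ i, PerpTheta θ (k i) g) := by
  constructor
  · intro hfg
    -- For every point of supp f, find suitable h, k
    have key : ∀ x ∈ suppTheta θ f, ∃ h k : C(X, H), h ∈ A ∧ k ∈ A ∧
        x ∈ sigTheta θ h ∧ WayBelowTheta θ h k ∧ PerpTheta θ k g := by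
      intro x hx
      have hxg : x ∈ (suppTheta θ g)ᶜ := by
        intro hxin
        have : x ∈ suppTheta θ f ∩ suppTheta θ g := ⟨hx, hxin⟩
        rw [hfg] at this
        exact this
      obtain ⟨K, hK, hxK, hKsub⟩ :=
        exists_compact_subset (isClosed_closure (s := {x | g x ≠ θ x})).isOpen_compl hxg
      obtain ⟨v, hvmem, hxv, hvsub⟩ := hAreg.exists_subset_of_mem_open hxK isOpen_interior
      obtain ⟨k, hkA, rfl⟩ := hvmem
      obtain ⟨K', hK', hxK', hK'sub⟩ := exists_compact_subset isOpen_interior hxv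
      obtain ⟨w, hwmem, hxw, hwsub⟩ := hAreg.exists_subset_of_mem_open hxK' isOpen_interior
      obtain ⟨h, hhA, rfl⟩ := hwmem
      refine ⟨h, k, hhA, hkA, hxw, ?_, ?_⟩
      · calc suppTheta θ h ⊆ closure (sigTheta θ h) := supp_subset_closure_sig θ h
          _ ⊆ closure (interior K') := closure_mono hwsub
          _ ⊆ K' := closure_minimal interior_subset hK'.isClosed
          _ ⊆ sigTheta θ k := hK'sub
      · rw [PerpTheta, Set.eq_empty_iff_forall_notMem]
        rintro y ⟨hyk, hyg⟩
        have : y ∈ (suppTheta θ g)ᶜ :=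
          hKsub (interior_subset (hvsub (neSet_subset_sig θ k hyk)))
        exact this (subset_closure hyg)
    have : Nonempty C(X, H) := ⟨θ⟩
    choose! hh kk hhA kkA hxh hwb hperp using key
    obtain ⟨b', hb'sub, hb'fin, hb'cov⟩ :=
      (hAc f hf).elim_finite_subcover_image (b := suppTheta θ f)
        (c := fun x => sigTheta θ (hh x)) (fun x _ => isOpen_interior)
        (fun x hx => Set.mem_biUnion hx (hxh x hx))
    set t : Finset X := hb'fin.toFinset with ht
    have htmem : ∀ y ∈ t, y ∈ suppTheta θ f := by
      intro y hy
      exact hb'sub (hb'fin.mem_toFinset.mp hy)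
    refine ⟨t.card, fun i => hh (t.equivFin.symm i), fun i => kk (t.equivFin.symm i),
      fun i => hhA _ (htmem _ (t.equivFin.symm i).2),
      fun i => kkA _ (htmem _ (t.equivFin.symm i).2), ?_,
      fun i => hwb _ (htmem _ (t.equivFin.symm i).2),
      fun i => hperp _ (htmem _ (t.equivFin.symm i).2)⟩
    -- cover property
    intro a haA hperpa
    rw [PerpTheta, Set.eq_empty_iff_forall_notMem]
    rintro y ⟨hya, hyf⟩
    have hysupp : y ∈ suppTheta θ f := subset_closure hyf
    obtain ⟨x, hxb', hyx⟩ := Set.mem_iUnion₂.mp (hb'cov hysupp)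
    have hxt : x ∈ t := hb'fin.mem_toFinset.mpr hxb'
    have hpa : PerpTheta θ a (hh x) := by
      have := hperpa (hh (t.equivFin.symm (t.equivFin ⟨x, hxt⟩)))
        ⟨t.equivFin ⟨x, hxt⟩, rfl⟩
      simpa using this
    -- y ∈ sig (hh x) ⊆ closure {hh x ≠ θ}, and {a ≠ θ} is an open nbhd of y
    have hycl : y ∈ closure {z | hh x z ≠ θ z} := interior_subset hyx
    obtain ⟨z, hza, hzh⟩ := mem_closure_iff.mp hycl _ (isOpen_neSet θ a) hya
    rw [PerpTheta, Set.eq_empty_iff_forall_notMem] at hpa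
    exact hpa z ⟨hza, hzh⟩
  · rintro ⟨n, h, k, hhA, hkA, hcov, hwb, hperp⟩
    have hUclosed : IsClosed (⋃ i, suppTheta θ (h i)) :=
      isClosed_iUnion_of_finite fun i => isClosed_closure
    -- Step 1 : {f ≠ θ} ⊆ ⋃ supp (h i)
    have h1 : {x | f x ≠ θ x} ⊆ ⋃ i, suppTheta θ (h i) := by
      intro x hx
      by_contra hxU
      have hUopen : IsOpen ({x | f x ≠ θ x} \ ⋃ i, suppTheta θ (h i)) :=
        (isOpen_neSet θ f).sdiff hUclosed
      obtain ⟨v, hvmem, hxv, hvsub⟩ :=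
        hAreg.exists_subset_of_mem_open (Set.mem_diff_of_mem hx hxU) hUopen
      obtain ⟨a, haA, rfl⟩ := hvmem
      have hperpa : ∀ b ∈ Set.range h, PerpTheta θ a b := by
        rintro _ ⟨i, rfl⟩
        rw [PerpTheta, Set.eq_empty_iff_forall_notMem]
        rintro y ⟨hya, hyh⟩
        exact (hvsub (neSet_subset_sig θ a hya)).2
          (Set.mem_iUnion.mpr ⟨i, subset_closure hyh⟩)
      have hpf := hcov a haA hperpa
      -- x ∈ sig a ⊆ closure {a ≠ θ}; sig a is open and ⊆ {f ≠ θ}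
      obtain ⟨z, hzsig, hza⟩ := mem_closure_iff.mp (interior_subset hxv)
        _ isOpen_interior hxv
      rw [PerpTheta, Set.eq_empty_iff_forall_notMem] at hpf
      exact hpf z ⟨hza, (hvsub hzsig).1⟩
    -- Step 2 : each supp (h i) is disjoint from supp g
    have h2 : ∀ i, suppTheta θ (h i) ∩ suppTheta θ g = ∅ := by
      intro i
      have hsig_g : sigTheta θ (k i) ∩ {x | g x ≠ θ x} = ∅ := by
        rw [Set.eq_empty_iff_forall_notMem]
        rintro y ⟨hyk, hyg⟩
        obtain ⟨z, hzg, hzk⟩ := mem_closure_iff.mp (interior_subset hyk)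
          _ (isOpen_neSet θ g) hyg
        have := hperp i
        rw [PerpTheta, Set.eq_empty_iff_forall_notMem] at this
        exact this z ⟨hzk, hzg⟩
      have : sigTheta θ (k i) ∩ suppTheta θ g = ∅ := by
        have := (isOpen_interior (s := suppTheta θ (k i))).inter_closure
          (t := {x | g x ≠ θ x})
        rw [Set.eq_empty_iff_forall_notMem]
        intro y hy
        have h3 := this hy
        rw [show interior (suppTheta θ (k i)) = sigTheta θ (k i) from rfl, hsig_g] at h3
        rename' h3 => this
        simpa using this
      rw [Set.eq_empty_iff_forall_notMem] at this ⊢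
      rintro y ⟨hyh, hyg⟩
      exact this y ⟨hwb i hyh, hyg⟩
    -- conclude
    rw [PerpPerpTheta, Set.eq_empty_iff_forall_notMem]
    rintro y ⟨hyf, hyg⟩
    have : y ∈ ⋃ i, suppTheta θ (h i) := closure_minimal h1 hUclosed hyf
    obtain ⟨i, hyi⟩ := Set.mem_iUnion.mp this
    have := h2 i
    rw [Set.eq_empty_iff_forall_notMem] at this
    exact this y ⟨hyi, hyg⟩
end

section
/- Let X and Y be separable locally compact Hausdorff spaces. Assume: (ii) for every nonempty regular open set A ⊆ X with compact closure there exists f ∈ C_c(X,ℝ) with σ(f) = A, and likewise for every nonempty regular open set B ⊆ Y with compact closure there exists g ∈ C_c(Y,ℝ) with σ(g) = B; (iii) there is an order isomorphism (with respect to set inclusion) between the collection of regular open subsets of X with compact closure and the collection of regular open subsets of Y with compact closure. Then there exists a bijection T : C_c(X,ℝ) → C_c(Y,ℝ) such that for all f,g ∈ C_c(X,ℝ), f ⊥ g if and only if Tf ⊥ Tg. -/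
/-!
With `σ(f) = interior (closure (support f))`, two functions are orthogonal iff
`σ(f) ∩ σ(g) = ∅`. The infimum of two regular open sets with compact closure is their
intersection, so this is disjointness in the poset, which the order isomorphism preserves.
The fibres of `σ` are `{0}` over `∅` and have cardinality `𝔠` over any other set: at least
the positive multiples of one function, at most all continuous functions on a separable space.
Hence the order isomorphism lifts fibrewise to a bijection `T` with `σ ∘ T = e ∘ σ`.
-/

open Set Topology Cardinal

abbrev RelCompactRegularOpens (Z : Type*) [TopologicalSpace Z] :=
  {A : Set Z // interior (closure A) = A ∧ IsCompact (closure A)}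

section RegularOpen

variable {Z : Type*} [TopologicalSpace Z]

theorem interior_closure_interior_closure (S : Set Z) :
    interior (closure (interior (closure S))) = interior (closure S) :=
  (interior_mono (closure_minimal interior_subset isClosed_closure)).antisymm
    isOpen_interior.subset_interior_closure

theorem Disjoint.interior_closure {U V : Set Z} (h : Disjoint U V) (hV : IsOpen V) :
    Disjoint (interior (closure U)) (interior (closure V)) :=
  (((h.closure_left hV).mono_left interior_subset).closure_right isOpen_interior).mono_right
    interior_subset

theorem interior_closure_inter_eq {U V : Set Z} (hU : interior (closure U) = U)
    (hV : interior (closure V) = V) : interior (closure (U ∩ V)) = U ∩ V := by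
  refine (subset_inter ?_ ?_).antisymm ?_
  · exact (interior_mono (closure_mono inter_subset_left)).trans hU.subset
  · exact (interior_mono (closure_mono inter_subset_right)).trans hV.subset
  · exact ((hU ▸ isOpen_interior).inter (hV ▸ isOpen_interior)).subset_interior_closure

namespace RelCompactRegularOpens

instance : SemilatticeInf (RelCompactRegularOpens Z) :=
  Subtype.semilatticeInf fun _ _ hA hB =>
    ⟨interior_closure_inter_eq hA.1 hB.1,
     hA.2.of_isClosed_subset isClosed_closure (closure_mono inter_subset_left)⟩

instance : OrderBot (RelCompactRegularOpens Z) :=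
  Subtype.orderBot ⟨by simp, by simp⟩

theorem coe_eq_empty {A : RelCompactRegularOpens Z} : A.1 = ∅ ↔ A = ⊥ := by
  rw [Subtype.ext_iff]
  rfl

theorem disjoint_iff {A B : RelCompactRegularOpens Z} : Disjoint A B ↔ A.1 ∩ B.1 = ∅ := by
  rw [disjoint_iff_inf_le, le_bot_iff, ← coe_eq_empty]
  rfl

end RelCompactRegularOpens

end RegularOpen

theorem ContinuousMap.mk_real_le_continuum (Z : Type*) [TopologicalSpace Z]
    [TopologicalSpace.SeparableSpace Z] : #C(Z, ℝ) ≤ 𝔠 := by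
  obtain ⟨s, hs, hsd⟩ := TopologicalSpace.exists_countable_dense Z
  have hrestrict : Function.Injective fun f : C(Z, ℝ) => fun x : s => f x := fun f g h =>
    ContinuousMap.ext <| congrFun <|
      Continuous.ext_on hsd f.continuous g.continuous fun x hx => congrFun h ⟨x, hx⟩
  calc #C(Z, ℝ) ≤ #(s → ℝ) := mk_le_of_injective hrestrict
    _ = 𝔠 ^ lift.{0} #s := by rw [mk_arrow, mk_real, lift_continuum]
    _ ≤ 𝔠 ^ ℵ₀ := power_le_power_left continuum_ne_zero (by simpa using hs.le_aleph0)
    _ = 𝔠 := continuum_power_aleph0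

abbrev Cc (Z : Type*) [TopologicalSpace Z] := {f : C(Z, ℝ) // HasCompactSupport ⇑f}

namespace Cc

variable {Z : Type*} [TopologicalSpace Z]

def sigma (f : Cc Z) : RelCompactRegularOpens Z :=
  ⟨interior (closure {x | f.1 x ≠ 0}), interior_closure_interior_closure _,
    f.2.of_isClosed_subset isClosed_closure (closure_minimal interior_subset isClosed_closure)⟩

theorem support_subset_sigma (f : Cc Z) : {x | f.1 x ≠ 0} ⊆ (sigma f).1 :=
  f.1.continuous.isOpen_support.subset_interior_closure

theorem disjoint_sigma_iff {f g : Cc Z} :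
    Disjoint (sigma f) (sigma g) ↔ {x | f.1 x ≠ 0} ∩ {x | g.1 x ≠ 0} = ∅ := by
  rw [RelCompactRegularOpens.disjoint_iff, ← disjoint_iff_inter_eq_empty,
    ← disjoint_iff_inter_eq_empty]
  exact ⟨fun h => h.mono (support_subset_sigma f) (support_subset_sigma g),
    fun h => h.interior_closure g.1.continuous.isOpen_support⟩

theorem sigma_eq_bot_iff {f : Cc Z} : sigma f = ⊥ ↔ f.1 = 0 := by
  rw [← RelCompactRegularOpens.coe_eq_empty]
  refine ⟨fun h => ContinuousMap.ext fun x => ?_, fun h => ?_⟩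
  · by_contra hx
    simpa [h] using support_subset_sigma f hx
  · simp [sigma, h]

theorem mk_fiber_bot : #{f : Cc Z // sigma f = ⊥} = 1 := by
  refine eq_one_iff_unique.mpr
    ⟨⟨fun ⟨f, hf⟩ ⟨g, hg⟩ => ?_⟩, ⟨⟨0, HasCompactSupport.zero⟩, ?_⟩⟩
  · rw [sigma_eq_bot_iff] at hf hg
    exact Subtype.ext (Subtype.ext (hf.trans hg.symm))
  · exact sigma_eq_bot_iff.mpr rfl

theorem continuum_le_mk_fiber {A : RelCompactRegularOpens Z} (hA : A ≠ ⊥) {f₀ : Cc Z}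
    (hf₀ : sigma f₀ = A) : 𝔠 ≤ #{f : Cc Z // sigma f = A} := by
  have hne : f₀.1 ≠ 0 := fun h => hA (hf₀ ▸ sigma_eq_bot_iff.mpr h)
  have hsupp (t : Ioi (0 : ℝ)) : {x | ((t : ℝ) • f₀.1) x ≠ 0} = {x | f₀.1 x ≠ 0} :=
    Function.support_const_smul_of_ne_zero _ _ t.2.ne'
  let scale (t : Ioi (0 : ℝ)) : {f : Cc Z // sigma f = A} :=
    ⟨⟨(t : ℝ) • f₀.1,
        f₀.2.of_isClosed_subset isClosed_closure (closure_mono (hsupp t).subset)⟩,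
      Subtype.ext <|
        (congrArg (interior ∘ closure) (hsupp t)).trans (congrArg Subtype.val hf₀)⟩
  have hscale : Function.Injective scale := fun s t h =>
    Subtype.ext (smul_left_injective ℝ hne (congrArg (fun f => f.1.1) h))
  simpa [mk_Ioi_real] using lift_mk_le_lift_mk_of_injective hscale

variable [TopologicalSpace.SeparableSpace Z]

theorem mk_fiber
    (hZ : ∀ A : Set Z, interior (closure A) = A → IsCompact (closure A) → A.Nonempty →
      ∃ f : C(Z, ℝ), HasCompactSupport ⇑f ∧ interior (closure {x | f x ≠ 0}) = A)
    (A : RelCompactRegularOpens Z) :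
    #{f : Cc Z // sigma f = A} = if A = ⊥ then 1 else 𝔠 := by
  split_ifs with hA
  · exact hA ▸ mk_fiber_bot
  obtain ⟨f₀, hf₀, hσ⟩ := hZ A.1 A.2.1 A.2.2
    (nonempty_iff_ne_empty.mpr (mt RelCompactRegularOpens.coe_eq_empty.mp hA))
  refine le_antisymm ?_ (continuum_le_mk_fiber hA (f₀ := ⟨f₀, hf₀⟩) (Subtype.ext hσ))
  calc #{f : Cc Z // sigma f = A} ≤ #(Cc Z) := mk_subtype_le _
    _ ≤ #C(Z, ℝ) := mk_subtype_le _
    _ ≤ 𝔠 := ContinuousMap.mk_real_le_continuum Z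

end Cc

theorem stmt_4_general {X Y : Type*}
    [TopologicalSpace X] [TopologicalSpace.SeparableSpace X]
    [TopologicalSpace Y] [TopologicalSpace.SeparableSpace Y]
    -- (ii) every nonempty regular open set with compact closure is `σ(f)` for some `f ∈ C_c`
    (hX : ∀ A : Set X, interior (closure A) = A → IsCompact (closure A) → A.Nonempty →
      ∃ f : C(X, ℝ), HasCompactSupport ⇑f ∧ interior (closure {x | f x ≠ 0}) = A)
    (hY : ∀ B : Set Y, interior (closure B) = B → IsCompact (closure B) → B.Nonempty →
      ∃ g : C(Y, ℝ), HasCompactSupport ⇑g ∧ interior (closure {y | g y ≠ 0}) = B)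
    -- (iii) an order isomorphism between the regular open sets with compact closure
    (e : {A : Set X // interior (closure A) = A ∧ IsCompact (closure A)} ≃o
         {B : Set Y // interior (closure B) = B ∧ IsCompact (closure B)}) :
    ∃ T : {f : C(X, ℝ) // HasCompactSupport ⇑f} → {g : C(Y, ℝ) // HasCompactSupport ⇑g},
      Function.Bijective T ∧
      ∀ f g : {f : C(X, ℝ) // HasCompactSupport ⇑f},
        ({x | (f : C(X, ℝ)) x ≠ 0} ∩ {x | (g : C(X, ℝ)) x ≠ 0} = ∅ ↔
         {y | (T f : C(Y, ℝ)) y ≠ 0} ∩ {y | (T g : C(Y, ℝ)) y ≠ 0} = ∅) := by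
  have hfiber (B : RelCompactRegularOpens Y) :
      Nonempty ({f : Cc X // e (Cc.sigma f) = B} ≃ {g : Cc Y // Cc.sigma g = B}) := by
    have hbot : e.symm B = ⊥ ↔ B = ⊥ := by rw [← e.symm.map_bot, e.symm.injective.eq_iff]
    refine lift_mk_eq'.mp ?_
    simp_rw [← e.eq_symm_apply, Cc.mk_fiber hX, Cc.mk_fiber hY, hbot]
    split_ifs <;> simp
  let T : Cc X ≃ Cc Y := Equiv.ofFiberEquiv fun B => (hfiber B).some
  have hT (f : Cc X) : Cc.sigma (T f) = e (Cc.sigma f) := Equiv.ofFiberEquiv_map _ f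
  refine ⟨T, T.bijective, fun f g => ?_⟩
  rw [← Cc.disjoint_sigma_iff, ← Cc.disjoint_sigma_iff, hT, hT, disjoint_map_orderIso_iff]

/-- If `X` and `Y` are separable locally compact Hausdorff spaces such that every nonempty
regular open set with compact closure is `σ(f)` for some compactly supported continuous
function, and the generalized Boolean algebras of regular open sets with compact closure of
`X` and `Y` are order isomorphic, then `C_c(X)` and `C_c(Y)` are `⊥`-isomorphic. -/
theorem stmt_4 {X Y : Type*}
    [TopologicalSpace X] [LocallyCompactSpace X] [T2Space X] [TopologicalSpace.SeparableSpace X]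
    [TopologicalSpace Y] [LocallyCompactSpace Y] [T2Space Y] [TopologicalSpace.SeparableSpace Y]
    -- (ii) every nonempty regular open set with compact closure is `σ(f)` for some `f ∈ C_c`
    (hX : ∀ A : Set X, interior (closure A) = A → IsCompact (closure A) → A.Nonempty →
      ∃ f : C(X, ℝ), HasCompactSupport ⇑f ∧ interior (closure {x | f x ≠ 0}) = A)
    (hY : ∀ B : Set Y, interior (closure B) = B → IsCompact (closure B) → B.Nonempty →
      ∃ g : C(Y, ℝ), HasCompactSupport ⇑g ∧ interior (closure {y | g y ≠ 0}) = B)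
    -- (iii) an order isomorphism between the regular open sets with compact closure
    (e : {A : Set X // interior (closure A) = A ∧ IsCompact (closure A)} ≃o
         {B : Set Y // interior (closure B) = B ∧ IsCompact (closure B)}) :
    ∃ T : {f : C(X, ℝ) // HasCompactSupport ⇑f} → {g : C(Y, ℝ) // HasCompactSupport ⇑g},
      Function.Bijective T ∧
      ∀ f g : {f : C(X, ℝ) // HasCompactSupport ⇑f},
        ({x | (f : C(X, ℝ)) x ≠ 0} ∩ {x | (g : C(X, ℝ)) x ≠ 0} = ∅ ↔
         {y | (T f : C(Y, ℝ)) y ≠ 0} ∩ {y | (T g : C(Y, ℝ)) y ≠ 0} = ∅) :=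
  stmt_4_general hX hY e
end

section
/- There exists a bijection T : C([0,1],ℝ) → C(𝕊¹,ℝ), where 𝕊¹ = {z ∈ ℂ : |z| = 1} is the unit circle, such that for all f,g ∈ C([0,1],ℝ): ({x ∈ [0,1] : f(x) ≠ 0} ∩ {x ∈ [0,1] : g(x) ≠ 0} = ∅) if and only if ({y ∈ 𝕊¹ : Tf(y) ≠ 0} ∩ {y ∈ 𝕊¹ : Tg(y) ≠ 0} = ∅). (In particular, the non-homeomorphic spaces [0,1] and 𝕊¹ have ⊥-isomorphic function spaces.) -/
/-!
Whether `f ⊥ g` holds only depends on the regular open hulls `int cl {f ≠ 0}` and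
`int cl {g ≠ 0}`, since two open sets are disjoint iff their hulls are. On a separable
perfectly normal space every open set is a cozero set, so the fibre of `f ↦ int cl {f ≠ 0}`
over a regular open set `R` is `{0}` if `R = ∅` and has cardinality `𝔠` otherwise.
Both `[0,1]` and `𝕊¹` contain `(0,1)` as a dense open subspace (the circle via
`t ↦ e^{2πit}`), and pulling back along a dense open embedding identifies regular open sets
while preserving disjointness. Gluing fibrewise bijections over the resulting isomorphism
of regular open sets gives `T`.
-/

open Set Topology Function Cardinal

universe u

lemma disjoint_interior_closure_iff {X : Type*} [TopologicalSpace X] {U V : Set X}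
    (hU : IsOpen U) (hV : IsOpen V) :
    Disjoint (interior (closure U)) (interior (closure V)) ↔ Disjoint U V :=
  ⟨fun h ↦ h.mono hU.subset_interior_closure hV.subset_interior_closure, fun h ↦
    (((h.closure_left hV).mono_left interior_subset).closure_right isOpen_interior).mono_right
      interior_subset⟩

lemma Topology.IsOpenEmbedding.preimage_interior_closure {X Y : Type*} [TopologicalSpace X]
    [TopologicalSpace Y] {j : Y → X} (hj : IsOpenEmbedding j) (s : Set X) :
    j ⁻¹' interior (closure s) = interior (closure (j ⁻¹' s)) := by
  rw [hj.isOpenMap.preimage_interior_eq_interior_preimage hj.continuous,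
    hj.isOpenMap.preimage_closure_eq_closure_preimage hj.continuous]

lemma DenseRange.closure_image_preimage {X Y : Type*} [TopologicalSpace X] {j : Y → X}
    (hd : DenseRange j) {U : Set X} (hU : IsOpen U) :
    closure (j '' (j ⁻¹' U)) = closure U := by
  rw [image_preimage_eq_inter_range]
  exact (closure_mono inter_subset_left).antisymm
    (closure_minimal (hd.open_subset_closure_inter hU) isClosed_closure)

lemma DenseRange.disjoint_preimage_iff {X Y : Type*} [TopologicalSpace X] {j : Y → X}
    (hd : DenseRange j) {U V : Set X} (hU : IsOpen U) (hV : IsOpen V) :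
    Disjoint (j ⁻¹' U) (j ⁻¹' V) ↔ Disjoint U V := by
  refine ⟨fun h ↦ ?_, fun h ↦ h.preimage j⟩
  rw [disjoint_iff_inter_eq_empty, ← not_nonempty_iff_eq_empty]
  intro hUV
  obtain ⟨y, hyU, hyV⟩ := hd.exists_mem_open (hU.inter hV) hUV
  exact disjoint_left.1 h hyU hyV

abbrev RegularOpens (X : Type*) [TopologicalSpace X] : Type _ :=
  {U : Set X // interior (closure U) = U}

namespace RegularOpens

variable {X Y Z : Type*} [TopologicalSpace X] [TopologicalSpace Y] [TopologicalSpace Z]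

lemma isOpen (R : RegularOpens X) : IsOpen R.1 := R.2 ▸ isOpen_interior

def ofSet (s : Set X) : RegularOpens X := ⟨interior (closure s), interior_closure_idem⟩

def preimageEquiv {j : Y → X} (hj : IsOpenEmbedding j) (hd : DenseRange j) :
    RegularOpens X ≃ RegularOpens Y where
  toFun R := ⟨j ⁻¹' R.1, by rw [← hj.preimage_interior_closure, R.2]⟩
  invFun V := ofSet (j '' V.1)
  left_inv R := Subtype.ext <| (hd.closure_image_preimage R.isOpen).symm ▸ R.2
  right_inv V := Subtype.ext <| by
    simp only [ofSet, hj.preimage_interior_closure, preimage_image_eq _ hj.injective, V.2]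

lemma disjoint_preimageEquiv_iff {j : Y → X} (hj : IsOpenEmbedding j) (hd : DenseRange j)
    (R R' : RegularOpens X) :
    Disjoint (preimageEquiv hj hd R).1 (preimageEquiv hj hd R').1 ↔ Disjoint R.1 R'.1 :=
  hd.disjoint_preimage_iff R.isOpen R'.isOpen

lemma exists_equiv_disjoint_iff {j₁ : Y → X} {j₂ : Y → Z} (hj₁ : IsOpenEmbedding j₁)
    (hd₁ : DenseRange j₁) (hj₂ : IsOpenEmbedding j₂) (hd₂ : DenseRange j₂) :
    ∃ e : RegularOpens X ≃ RegularOpens Z,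
      ∀ R R', Disjoint (e R).1 (e R').1 ↔ Disjoint R.1 R'.1 := by
  refine ⟨(preimageEquiv hj₁ hd₁).trans (preimageEquiv hj₂ hd₂).symm, fun R R' ↦ ?_⟩
  rw [← disjoint_preimageEquiv_iff hj₂ hd₂, ← disjoint_preimageEquiv_iff hj₁ hd₁]
  simp

end RegularOpens

section CozeroHull

variable {X : Type*} [TopologicalSpace X]

def cozeroHull (f : C(X, ℝ)) : RegularOpens X := RegularOpens.ofSet (support f)

lemma disjoint_cozeroHull_iff (f g : C(X, ℝ)) :
    Disjoint (cozeroHull f).1 (cozeroHull g).1 ↔ Disjoint (support f) (support g) :=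
  disjoint_interior_closure_iff f.continuous.isOpen_support g.continuous.isOpen_support

lemma cozeroHull_eq_iff_eq_zero {R : RegularOpens X} (hR : R.1 = ∅) (f : C(X, ℝ)) :
    cozeroHull f = R ↔ f = 0 := by
  refine ⟨fun hf ↦ ?_, fun hf ↦ Subtype.ext ?_⟩
  · have : support f ⊆ ∅ := hR ▸ hf ▸ f.continuous.isOpen_support.subset_interior_closure
    exact DFunLike.coe_injective (support_eq_empty_iff.1 (subset_empty_iff.1 this))
  · simp [hf, hR, cozeroHull, RegularOpens.ofSet]

lemma mk_fiber_cozeroHull_of_eq_empty {R : RegularOpens X} (hR : R.1 = ∅) :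
    #{f : C(X, ℝ) // cozeroHull f = R} = 1 := by
  rw [mk_congr (Equiv.subtypeEquivRight (cozeroHull_eq_iff_eq_zero hR))]
  simp

lemma IsOpen.exists_support_eq [PerfectlyNormalSpace X] {U : Set X} (hU : IsOpen U) :
    ∃ f : C(X, ℝ), support f = U := by
  obtain ⟨f, hf, -⟩ :=
    perfectlyNormalSpace_iff_forall_isClosed_preimage_zero.1 ‹_› Uᶜ hU.isClosed_compl
  exact ⟨f, by rw [← compl_compl U, hf]; rfl⟩

lemma mk_continuousMap_le_continuum [TopologicalSpace.SeparableSpace X] :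
    #C(X, ℝ) ≤ 𝔠 := by
  obtain ⟨D, hDc, hDd⟩ := TopologicalSpace.exists_countable_dense X
  have hinj : Injective fun (f : C(X, ℝ)) (d : D) ↦ f d := fun f g h ↦
    ContinuousMap.ext fun x ↦ congrFun (Continuous.ext_on hDd f.continuous g.continuous
      fun y hy ↦ congrFun h ⟨y, hy⟩) x
  calc #C(X, ℝ) ≤ #(D → ℝ) := mk_le_of_injective hinj
    _ = 𝔠 ^ #D := by simp [mk_real]
    _ ≤ 𝔠 ^ ℵ₀ := power_le_power_left continuum_ne_zero (mk_le_aleph0_iff.2 hDc.to_subtype)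
    _ = 𝔠 := continuum_power_aleph0

lemma mk_fiber_cozeroHull_of_nonempty [PerfectlyNormalSpace X]
    [TopologicalSpace.SeparableSpace X] {R : RegularOpens X} (hR : R.1.Nonempty) :
    #{f : C(X, ℝ) // cozeroHull f = R} = 𝔠 := by
  obtain ⟨f, hf⟩ := R.isOpen.exists_support_eq
  have hf₀ : f ≠ 0 := fun h ↦ hR.ne_empty (by simp [← hf, h])
  have hfR (c : ℝ) (hc : c ≠ 0) : cozeroHull (c • f) = R := Subtype.ext <| by
    simp [cozeroHull, RegularOpens.ofSet, support_const_smul_of_ne_zero _ _ hc, hf, R.2]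
  have hinj : Injective fun t : ℝ ↦ (⟨Real.exp t • f, hfR _ (Real.exp_ne_zero t)⟩ :
      {f : C(X, ℝ) // cozeroHull f = R}) := fun s t h ↦
    Real.exp_injective (smul_left_injective ℝ hf₀ (congrArg Subtype.val h))
  refine ((mk_subtype_le _).trans mk_continuousMap_le_continuum).antisymm ?_
  simpa [mk_real] using lift_mk_le_lift_mk_of_injective hinj

end CozeroHull

lemma mk_fiber_cozeroHull_eq {X Z : Type u} [TopologicalSpace X] [PerfectlyNormalSpace X]
    [TopologicalSpace.SeparableSpace X] [TopologicalSpace Z] [PerfectlyNormalSpace Z]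
    [TopologicalSpace.SeparableSpace Z] {R : RegularOpens X} {R' : RegularOpens Z}
    (h : R.1 = ∅ ↔ R'.1 = ∅) :
    #{f : C(X, ℝ) // cozeroHull f = R} = #{g : C(Z, ℝ) // cozeroHull g = R'} := by
  rcases R.1.eq_empty_or_nonempty with hR | hR
  · simp [mk_fiber_cozeroHull_of_eq_empty hR, mk_fiber_cozeroHull_of_eq_empty (h.1 hR)]
  · have hR' : R'.1.Nonempty := nonempty_iff_ne_empty.2 (hR.ne_empty ∘ h.2)
    simp [mk_fiber_cozeroHull_of_nonempty hR, mk_fiber_cozeroHull_of_nonempty hR']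

lemma AddCircle.isOpenEmbedding_coe_Ioo (p : ℝ) [Fact (0 < p)] :
    IsOpenEmbedding fun t : Ioo 0 p ↦ (t : AddCircle p) := by
  have := (AddCircle.openPartialHomeomorphCoe p 0).isOpenEmbedding_restrict
  rw [AddCircle.openPartialHomeomorphCoe_source, zero_add] at this
  exact this

lemma AddCircle.denseRange_coe_Ioo (p : ℝ) [Fact (0 < p)] :
    DenseRange fun t : Ioo 0 p ↦ (t : AddCircle p) := by
  rw [DenseRange, ← image_eq_range, dense_iff_closure_eq]
  refine eq_univ_of_univ_subset ?_
  calc (univ : Set (AddCircle p)) = ((↑) : ℝ → AddCircle p) '' closure (Ioo 0 p) := by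
        rw [closure_Ioo (Fact.out : 0 < p).ne, ← AddCircle.coe_image_Icc_eq p 0, zero_add]
    _ ⊆ closure (((↑) : ℝ → AddCircle p) '' Ioo 0 p) :=
        image_closure_subset_closure_image (AddCircle.continuous_mk' p)

lemma exists_regularOpens_equiv_Icc_sphere :
    ∃ e : RegularOpens (Icc (0 : ℝ) 1) ≃ RegularOpens (Metric.sphere (0 : ℂ) 1),
      ∀ R R', Disjoint (e R).1 (e R').1 ↔ Disjoint R.1 R'.1 := by
  let h : AddCircle (1 : ℝ) ≃ₜ Metric.sphere (0 : ℂ) 1 :=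
    AddCircle.homeomorphCircle one_ne_zero
  exact RegularOpens.exists_equiv_disjoint_iff
    (IsOpenEmbedding.inclusion Ioo_subset_Icc_self (isOpen_Ioo.preimage continuous_subtype_val))
    ((denseRange_inclusion_iff _).2 (closure_Ioo zero_ne_one).ge)
    (h.isOpenEmbedding.comp (AddCircle.isOpenEmbedding_coe_Ioo 1))
    (h.surjective.denseRange.comp (AddCircle.denseRange_coe_Ioo 1) h.continuous)

/-- `C([0,1])` and `C(𝕊¹)` are `⊥`-isomorphic: there is a bijection
`T : C([0,1],ℝ) → C(𝕊¹,ℝ)` preserving disjointness in both directions. -/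
theorem stmt_5 :
    ∃ T : C(↥(Set.Icc (0 : ℝ) 1), ℝ) → C(↥(Metric.sphere (0 : ℂ) 1), ℝ),
      Function.Bijective T ∧
      ∀ f g : C(↥(Set.Icc (0 : ℝ) 1), ℝ),
        ({x | f x ≠ 0} ∩ {x | g x ≠ 0} = ∅ ↔
         {y | T f y ≠ 0} ∩ {y | T g y ≠ 0} = ∅) := by
  obtain ⟨e, he⟩ := exists_regularOpens_equiv_Icc_sphere
  have hfiber (R : RegularOpens (Icc (0 : ℝ) 1)) :
      #{f : C(Icc (0 : ℝ) 1, ℝ) // cozeroHull f = R} =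
        #{g : C(Metric.sphere (0 : ℂ) 1, ℝ) // e.symm (cozeroHull g) = R} := by
    rw [mk_congr (Equiv.subtypeEquivRight fun g ↦ e.symm_apply_eq)]
    exact mk_fiber_cozeroHull_eq (by simpa using (he R R).symm)
  let T := Equiv.ofFiberEquiv fun R ↦ (Cardinal.eq.1 (hfiber R)).some
  have hT (f : C(Icc (0 : ℝ) 1, ℝ)) : cozeroHull (T f) = e (cozeroHull f) :=
    e.symm_apply_eq.1 (Equiv.ofFiberEquiv_map (fun R ↦ (Cardinal.eq.1 (hfiber R)).some) f)
  refine ⟨T, T.bijective, fun f g ↦ ?_⟩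
  rw [← disjoint_iff_inter_eq_empty, ← disjoint_iff_inter_eq_empty]
  calc Disjoint (support f) (support g)
      ↔ Disjoint (cozeroHull f).1 (cozeroHull g).1 := (disjoint_cozeroHull_iff f g).symm
    _ ↔ Disjoint (e (cozeroHull f)).1 (e (cozeroHull g)).1 := (he _ _).symm
    _ ↔ Disjoint (support (T f)) (support (T g)) := by
        rw [← hT, ← hT, disjoint_cozeroHull_iff]
end

section
/- Let X be a second-countable locally compact Hausdorff space and let A ⊆ X be a regular open set with compact closure. Then there exists a continuous function f : X → ℝ with compact support such that the interior of the closure of {x : f(x) ≠ 0} equals A. -/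
open Set Topology

/-- In a second-countable locally compact Hausdorff space, every regular open set `A` with
compact closure is `σ(f) = interior (closure {f ≠ 0})` for some continuous, compactly
supported real-valued function `f`. -/
theorem stmt_6 {X : Type*} [TopologicalSpace X] [SecondCountableTopology X]
    [LocallyCompactSpace X] [T2Space X]
    (A : Set X) (hA : interior (closure A) = A) (hAc : IsCompact (closure A)) :
    ∃ f : X → ℝ, Continuous f ∧ HasCompactSupport f ∧
      interior (closure {x | f x ≠ 0}) = A := by
  letI := TopologicalSpace.metrizableSpaceMetric X
  rcases eq_empty_or_nonempty Aᶜ with hc | hc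
  · -- A = univ, X compact
    have hXA : A = univ := by
      rw [← compl_empty_iff]; exact hc
    have hX : IsCompact (univ : Set X) := by
      simpa [hXA] using hAc
    refine ⟨fun _ => 1, continuous_const, ?_, ?_⟩
    · exact HasCompactSupport.of_support_subset_isCompact hX (subset_univ _)
    · simp [hXA]
  · have hAopen : IsOpen A := hA ▸ isOpen_interior
    refine ⟨fun x => Metric.infDist x Aᶜ, Metric.continuous_infDist_pt _, ?_, ?_⟩
    · have hne : {x | Metric.infDist x Aᶜ ≠ 0} = A := by
        ext x
        simp only [mem_setOf_eq]
        rw [ne_eq, ← (hAopen.isClosed_compl).mem_iff_infDist_zero hc, mem_compl_iff, not_not]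
      refine HasCompactSupport.of_support_subset_isCompact hAc ?_
      rw [Function.support]
      simp only [ne_eq]
      rw [hne]; exact subset_closure
    · have hne : {x | Metric.infDist x Aᶜ ≠ 0} = A := by
        ext x
        simp only [mem_setOf_eq]
        rw [ne_eq, ← (hAopen.isClosed_compl).mem_iff_infDist_zero hc, mem_compl_iff, not_not]
      rw [hne, hA]
end

section
/- Let X be a regular Hausdorff topological space and F ⊆ X an infinite subset. Then there exist an injective sequence (y_n)_{n∈ℕ} of elements of F and pairwise disjoint open sets (U_n)_{n∈ℕ} such that y_n ∈ U_n for all n. -/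
open Set Topology

/-!
Each step keeps an open set `W` meeting `F` in infinitely many points. Two points `a ≠ b` of
`W ∩ F` have open neighbourhoods with disjoint closures (a regular Hausdorff space is T₂.₅), so
one of these closures, say that of `A ∋ a`, misses infinitely many points of `W ∩ F`. We then
keep `W ∩ A` as the next `Uₙ` and continue inside `W \ closure A`. Since `Uₙ` is disjoint from
the next open set, which contains all later `Uₘ`, the `Uₙ` are pairwise disjoint.
-/

theorem exists_seq_pairwise_disjoint_of_forall_exists_disjoint {α : Type*}
    {P Q : Set α → Prop} {W₀ : Set α} (h₀ : P W₀)
    (step : ∀ W, P W → ∃ U W', Q U ∧ P W' ∧ U ⊆ W ∧ W' ⊆ W ∧ Disjoint U W') :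
    ∃ U : ℕ → Set α, (∀ n, Q (U n)) ∧ Pairwise (Function.onFun Disjoint U) := by
  choose U W' hQ hP hUW hWW hdisj using step
  let W : ℕ → {W // P W} := fun n => n.rec ⟨W₀, h₀⟩ fun _ W => ⟨W' W.1 W.2, hP _ _⟩
  have hW : Antitone fun n => (W n).1 := antitone_nat_of_succ_le fun n => hWW _ _
  refine ⟨fun n => U (W n).1 (W n).2, fun n => hQ _ _, (pairwise_disjoint_on _).2 ?_⟩
  intro m n hmn
  exact (hdisj _ _).mono_right ((hUW _ _).trans (hW (Nat.succ_le_of_lt hmn)))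

section Step

variable {X : Type*} [TopologicalSpace X] {F W : Set X}

theorem exists_open_disjoint_of_infinite_diff_closure (hW : IsOpen W) {a : X} (ha : a ∈ W ∩ F)
    {A : Set X} (hA : IsOpen A) (haA : a ∈ A) (hinf : ((W ∩ F) \ closure A).Infinite) :
    ∃ U W', (IsOpen U ∧ (U ∩ F).Nonempty) ∧ (IsOpen W' ∧ (W' ∩ F).Infinite) ∧
      U ⊆ W ∧ W' ⊆ W ∧ Disjoint U W' := by
  refine ⟨W ∩ A, W \ closure A, ⟨hW.inter hA, a, ⟨ha.1, haA⟩, ha.2⟩,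
    ⟨hW.sdiff isClosed_closure, ?_⟩, inter_subset_left, sdiff_subset, ?_⟩
  · rwa [sdiff_inter_right_comm]
  · exact disjoint_sdiff_right.mono_left (inter_subset_right.trans subset_closure)

theorem exists_open_disjoint_of_infinite [T25Space X] (hW : IsOpen W)
    (hinf : (W ∩ F).Infinite) :
    ∃ U W', (IsOpen U ∧ (U ∩ F).Nonempty) ∧ (IsOpen W' ∧ (W' ∩ F).Infinite) ∧
      U ⊆ W ∧ W' ⊆ W ∧ Disjoint U W' := by
  obtain ⟨a, ha, b, hb, hab⟩ := hinf.nontrivial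
  obtain ⟨A, haA, hA, B, hbB, hB, hAB⟩ := exists_open_nhds_disjoint_closure hab
  have hcover : W ∩ F ⊆ ((W ∩ F) \ closure A) ∪ ((W ∩ F) \ closure B) := fun x hx => by
    by_cases hxA : x ∈ closure A
    · exact Or.inr ⟨hx, disjoint_left.1 hAB hxA⟩
    · exact Or.inl ⟨hx, hxA⟩
  rcases infinite_union.1 (hinf.mono hcover) with hA' | hB'
  · exact exists_open_disjoint_of_infinite_diff_closure hW ha hA haA hA'
  · exact exists_open_disjoint_of_infinite_diff_closure hW hb hB hbB hB'

end Step

/-- If `F` is an infinite subset of a regular Hausdorff space `X`, then there exist an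
injective sequence `(yₙ)` of elements of `F` and pairwise disjoint open sets `(Uₙ)`
with `yₙ ∈ Uₙ` for all `n`. -/
theorem stmt_7 {X : Type*} [TopologicalSpace X] [T2Space X] [RegularSpace X]
    (F : Set X) (hF : F.Infinite) :
    ∃ (y : ℕ → X) (U : ℕ → Set X),
      (∀ n, y n ∈ F) ∧ Function.Injective y ∧
      (∀ n, IsOpen (U n)) ∧ Pairwise (Function.onFun Disjoint U) ∧
      ∀ n, y n ∈ U n := by
  obtain ⟨U, hU, hdisj⟩ := exists_seq_pairwise_disjoint_of_forall_exists_disjoint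
    (P := fun W => IsOpen W ∧ (W ∩ F).Infinite) (Q := fun U => IsOpen U ∧ (U ∩ F).Nonempty)
    ⟨isOpen_univ, by rwa [univ_inter]⟩ fun W hW => exists_open_disjoint_of_infinite hW.1 hW.2
  choose y hyU hyF using fun n => (hU n).2
  refine ⟨y, U, hyF, fun m n hmn => ?_, fun n => (hU n).1, hdisj, hyU⟩
  exact hdisj.eq (not_disjoint_iff.2 ⟨y m, hyU m, hmn ▸ hyU n⟩)
end

section
/- Let X be a locally compact Hausdorff space, (x_n)_{n∈ℕ} a sequence in X, and (U_n)_{n∈ℕ} a sequence of pairwise disjoint open subsets of X with x_n ∈ U_n for all n. Let g_n : U_n → ℝ be continuous functions and t ∈ ℝ such that g_n(x_n) → t as n → ∞. Then there exists a continuous function f : X → ℝ such that for each n, f coincides with g_n on some neighbourhood of x_n, and f(x) = t for all x ∉ ⋃_n U_n. -/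
open Set Topology Filter Function

/-! Cut each `gₙ - t` off by a bump function `φₙ` that equals `1` near `xₙ` and is supported
in the open set where `|gₙ - t| < εₙ := |gₙ(xₙ) - t| + 1/(n+1)`, so that `εₙ → 0`. The pieces
`φₙ (gₙ - t)` have disjoint supports, so at each point at most one of them is nonzero and the
`N`-th partial sum of their series is within `sup_{n ≥ N} εₙ` of the full sum. The convergence
is therefore uniform, and `f = t + ∑ₙ φₙ (gₙ - t)` is continuous. -/

lemma exists_forall_ne_eq_zero_of_pairwise_disjoint_support {ι X M : Type*} [Nonempty ι]
    [Zero M] {e : ι → X → M} (hd : Pairwise (Disjoint on fun n => support (e n))) (z : X) :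
    ∃ m, ∀ n ≠ m, e n z = 0 := by
  by_cases h : ∃ m, e m z ≠ 0
  · obtain ⟨m, hm⟩ := h
    exact ⟨m, fun n hn => not_not.1 fun hnz => disjoint_left.1 (hd hn) hnz hm⟩
  · push Not at h
    exact ⟨Classical.arbitrary _, fun n _ => h n⟩

theorem continuous_tsum_of_pairwise_disjoint_support {X M : Type*} [TopologicalSpace X]
    [NormedAddCommGroup M] {e : ℕ → X → M} (he : ∀ n, Continuous (e n))
    (hd : Pairwise (Disjoint on fun n => support (e n))) {ε : ℕ → ℝ}
    (hε : Tendsto ε atTop (𝓝 0)) (hb : ∀ n z, ‖e n z‖ ≤ ε n) :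
    Continuous fun z => ∑' n, e n z := by
  refine TendstoUniformly.continuous (F := fun N z => ∑ n ∈ Finset.range N, e n z)
    (p := atTop) ?_ (Frequently.of_forall fun N => continuous_finsetSum _ fun n _ => he n)
  rw [Metric.tendstoUniformly_iff]
  intro δ hδ
  obtain ⟨N₀, hN₀⟩ := eventually_atTop.1 (hε.eventually (gt_mem_nhds hδ))
  filter_upwards [eventually_ge_atTop N₀] with N hN z
  obtain ⟨m, hm⟩ := exists_forall_ne_eq_zero_of_pairwise_disjoint_support hd z
  rw [tsum_eq_single m hm]
  by_cases hmN : m < N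
  · rwa [Finset.sum_eq_single_of_mem m (Finset.mem_range.2 hmN) fun n _ hn => hm n hn,
      dist_self]
  · rw [Finset.sum_eq_zero fun n hn => hm n (by rintro rfl; exact hmN (Finset.mem_range.1 hn)),
      dist_zero_right]
    exact (hb m z).trans_lt (hN₀ m (by omega))

theorem exists_continuous_eq_near_of_norm_lt {X E : Type*} [TopologicalSpace X]
    [LocallyCompactSpace X] [R1Space X] [NormedAddCommGroup E] [NormedSpace ℝ E]
    {U : Set X} (hU : IsOpen U) {x : X} (hx : x ∈ U) (g : C(U, E)) {δ : ℝ}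
    (hδ : ‖g ⟨x, hx⟩‖ < δ) :
    ∃ e : X → E, Continuous e ∧ support e ⊆ U ∧ (∀ z, ‖e z‖ ≤ δ) ∧
      ∃ V ∈ 𝓝 x, ∃ hVU : V ⊆ U, ∀ z (hz : z ∈ V), e z = g ⟨z, hVU hz⟩ := by
  classical
  set G : X → E := fun z => if h : z ∈ U then g ⟨z, h⟩ else 0
  have hG : ∀ z (hz : z ∈ U), G z = g ⟨z, hz⟩ := fun z hz => dif_pos hz
  have hGU : ContinuousOn G U := by
    rw [continuousOn_iff_continuous_domRestrict]
    convert g.continuous using 1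
    exact funext fun p => hG p p.2
  set W := Subtype.val '' {p : U | ‖g p‖ < δ}
  have hWo : IsOpen W := hU.isOpenMap_subtype_val _ (isOpen_lt (by fun_prop) continuous_const)
  have hWU : W ⊆ U := Subtype.coe_image_subset _ _
  have hGW : ∀ z ∈ W, ‖G z‖ < δ := by
    rintro _ ⟨p, hp, rfl⟩
    rwa [hG]
  obtain ⟨K, hKc, hxK, hKW⟩ := exists_compact_subset hWo ⟨⟨x, hx⟩, hδ, rfl⟩
  obtain ⟨φ, hφK, -, hφW, hφ01⟩ :=
    exists_continuousMap_one_of_isCompact_subset_isOpen hKc hWo hKW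
  have hsupp : tsupport (⇑φ • G) ⊆ U := (tsupport_smul_subset_left _ _).trans (hφW.trans hWU)
  have hbound : ∀ z, ‖(⇑φ • G) z‖ ≤ δ := by
    intro z
    by_cases hz : z ∈ tsupport φ
    · rw [Pi.smul_apply', norm_smul, ← one_mul δ]
      exact mul_le_mul (abs_le.2 ⟨by linarith [(hφ01 z).1], (hφ01 z).2⟩) (hGW z (hφW hz)).le
        (norm_nonneg _) zero_le_one
    · rw [Pi.smul_apply', image_eq_zero_of_notMem_tsupport hz, zero_smul, norm_zero]
      exact (norm_nonneg _).trans hδ.le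
  refine ⟨⇑φ • G, (φ.continuous.continuousOn.smul hGU).continuous_of_tsupport_subset hU hsupp,
    (subset_tsupport _).trans hsupp, hbound, K, mem_interior_iff_mem_nhds.1 hxK,
    hKW.trans hWU, fun z hz => ?_⟩
  rw [Pi.smul_apply', hφK hz, Pi.one_apply, one_smul, hG]

/-- Let `X` be locally compact Hausdorff, `(xₙ)` a sequence, `(Uₙ)` pairwise disjoint open
sets with `xₙ ∈ Uₙ`, and `gₙ : Uₙ → ℝ` continuous with `gₙ(xₙ) → t`. Then there is a
continuous `f : X → ℝ` coinciding with `gₙ` on a neighbourhood of `xₙ` for each `n`, and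
equal to `t` off `⋃ₙ Uₙ`. -/
theorem stmt_8 {X : Type*} [TopologicalSpace X] [LocallyCompactSpace X] [T2Space X]
    (x : ℕ → X) (U : ℕ → Set X)
    (hUo : ∀ n, IsOpen (U n)) (hUd : Pairwise (Function.onFun Disjoint U))
    (hx : ∀ n, x n ∈ U n)
    (g : (n : ℕ) → C(↥(U n), ℝ)) (t : ℝ)
    (hg : Tendsto (fun n => g n ⟨x n, hx n⟩) atTop (nhds t)) :
    ∃ f : X → ℝ, Continuous f ∧
      (∀ n, ∃ V : Set X, V ∈ nhds (x n) ∧ ∃ hVU : V ⊆ U n,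
        ∀ z, ∀ hz : z ∈ V, f z = g n ⟨z, hVU hz⟩) ∧
      ∀ z, z ∉ (⋃ n, U n) → f z = t := by
  set ε : ℕ → ℝ := fun n => ‖g n ⟨x n, hx n⟩ - t‖ + 1 / ((n : ℝ) + 1)
  have hε : Tendsto ε atTop (𝓝 0) := by
    simpa [ε, Real.norm_eq_abs, one_div] using
      (hg.sub_const t).norm.add tendsto_one_div_add_atTop_nhds_zero_nat
  choose e he_cont he_supp he_bound V hV hVU he_eq using fun n =>
    exists_continuous_eq_near_of_norm_lt (hUo n) (hx n) (g n - ContinuousMap.const _ t)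
      (δ := ε n) (lt_add_of_pos_right _ Nat.one_div_pos_of_nat)
  have he_zero : ∀ n z, z ∉ U n → e n z = 0 := fun n z hz =>
    notMem_support.1 fun h => hz (he_supp n h)
  have hsum : ∀ n z, z ∈ U n → ∑' m, e m z = e n z := fun n z hz =>
    tsum_eq_single n fun m hm => he_zero m z (disjoint_right.1 (hUd hm) hz)
  refine ⟨fun z => t + ∑' n, e n z, continuous_const.add
    (continuous_tsum_of_pairwise_disjoint_support he_cont
      (fun m n hmn => (hUd hmn).mono (he_supp m) (he_supp n)) hε he_bound),
    fun n => ⟨V n, hV n, hVU n, fun z hz => ?_⟩, fun z hz => ?_⟩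
  · simp [hsum n z (hVU n hz), he_eq n z hz]
  · simp [he_zero _ z fun h => hz (mem_iUnion_of_mem _ h)]
end

section
/- Let τ : ℝ → ℝ be a multiplicative bijection, i.e., a bijection satisfying τ(xy) = τ(x)τ(y) for all x,y ∈ ℝ. Then: (a) for all x ∈ ℝ, x ≥ 0 if and only if τ(x) ≥ 0; (b) τ(−x) = −τ(x) for all x ∈ ℝ; (c) the following are equivalent: (1) τ is continuous; (2) τ is continuous at 0; (3) for all x with 0 < x < 1 one has 0 < τ(x) < 1; (4) τ is increasing; (5) there exists p > 0 such that τ(x) = sgn(x)·|x|^p for all x ∈ ℝ. -/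
open Set Topology

/-!
Positive reals are squares, so a multiplicative automorphism `e` of `ℝ` preserves positivity, and
`e (-1)` is a square root of `1` other than `e 1 = 1`, so `e` is odd. If `e` is continuous at `0`
and `0 < x < 1`, then `(e x)ⁿ = e (xⁿ) → e 0 = 0` forces `e x < 1`, and then
`e a = e (a / b) * e b < e b` for `0 < a < b`, so `e` is increasing. An increasing surjection is
continuous, and conjugating by `exp` turns a continuous multiplicative map of `(0, ∞)` into a
continuous additive map of `ℝ`, which is linear; its slope `log (e (exp 1))` is the exponent `p`.
-/

theorem MulEquiv.map_neg_one_of_neg_one_ne_one {R S : Type*} [Ring R] [Ring S]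
    [NoZeroDivisors S] (e : R ≃* S) (h : (-1 : R) ≠ 1) : e (-1) = -1 := by
  have hsq : e (-1) * e (-1) = 1 := by rw [← map_mul, neg_one_mul, neg_neg, map_one]
  refine (mul_self_eq_one_iff.mp hsq).resolve_left fun h1 => h ?_
  exact e.injective (h1.trans (map_one e).symm)

theorem MulEquiv.map_neg_of_neg_one_ne_one {R S : Type*} [Ring R] [Ring S]
    [NoZeroDivisors S] (e : R ≃* S) (h : (-1 : R) ≠ 1) (x : R) : e (-x) = -e x := by
  rw [← neg_one_mul, map_mul, e.map_neg_one_of_neg_one_ne_one h, neg_one_mul]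

theorem strictMono_sign_mul_abs_rpow {p : ℝ} (hp : 0 < p) :
    StrictMono fun x : ℝ => Real.sign x * |x| ^ p := by
  have h_nonneg : ∀ x : ℝ, 0 ≤ x → Real.sign x * |x| ^ p = x ^ p := by
    intro x hx
    rcases hx.eq_or_lt with rfl | hx
    · simp [Real.zero_rpow hp.ne']
    · rw [Real.sign_of_pos hx, abs_of_pos hx, one_mul]
  refine strictMono_of_odd_strictMonoOn_nonneg (fun x => ?_) fun x hx y hy hxy => ?_
  · simp only [Real.sign_neg, abs_neg, neg_mul]
  · simp only [h_nonneg x hx, h_nonneg y hy]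
    exact Real.rpow_lt_rpow hx hxy hp

theorem eq_rpow_of_continuousOn_of_map_mul {f : ℝ → ℝ} (hc : ContinuousOn f (Ioi 0))
    (hpos : ∀ x, 0 < x → 0 < f x) (hmul : ∀ x y, 0 < x → 0 < y → f (x * y) = f x * f y)
    {x : ℝ} (hx : 0 < x) : f x = x ^ Real.log (f (Real.exp 1)) := by
  have hf1 : f 1 = 1 := by
    have h := hmul 1 1 one_pos one_pos
    rw [mul_one] at h
    exact (mul_eq_left₀ (hpos 1 one_pos).ne').mp h.symm
  let F : ℝ →+ ℝ :=
    { toFun := fun t => Real.log (f (Real.exp t))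
      map_zero' := by simp [hf1]
      map_add' := fun s t => by
        simp only [Real.exp_add, hmul _ _ (Real.exp_pos s) (Real.exp_pos t)]
        exact Real.log_mul (hpos _ (Real.exp_pos s)).ne' (hpos _ (Real.exp_pos t)).ne' }
  have hF : Continuous F :=
    (hc.comp_continuous Real.continuous_exp Real.exp_pos).log
      fun t => (hpos _ (Real.exp_pos t)).ne'
  have hF_linear : F (Real.log x) = Real.log x * F 1 := by
    simpa using map_real_smul F hF (Real.log x) 1
  calc f x = Real.exp (F (Real.log x)) := by
        simp [F, Real.exp_log hx, Real.exp_log (hpos x hx)]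
    _ = x ^ Real.log (f (Real.exp 1)) := by rw [hF_linear, Real.rpow_def_of_pos hx]; rfl

namespace MulEquiv

variable (e : ℝ ≃* ℝ)

theorem real_map_neg (x : ℝ) : e (-x) = -e x :=
  e.map_neg_of_neg_one_ne_one (by norm_num) x

theorem real_map_pos {x : ℝ} (hx : 0 < x) : 0 < e x := by
  have hsq : e x = e √x * e √x := by rw [← map_mul, Real.mul_self_sqrt hx.le]
  exact (hsq ▸ mul_self_nonneg _).lt_of_ne' ((map_ne_zero e).mpr hx.ne')

theorem real_nonneg_iff (x : ℝ) : 0 ≤ x ↔ 0 ≤ e x := by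
  refine ⟨fun hx => ?_, fun hex => not_lt.mp fun hx => ?_⟩
  · rcases hx.eq_or_lt with rfl | hx
    · rw [map_zero]
    · exact (e.real_map_pos hx).le
  · have := e.real_map_pos (neg_pos.mpr hx)
    rw [real_map_neg] at this
    linarith

variable {e}

theorem real_map_lt_one_of_continuousAt_zero (hc : ContinuousAt e 0) {x : ℝ} (hx0 : 0 < x)
    (hx1 : x < 1) : e x < 1 := by
  have hlim : Filter.Tendsto (fun n : ℕ => e x ^ n) Filter.atTop (𝓝 0) := by
    simpa only [map_pow, map_zero, Function.comp_def] using
      hc.tendsto.comp (tendsto_pow_atTop_nhds_zero_of_lt_one hx0.le hx1)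
  exact (abs_lt.mp (tendsto_pow_atTop_nhds_zero_iff.mp hlim)).2

theorem real_strictMono_of_map_lt_one (h : ∀ x : ℝ, 0 < x → x < 1 → e x < 1) :
    StrictMono e := by
  refine strictMono_of_odd_strictMonoOn_nonneg e.real_map_neg fun a ha b hb hab => ?_
  have hb : 0 < b := (mem_Ici.mp ha).trans_lt hab
  rcases (mem_Ici.mp ha).eq_or_lt with rfl | ha
  · rw [map_zero]
    exact e.real_map_pos hb
  · calc e a = e (a / b) * e b := by rw [← map_mul, div_mul_cancel₀ a hb.ne']
      _ < 1 * e b := by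
        gcongr
        · exact e.real_map_pos hb
        · exact h _ (div_pos ha hb) ((div_lt_one hb).mpr hab)
      _ = e b := one_mul _

theorem real_eq_sign_mul_abs_rpow_of_strictMono (hm : StrictMono e) :
    ∃ p : ℝ, 0 < p ∧ ∀ x : ℝ, e x = Real.sign x * |x| ^ p := by
  have h_rpow : ∀ x : ℝ, 0 < x → e x = x ^ Real.log (e (Real.exp 1)) := fun x hx =>
    eq_rpow_of_continuousOn_of_map_mul
      (hm.monotone.continuous_of_surjective e.surjective).continuousOn
      (fun _ => e.real_map_pos) (fun x y _ _ => map_mul e x y) hx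
  refine ⟨Real.log (e (Real.exp 1)), Real.log_pos ?_, fun x => ?_⟩
  · simpa using hm (Real.one_lt_exp_iff.mpr one_pos)
  rcases lt_trichotomy x 0 with hx | rfl | hx
  · rw [← neg_neg x, e.real_map_neg, h_rpow _ (neg_pos.mpr hx), Real.sign_neg,
      Real.sign_of_pos (neg_pos.mpr hx), abs_neg, abs_of_pos (neg_pos.mpr hx)]
    ring
  · simp
  · rw [h_rpow x hx, Real.sign_of_pos hx, abs_of_pos hx, one_mul]

end MulEquiv

/-- Classification of multiplicative bijections of `ℝ`: such a bijection preserves signs,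
is odd, and continuity is equivalent to continuity at `0`, to preserving `(0,1)`, to being
increasing, and to having the form `τ(x) = sgn(x)·|x|^p` for some `p > 0`. -/
theorem stmt_10 (τ : ℝ → ℝ) (hbij : Function.Bijective τ)
    (hmul : ∀ x y : ℝ, τ (x * y) = τ x * τ y) :
    (∀ x : ℝ, 0 ≤ x ↔ 0 ≤ τ x) ∧
    (∀ x : ℝ, τ (-x) = -τ x) ∧
    [Continuous τ,
     ContinuousAt τ 0,
     ∀ x : ℝ, 0 < x → x < 1 → 0 < τ x ∧ τ x < 1,
     StrictMono τ,
     ∃ p : ℝ, 0 < p ∧ ∀ x : ℝ, τ x = Real.sign x * |x| ^ p].TFAE := by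
  obtain ⟨e, rfl⟩ : ∃ e : ℝ ≃* ℝ, ⇑e = τ := ⟨.ofBijective (⟨τ, hmul⟩ : ℝ →ₙ* ℝ) hbij, rfl⟩
  refine ⟨e.real_nonneg_iff, e.real_map_neg, ?_⟩
  tfae_have 1 → 2 := fun hc => hc.continuousAt
  tfae_have 2 → 3 := fun hc x hx0 hx1 =>
    ⟨e.real_map_pos hx0, MulEquiv.real_map_lt_one_of_continuousAt_zero hc hx0 hx1⟩
  tfae_have 3 → 4 := fun h =>
    MulEquiv.real_strictMono_of_map_lt_one fun x hx0 hx1 => (h x hx0 hx1).2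
  tfae_have 4 → 1 := fun hm => hm.monotone.continuous_of_surjective e.surjective
  tfae_have 4 → 5 := MulEquiv.real_eq_sign_mul_abs_rpow_of_strictMono
  tfae_have 5 → 4 := fun ⟨_, hp, he⟩ => funext he ▸ strictMono_sign_mul_abs_rpow hp
  tfae_finish
end

section
/- Let S be a nontrivial Hausdorff topological monoid with zero element 0 and unit 1, which is path-connected, 0-right cancellative (for all s,r,t ∈ S, if st = rt and st ≠ 0 then s = r), and categorical at 0 (for all s,t ∈ S, st = 0 implies s = 0 or t = 0). Let X be a locally compact Hausdorff space and let C_c(X,S) denote the set of continuous functions f : X → S with compact support, equipped with the pointwise product. Then for all f,g ∈ C_c(X,S): supp(f) ∩ supp(g) = ∅ if and only if there exists h ∈ C_c(X,S) such that h·f = f and h·g = 0 (the constant zero function). -/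
open Set Topology

/-- For a nontrivial path-connected Hausdorff topological monoid `S` with zero which is
`0`-right cancellative and categorical at `0`, and a locally compact Hausdorff space `X`:
two compactly supported continuous functions `f, g : X → S` have disjoint supports iff
there is `h ∈ C_c(X,S)` with `h·f = f` and `h·g = 0` pointwise. -/
theorem stmt_11 {S X : Type*}
    [TopologicalSpace S] [T2Space S] [MonoidWithZero S] [ContinuousMul S]
    [Nontrivial S] [PathConnectedSpace S]
    (hcancel : ∀ s r t : S, s * t = r * t → s * t ≠ 0 → s = r)
    (hcat : ∀ s t : S, s * t = 0 → s = 0 ∨ t = 0)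
    [TopologicalSpace X] [LocallyCompactSpace X] [T2Space X]
    (f g : C(X, S))
    (hf : IsCompact (closure {x | f x ≠ 0})) (hg : IsCompact (closure {x | g x ≠ 0})) :
    closure {x | f x ≠ 0} ∩ closure {x | g x ≠ 0} = ∅ ↔
      ∃ h : C(X, S), IsCompact (closure {x | h x ≠ 0}) ∧
        (∀ x, h x * f x = f x) ∧ (∀ x, h x * g x = 0) := by
  constructor
  · intro hdisj
    -- Urysohn: u = 1 on supp f, u = 0 on supp g, compact support, values in [0,1]
    obtain ⟨u, hu1, hu0, hucs, huIcc⟩ := exists_continuous_one_zero_of_isCompact hf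
      isClosed_closure (disjoint_iff_inter_eq_empty.mpr hdisj)
    -- path γ from 0 to 1 in S
    obtain ⟨γ⟩ := PathConnectedSpace.joined (0 : S) 1
    -- h = γ ∘ projIcc ∘ u
    refine ⟨⟨fun x => γ (Set.projIcc 0 1 zero_le_one (u x)),
      γ.continuous.comp (continuous_projIcc.comp u.continuous)⟩, ?_, ?_, ?_⟩
    · apply hucs.isCompact.of_isClosed_subset isClosed_closure
      apply closure_mono
      intro x hx
      simp only [ContinuousMap.coe_mk, mem_setOf_eq] at hx ⊢
      intro hux
      apply hx
      rw [hux]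
      have : Set.projIcc (0:ℝ) 1 zero_le_one 0 = 0 := by
        simp [Set.projIcc]
      rw [this, γ.source]
    · intro x
      by_cases hfx : f x = 0
      · simp [hfx]
      · have hx : x ∈ closure {x | f x ≠ 0} := subset_closure hfx
        have := hu1 hx
        simp only [ContinuousMap.coe_mk, Pi.one_apply] at this ⊢
        rw [this]
        have : Set.projIcc (0:ℝ) 1 zero_le_one 1 = 1 := by
          simp [Set.projIcc]
        rw [this, γ.target, one_mul]
    · intro x
      by_cases hgx : g x = 0
      · simp [hgx]
      · have hx : x ∈ closure {x | g x ≠ 0} := subset_closure hgx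
        have := hu0 hx
        simp only [ContinuousMap.coe_mk, Pi.zero_apply] at this ⊢
        rw [this]
        have : Set.projIcc (0:ℝ) 1 zero_le_one 0 = 0 := by
          simp [Set.projIcc]
        rw [this, γ.source, zero_mul]
  · rintro ⟨h, -, hhf, hhg⟩
    ext x
    simp only [mem_inter_iff, mem_empty_iff_false, iff_false]
    rintro ⟨hxf, hxg⟩
    -- f x ≠ 0 → h x = 1; g x ≠ 0 → h x = 0; pass to closures
    have h1 : closure {x | f x ≠ 0} ⊆ {x | h x = 1} := by
      rw [← (isClosed_eq h.continuous continuous_const).closure_eq]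
      apply closure_mono
      intro y hy
      exact hcancel (h y) 1 (f y) (by rw [hhf y, one_mul]) (by rw [hhf y]; exact hy)
    have h0 : closure {x | g x ≠ 0} ⊆ {x | h x = 0} := by
      rw [← (isClosed_eq h.continuous continuous_const).closure_eq]
      apply closure_mono
      intro y hy
      rcases hcat (h y) (g y) (hhg y) with h' | h'
      · exact h'
      · exact absurd h' hy
    have e1 := h1 hxf
    have e0 := h0 hxg
    simp only [mem_setOf_eq] at e1 e0
    exact one_ne_zero (e1 ▸ e0)
end

section
/- Let X and Y be locally compact Hausdorff spaces and let T : C_c(X,ℝ) → C_c(Y,ℝ) be an additive lattice isomorphism, i.e., a bijection which is additive (T(f+g) = Tf + Tg) and satisfies f ≤ g if and only if Tf ≤ Tg. Then there exist a unique homeomorphism φ : Y → X and a unique continuous function p : Y → (0,∞) such that Tf(y) = p(y)·f(φ(y)) for all f ∈ C_c(X,ℝ) and all y ∈ Y. -/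
/-!
For each `y : Y`, `f ↦ T f y` is an additive lattice homomorphism `C_c(X, ℝ) → ℝ`, and a nonzero
such functional `ℓ` is a positive multiple of a point evaluation. Indeed, by compactness the
supports of the nonnegative `f` with `ℓ f > 0` have a common point `x₀`; `ℓ` kills every `f` with
`f x₀ = 0`, because `n • |f| ≤ (n • |f| - k)⁺ + k` for a bump `k` at `x₀`, where the first summand
vanishes near `x₀`; and an additive monotone map is `ℝ`-homogeneous on nonnegative functions, so
`ℓ f = ℓ (f x₀ • k) = f x₀ * ℓ k`. This writes `T f y = p y * f (φ y)`, and the same for `T⁻¹`.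
Testing the two representations against Urysohn functions shows that `φ` is a homeomorphism with
the inverse coming from `T⁻¹`, that `p` is continuous, and that `(φ, p)` is unique.
-/

open Set Topology
open scoped CompactlySupported

theorem AddMonoidHom.apply_eq_mul_of_monotone (g : ℝ →+ ℝ) (hg : Monotone g) (t : ℝ) :
    g t = g 1 * t := by
  have hrat (q : ℚ) : g q = g 1 * q := by
    simpa [Rat.smul_def, mul_comm] using map_rat_smul g q 1
  have hg₁ : 0 ≤ g 1 := by simpa using hg zero_le_one
  have hlin : Continuous fun s : ℝ => g 1 * s := by fun_prop
  apply le_antisymm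
  · refine ge_of_tendsto (hlin.continuousWithinAt (s := Ioi t) (x := t)) ?_
    filter_upwards [self_mem_nhdsWithin] with r (hr : t < r)
    obtain ⟨q, htq, hqr⟩ := exists_rat_btwn hr
    calc g t ≤ g q := hg htq.le
      _ = g 1 * q := hrat q
      _ ≤ g 1 * r := by gcongr
  · refine le_of_tendsto (hlin.continuousWithinAt (s := Iio t) (x := t)) ?_
    filter_upwards [self_mem_nhdsWithin] with r (hr : r < t)
    obtain ⟨q, hrq, hqt⟩ := exists_rat_btwn hr
    calc g 1 * r ≤ g 1 * q := by gcongr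
      _ = g q := (hrat q).symm
      _ ≤ g t := hg hqt.le

namespace CompactlySupportedContinuousMap

variable {X : Type*} [TopologicalSpace X]

theorem exists_one_zero_of_isCompact [RegularSpace X] [LocallyCompactSpace X] {K t : Set X}
    (hK : IsCompact K) (ht : IsClosed t) (hd : Disjoint K t) :
    ∃ k : C_c(X, ℝ), 0 ≤ k ∧ EqOn k 1 K ∧ EqOn k 0 t := by
  obtain ⟨k, hkK, hkt, hkc, hk01⟩ := exists_continuous_one_zero_of_isCompact hK ht hd
  exact ⟨⟨k, hkc⟩, fun x => (hk01 x).1, hkK, hkt⟩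

theorem tsupport_subset_of_nonneg_of_le {f g : C_c(X, ℝ)} (hf : 0 ≤ f) (hfg : f ≤ g) :
    tsupport f ⊆ tsupport g :=
  closure_mono fun x hx => ((hf x).lt_of_ne' hx).trans_le (hfg x) |>.ne'

@[simp] theorem abs_apply (f : C_c(X, ℝ)) (x : X) : |f| x = |f x| := rfl

noncomputable def orderAddMonoidIsoOfBijOn {Y : Type*} [TopologicalSpace Y]
    (T : C(X, ℝ) → C(Y, ℝ))
    (hTbij : Set.BijOn T {f | HasCompactSupport ⇑f} {g | HasCompactSupport ⇑g})
    (hTadd : ∀ f g : C(X, ℝ), HasCompactSupport ⇑f → HasCompactSupport ⇑g →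
      T (f + g) = T f + T g)
    (hTord : ∀ f g : C(X, ℝ), HasCompactSupport ⇑f → HasCompactSupport ⇑g →
      (f ≤ g ↔ T f ≤ T g)) :
    C_c(X, ℝ) ≃+o C_c(Y, ℝ) where
  toEquiv := Equiv.ofBijective (fun f => ⟨T f, hTbij.mapsTo f.hasCompactSupport⟩)
    ⟨fun f g h => ext fun x => ContinuousMap.congr_fun
      (hTbij.injOn f.hasCompactSupport g.hasCompactSupport (congrArg toContinuousMap h)) x,
    fun g => by
      obtain ⟨f, hf, hTf⟩ := hTbij.surjOn g.hasCompactSupport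
      exact ⟨⟨f, hf⟩, ext fun y => ContinuousMap.congr_fun hTf y⟩⟩
  map_add' f g := ext fun y => ContinuousMap.congr_fun
    (hTadd f.toContinuousMap g.toContinuousMap f.hasCompactSupport g.hasCompactSupport) y
  map_le_map_iff' {f g} := (hTord f g f.hasCompactSupport g.hasCompactSupport).symm

variable {ℓ : C_c(X, ℝ) →+ ℝ}

theorem monotone_of_map_inf (hℓ : ∀ f g, ℓ (f ⊓ g) = ℓ f ⊓ ℓ g) : Monotone ℓ := by
  intro f g hfg
  rw [← inf_eq_left.mpr hfg, hℓ]
  exact inf_le_right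

theorem map_smul_of_nonneg (hℓ : ∀ f g, ℓ (f ⊓ g) = ℓ f ⊓ ℓ g) {k : C_c(X, ℝ)} (hk : 0 ≤ k)
    (t : ℝ) : ℓ (t • k) = t * ℓ k := by
  let g : ℝ →+ ℝ := ℓ.comp ((smulAddHom ℝ C_c(X, ℝ)).flip k)
  have hg : Monotone g := fun s t hst =>
    monotone_of_map_inf hℓ fun x => mul_le_mul_of_nonneg_right hst (hk x)
  simpa [g, mul_comm] using g.apply_eq_mul_of_monotone hg t

theorem exists_nonneg_map_pos (hℓ : ∀ f g, ℓ (f ⊓ g) = ℓ f ⊓ ℓ g) (hne : ℓ ≠ 0) :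
    ∃ g, 0 ≤ g ∧ 0 < ℓ g := by
  obtain ⟨f, hf⟩ : ∃ f, ℓ f ≠ 0 := by
    by_contra! h
    exact hne (AddMonoidHom.ext h)
  refine ⟨|f|, abs_nonneg f, ?_⟩
  have hmono := monotone_of_map_inf hℓ
  have h₁ := hmono (le_abs_self f)
  have h₂ := hmono (neg_le_abs f)
  rw [map_neg] at h₂
  cases hf.lt_or_gt <;> linarith

theorem exists_forall_mem_tsupport (hℓ : ∀ f g, ℓ (f ⊓ g) = ℓ f ⊓ ℓ g)
    (hg : ∃ g, 0 ≤ g ∧ 0 < ℓ g) :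
    ∃ x₀, ∀ f, 0 ≤ f → 0 < ℓ f → x₀ ∈ tsupport f := by
  let P := {f : C_c(X, ℝ) | 0 ≤ f ∧ 0 < ℓ f}
  have : Nonempty P := let ⟨g, hg⟩ := hg; ⟨⟨g, hg⟩⟩
  obtain ⟨x₀, hx₀⟩ := IsCompact.nonempty_iInter_of_directed_nonempty_isCompact_isClosed
    (fun f : P => tsupport (f : C_c(X, ℝ)))
    (fun ⟨f, hf₀, hf⟩ ⟨g, hg₀, hg⟩ =>
      ⟨⟨f ⊓ g, le_inf hf₀ hg₀, by rw [hℓ]; exact lt_inf_iff.mpr ⟨hf, hg⟩⟩,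
        tsupport_subset_of_nonneg_of_le (le_inf hf₀ hg₀) inf_le_left,
        tsupport_subset_of_nonneg_of_le (le_inf hf₀ hg₀) inf_le_right⟩)
    (fun ⟨f, _, hf⟩ => by
      rw [nonempty_iff_ne_empty, Ne, tsupport_eq_empty_iff]
      intro h
      rw [show f = 0 from DFunLike.coe_injective h, map_zero] at hf
      exact hf.false)
    (fun f => f.1.hasCompactSupport.isCompact) (fun _ => isClosed_tsupport _)
  exact ⟨x₀, fun f hf₀ hf => mem_iInter.mp hx₀ ⟨f, hf₀, hf⟩⟩

theorem map_eq_zero_of_apply_eq_zero [RegularSpace X] [LocallyCompactSpace X]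
    (hℓ : ∀ f g, ℓ (f ⊓ g) = ℓ f ⊓ ℓ g) {x₀ : X}
    (hx₀ : ∀ f, 0 ≤ f → 0 < ℓ f → x₀ ∈ tsupport f) {f : C_c(X, ℝ)} (hf : f x₀ = 0) :
    ℓ f = 0 := by
  have hmono := monotone_of_map_inf hℓ
  obtain ⟨k, -, hk, -⟩ := exists_one_zero_of_isCompact
    isCompact_singleton isClosed_empty (disjoint_empty {x₀})
  have hbound (n : ℕ) : n • ℓ |f| ≤ ℓ k := by
    have hnot : x₀ ∉ tsupport ((n • |f| - k) ⊔ 0) := by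
      refine notMem_tsupport_iff_eventuallyEq.mpr ?_
      have : ∀ᶠ x in 𝓝 x₀, (n • |f|) x < k x :=
        ((n • |f|).continuous.continuousAt.eventually_lt k.continuous.continuousAt
          (by simp [hf, hk rfl]))
      filter_upwards [this] with x hx
      simpa using hx.le
    have hpos : ℓ ((n • |f| - k) ⊔ 0) = 0 :=
      le_antisymm (not_lt.mp fun h => hnot (hx₀ _ le_sup_right h))
        (by simpa using hmono (le_sup_right : 0 ≤ (n • |f| - k) ⊔ 0))
    have hsplit : n • |f| = (n • |f| - k) ⊔ 0 + (n • |f|) ⊓ k := by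
      ext x
      simp only [add_apply, sup_apply, inf_apply, sub_apply, zero_apply]
      rcases le_total ((n • |f|) x) (k x) with h | h
      · rw [max_eq_right (sub_nonpos.mpr h), min_eq_left h, zero_add]
      · rw [max_eq_left (sub_nonneg.mpr h), min_eq_right h, sub_add_cancel]
    rw [← map_nsmul, hsplit, map_add, hpos, zero_add]
    exact hmono inf_le_right
  have habs : ℓ |f| = 0 := by
    refine le_antisymm (not_lt.mp fun h => ?_) (by simpa using hmono (abs_nonneg f))
    obtain ⟨n, hn⟩ := Archimedean.arch (ℓ k + 1) h
    linarith [hbound n]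
  have h₁ := hmono (le_abs_self f)
  have h₂ := hmono (neg_le_abs f)
  rw [map_neg] at h₂
  linarith

theorem exists_eq_mul_apply_of_map_inf [RegularSpace X] [LocallyCompactSpace X]
    (hℓ : ∀ f g, ℓ (f ⊓ g) = ℓ f ⊓ ℓ g) (hne : ℓ ≠ 0) :
    ∃ x, ∃ c > 0, ∀ f, ℓ f = c * f x := by
  obtain ⟨x₀, hx₀⟩ := exists_forall_mem_tsupport hℓ (exists_nonneg_map_pos hℓ hne)
  obtain ⟨k, hk₀, hk, -⟩ := exists_one_zero_of_isCompact
    isCompact_singleton isClosed_empty (disjoint_empty {x₀})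
  have hform (f : C_c(X, ℝ)) : ℓ f = ℓ k * f x₀ := by
    have : ℓ (f - f x₀ • k) = 0 :=
      map_eq_zero_of_apply_eq_zero hℓ hx₀ (by simp [hk rfl])
    rw [map_sub, map_smul_of_nonneg hℓ hk₀, sub_eq_zero] at this
    rw [this, mul_comm]
  refine ⟨x₀, ℓ k, lt_of_le_of_ne ?_ fun h => hne (AddMonoidHom.ext fun f => ?_), hform⟩
  · simpa using monotone_of_map_inf hℓ hk₀
  · rw [hform, ← h, zero_mul, AddMonoidHom.zero_apply]

end CompactlySupportedContinuousMap

theorem OrderAddMonoidIso.exists_weighted_comp {X Y : Type*} [TopologicalSpace X]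
    [RegularSpace X] [LocallyCompactSpace X] [TopologicalSpace Y] [RegularSpace Y]
    [LocallyCompactSpace Y] (Φ : C_c(X, ℝ) ≃+o C_c(Y, ℝ)) :
    ∃ (φ : Y → X) (p : Y → ℝ), (∀ y, 0 < p y) ∧ ∀ f y, Φ f y = p y * f (φ y) := by
  have (y : Y) : ∃ x, ∃ c > 0, ∀ f, Φ f y = c * f x := by
    let ℓ : C_c(X, ℝ) →+ ℝ := AddMonoidHom.mk' (fun f => Φ f y) fun f g => by simp
    obtain ⟨b, -, hb, -⟩ := CompactlySupportedContinuousMap.exists_one_zero_of_isCompact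
      isCompact_singleton isClosed_empty (disjoint_empty {y})
    refine CompactlySupportedContinuousMap.exists_eq_mul_apply_of_map_inf (ℓ := ℓ)
      (fun f g => by simp [ℓ]) fun h => ?_
    simpa [ℓ, hb rfl] using DFunLike.congr_fun h (Φ.symm b)
  choose φ p hp hΦ using this
  exact ⟨φ, p, hp, fun f y => hΦ y f⟩

section WeightedComposition

variable {X Y : Type*} [TopologicalSpace X]

theorem eq_of_forall_mul_apply_eq [T2Space X] [LocallyCompactSpace X] {φ φ' : Y → X}
    {p p' : Y → ℝ} (hp : ∀ y, p y ≠ 0)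
    (h : ∀ (f : C_c(X, ℝ)) y, p y * f (φ y) = p' y * f (φ' y)) : φ = φ' ∧ p = p' := by
  have hφ : φ = φ' := funext fun y => by
    by_contra hne
    obtain ⟨f, -, hf₁, hf₀⟩ := CompactlySupportedContinuousMap.exists_one_zero_of_isCompact
      isCompact_singleton isClosed_singleton (disjoint_singleton.mpr hne)
    simpa [hf₁ rfl, hf₀ rfl, hp y] using h f y
  refine ⟨hφ, funext fun y => ?_⟩
  obtain ⟨f, -, hf₁, -⟩ := CompactlySupportedContinuousMap.exists_one_zero_of_isCompact
    isCompact_singleton isClosed_empty (disjoint_empty {φ y})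
  simpa [← hφ, hf₁ rfl] using h f y

variable [TopologicalSpace Y] [RegularSpace X] [LocallyCompactSpace X]
  {Φ : C_c(X, ℝ) → C_c(Y, ℝ)} {φ : Y → X} {p : Y → ℝ}

theorem continuous_of_forall_apply_eq_mul (hp : ∀ y, p y ≠ 0)
    (hΦ : ∀ f y, Φ f y = p y * f (φ y)) : Continuous φ := by
  refine continuous_iff_continuousAt.mpr fun y₀ => tendsto_nhds.mpr fun U hU hy₀ => ?_
  obtain ⟨f, -, hf₁, hf₀⟩ := CompactlySupportedContinuousMap.exists_one_zero_of_isCompact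
    isCompact_singleton hU.isClosed_compl (disjoint_compl_right_iff_subset.mpr
      (singleton_subset_iff.mpr hy₀))
  have : Φ f y₀ ≠ 0 := by simpa [hΦ, hf₁ rfl] using hp y₀
  filter_upwards [(map_continuous (Φ f)).continuousAt.eventually_ne this] with y hy
  by_contra hyU
  exact hy (by rw [hΦ, hf₀ hyU, Pi.zero_apply, mul_zero])

theorem continuous_weight_of_forall_apply_eq_mul (hφ : Continuous φ)
    (hΦ : ∀ f y, Φ f y = p y * f (φ y)) : Continuous p := by
  refine continuous_iff_continuousAt.mpr fun y₀ => ?_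
  obtain ⟨K, hK, hKy₀⟩ := exists_compact_mem_nhds (φ y₀)
  obtain ⟨k, -, hk, -⟩ := CompactlySupportedContinuousMap.exists_one_zero_of_isCompact
    hK isClosed_empty (disjoint_empty K)
  refine (Φ k).continuous.continuousAt.congr ?_
  filter_upwards [hφ.continuousAt hKy₀] with y hy
  simp [hΦ, hk hy]

end WeightedComposition

/-- An additive lattice isomorphism `T : C_c(X,ℝ) → C_c(Y,ℝ)` has the form
`Tf(y) = p(y)·f(φ(y))` for a unique homeomorphism `φ : Y → X` and a unique continuous
positive function `p : Y → (0,∞)`. -/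
theorem stmt_14 {X Y : Type*}
    [TopologicalSpace X] [LocallyCompactSpace X] [T2Space X]
    [TopologicalSpace Y] [LocallyCompactSpace Y] [T2Space Y]
    (T : C(X, ℝ) → C(Y, ℝ))
    (hTbij : Set.BijOn T {f | HasCompactSupport ⇑f} {g | HasCompactSupport ⇑g})
    (hTadd : ∀ f g : C(X, ℝ), HasCompactSupport ⇑f → HasCompactSupport ⇑g →
      T (f + g) = T f + T g)
    (hTord : ∀ f g : C(X, ℝ), HasCompactSupport ⇑f → HasCompactSupport ⇑g →
      (f ≤ g ↔ T f ≤ T g)) :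
    ∃! φp : (Y ≃ₜ X) × (Y → ℝ),
      Continuous φp.2 ∧ (∀ y, 0 < φp.2 y) ∧
      ∀ f : C(X, ℝ), HasCompactSupport ⇑f → ∀ y, T f y = φp.2 y * f (φp.1 y) := by
  set Φ := CompactlySupportedContinuousMap.orderAddMonoidIsoOfBijOn T hTbij hTadd hTord
  obtain ⟨φ, p, hp, hΦ⟩ := Φ.exists_weighted_comp
  obtain ⟨ψ, q, hq, hΨ⟩ := Φ.symm.exists_weighted_comp
  have hψφ : id = ψ ∘ φ := (eq_of_forall_mul_apply_eq (p := 1) (p' := fun y => p y * q (φ y))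
    (fun _ => one_ne_zero) fun g y => by
      simpa [hΨ, mul_assoc] using hΦ (Φ.symm g) y).1
  have hφψ : id = φ ∘ ψ := (eq_of_forall_mul_apply_eq (p := 1) (p' := fun x => q x * p (ψ x))
    (fun _ => one_ne_zero) fun f x => by
      simpa [hΦ, mul_assoc] using hΨ (Φ f) x).1
  have hφ := continuous_of_forall_apply_eq_mul (fun y => (hp y).ne') hΦ
  let e : Y ≃ₜ X :=
    { toFun := φ, invFun := ψ
      left_inv := congrFun hψφ.symm, right_inv := congrFun hφψ.symm
      continuous_toFun := hφ
      continuous_invFun := continuous_of_forall_apply_eq_mul (fun x => (hq x).ne') hΨ }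
  refine ⟨(e, p), ⟨continuous_weight_of_forall_apply_eq_mul hφ hΦ, hp,
    fun f hf => hΦ ⟨f, hf⟩⟩, ?_⟩
  rintro ⟨e', p'⟩ ⟨-, -, h'⟩
  obtain ⟨he, hp'⟩ := eq_of_forall_mul_apply_eq (fun y => (hp y).ne') fun f y =>
    (hΦ f y).symm.trans (h' f f.hasCompactSupport y)
  exact Prod.ext (Homeomorph.ext (congrFun he.symm)) hp'.symm
end

section
/- Let X and Y be compact Hausdorff spaces, and let 𝒜(X) ⊆ C(X,ℝ) and 𝒜(Y) ⊆ C(Y,ℝ) be regular vector sublattices (linear subspaces closed under pointwise max and min). Suppose T : 𝒜(X) → 𝒜(Y) is a linear bijection which preserves non-vanishing functions: for all f ∈ 𝒜(X), (∃x ∈ X, f(x) = 0) if and only if (∃y ∈ Y, Tf(y) = 0). Then there exist a homeomorphism φ : Y → X and a continuous nowhere-zero function p : Y → ℝ such that Tf(y) = p(y)·f(φ(y)) for all f ∈ 𝒜(X) and y ∈ Y. -/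
open Set Topology Filter
namespace LiWongAux
set_option linter.unusedSectionVars false
set_option maxHeartbeats 1000000



variable {X : Type*} [TopologicalSpace X] [CompactSpace X] [T2Space X]

lemma abs_mem {A : Set C(X, ℝ)}
    (hAsmul : ∀ (c : ℝ), ∀ f ∈ A, c • f ∈ A)
    (hAmax : ∀ f ∈ A, ∀ g ∈ A, ∃ h ∈ A, ∀ x, h x = max (f x) (g x))
    {f : C(X,ℝ)} (hf : f ∈ A) : |f| ∈ A := by
  obtain ⟨h, hh, hhx⟩ := hAmax f hf ((-1 : ℝ) • f) (hAsmul _ f hf)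
  have : h = |f| := by
    ext x
    simp only [hhx x, ContinuousMap.abs_apply, ContinuousMap.smul_apply, smul_eq_mul,
      neg_one_mul, abs_eq_max_neg]
  rwa [this] at hh

lemma zero_mem {A : Set C(X, ℝ)}
    (hAsmul : ∀ (c : ℝ), ∀ f ∈ A, c • f ∈ A)
    {f : C(X,ℝ)} (hf : f ∈ A) : (0 : C(X,ℝ)) ∈ A := by
  have := hAsmul 0 f hf
  rwa [zero_smul] at this

lemma exists_pos [Nonempty X] {A : Set C(X, ℝ)}
    (hAadd : ∀ f ∈ A, ∀ g ∈ A, f + g ∈ A)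
    (hAsmul : ∀ (c : ℝ), ∀ f ∈ A, c • f ∈ A)
    (hAmax : ∀ f ∈ A, ∀ g ∈ A, ∃ h ∈ A, ∀ x, h x = max (f x) (g x))
    (hAreg : ∀ (x : X), ∀ U ∈ nhds x, ∀ c : ℝ,
      ∃ f ∈ A, f x = c ∧ closure {x' | f x' ≠ 0} ⊆ U) :
    ∃ u ∈ A, ∀ x, 0 < u x := by
  have hch : ∀ x : X, ∃ f ∈ A, f x = 1 := by
    intro x
    obtain ⟨f, hfA, hfx, -⟩ := hAreg x univ univ_mem 1
    exact ⟨f, hfA, hfx⟩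
  choose e heA hex using hch
  have hUopen : ∀ x : X, IsOpen {x' | e x x' ≠ 0} := by
    intro x
    exact isOpen_ne.preimage (e x).continuous
  obtain ⟨s, hs⟩ := isCompact_univ.elim_finite_subcover (fun x => {x' | e x x' ≠ 0})
    hUopen (by intro x _; exact mem_iUnion.2 ⟨x, by simp [hex x]⟩)
  refine ⟨∑ x ∈ s, |e x|, ?_, ?_⟩
  · refine Finset.sum_induction _ (· ∈ A) (fun a b ha hb => hAadd a ha b hb)
      (zero_mem hAsmul (heA (Classical.arbitrary X))) ?_
    intro i _
    exact abs_mem hAsmul hAmax (heA i)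
  · intro x
    obtain ⟨i, his, hix⟩ : ∃ i ∈ s, e i x ≠ 0 := by
      have := hs (mem_univ x)
      simpa using this
    have : (∑ z ∈ s, |e z|) x = ∑ z ∈ s, |e z x| := by
      simp [ContinuousMap.sum_apply]
    rw [this]
    exact Finset.sum_pos' (fun z _ => abs_nonneg _) ⟨i, his, abs_pos.2 hix⟩

lemma dense_regular [Nonempty X] {A : Set C(X, ℝ)}
    (hAadd : ∀ f ∈ A, ∀ g ∈ A, f + g ∈ A)
    (hAsmul : ∀ (c : ℝ), ∀ f ∈ A, c • f ∈ A)
    (hAmax : ∀ f ∈ A, ∀ g ∈ A, ∃ h ∈ A, ∀ x, h x = max (f x) (g x))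
    (hAmin : ∀ f ∈ A, ∀ g ∈ A, ∃ h ∈ A, ∀ x, h x = min (f x) (g x))
    (hAreg : ∀ (x : X), ∀ U ∈ nhds x, ∀ c : ℝ,
      ∃ f ∈ A, f x = c ∧ closure {x' | f x' ≠ 0} ⊆ U) :
    Dense A := by
  have hne : A.Nonempty := by
    obtain ⟨f, hfA, -, -⟩ := hAreg (Classical.arbitrary X) univ univ_mem 1
    exact ⟨f, hfA⟩
  have hsup : ∀ f ∈ A, ∀ g ∈ A, f ⊔ g ∈ A := by
    intro f hf g hg
    obtain ⟨h, hh, hhx⟩ := hAmax f hf g hg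
    have : h = f ⊔ g := by ext x; simp [hhx x]
    rwa [this] at hh
  have hinf : ∀ f ∈ A, ∀ g ∈ A, f ⊓ g ∈ A := by
    intro f hf g hg
    obtain ⟨h, hh, hhx⟩ := hAmin f hf g hg
    have : h = f ⊓ g := by ext x; simp [hhx x]
    rwa [this] at hh
  have hsep : A.SeparatesPointsStrongly := by
    intro v x y
    by_cases hxy : x = y
    · subst hxy
      obtain ⟨f, hfA, hfx, -⟩ := hAreg x univ univ_mem (v x)
      exact ⟨f, hfA, hfx, hfx⟩
    · obtain ⟨U, V, hU, hV, hxU, hyV, hUV⟩ := t2_separation hxy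
      obtain ⟨f₁, hf₁, hf₁x, hs₁⟩ := hAreg x U (hU.mem_nhds hxU) (v x)
      obtain ⟨f₂, hf₂, hf₂y, hs₂⟩ := hAreg y V (hV.mem_nhds hyV) (v y)
      have hf₂x : f₂ x = 0 := by
        by_contra h
        exact (disjoint_left.1 hUV) hxU (hs₂ (subset_closure h))
      have hf₁y : f₁ y = 0 := by
        by_contra h
        exact (disjoint_left.1 hUV) (hs₁ (subset_closure h)) hyV
      refine ⟨f₁ + f₂, hAadd f₁ hf₁ f₂ hf₂, ?_, ?_⟩ <;>
        simp [hf₁x, hf₂y, hf₂x, hf₁y]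
  have := ContinuousMap.sublattice_closure_eq_top A hne hinf hsup hsep
  rw [dense_iff_closure_eq, this]
  rfl



/-- limit of a sequence equals any of its cluster points -/
lemma cluster_eq {α : Type*} [TopologicalSpace α] [T2Space α] {f : ℕ → α} {c l : α}
    (h1 : MapClusterPt c atTop f) (h2 : Tendsto f atTop (𝓝 l)) : c = l := by
  have hne : (𝓝 c ⊓ map f atTop).NeBot := h1
  have hle : 𝓝 c ⊓ map f atTop ≤ 𝓝 c ⊓ 𝓝 l := inf_le_inf_left _ h2
  exact eq_of_nhds_neBot (hne.mono hle)

/-- extension of isometries on dense sets, in sequential-limit form -/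
lemma exists_extension {α β : Type*} [MetricSpace α] [MetricSpace β] [CompleteSpace β]
    (D : Set α) (hD : Dense D) (Φ : α → β)
    (hiso : ∀ a ∈ D, ∀ b ∈ D, dist (Φ a) (Φ b) = dist a b) :
    ∃ Ψ : α → β, ∀ (h : α) (g : ℕ → α), (∀ n, g n ∈ D) →
      Tendsto g atTop (𝓝 h) → Tendsto (fun n => Φ (g n)) atTop (𝓝 (Ψ h)) := by
  have hsq : ∀ h : α, ∀ n : ℕ, ∃ g, g ∈ D ∧ dist g h < 1/(n+1) := by
    intro h n
    have : h ∈ closure D := hD h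
    rw [Metric.mem_closure_iff] at this
    obtain ⟨g, hgD, hgd⟩ := this (1/(n+1)) (by positivity)
    exact ⟨g, hgD, by rwa [dist_comm]⟩
  choose sq hsqD hsqd using hsq
  have hten : ∀ h : α, Tendsto (fun n => sq h n) atTop (𝓝 h) := by
    intro h
    rw [tendsto_iff_dist_tendsto_zero]
    refine squeeze_zero (fun n => dist_nonneg) (fun n => (hsqd h n).le) ?_
    exact tendsto_one_div_add_atTop_nhds_zero_nat
  have hcauchy : ∀ h : α, CauchySeq (fun n => Φ (sq h n)) := by
    intro h
    rw [Metric.cauchySeq_iff]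
    have hc := (hten h).cauchySeq
    rw [Metric.cauchySeq_iff] at hc
    intro ε hε
    obtain ⟨N, hN⟩ := hc ε hε
    exact ⟨N, fun m hm n hn => by
      rw [hiso _ (hsqD h m) _ (hsqD h n)]; exact hN m hm n hn⟩
  have hlim : ∀ h : α, ∃ l : β, Tendsto (fun n => Φ (sq h n)) atTop (𝓝 l) :=
    fun h => cauchySeq_tendsto_of_complete (hcauchy h)
  choose Ψ hΨ using hlim
  refine ⟨Ψ, fun h g hgD hg => ?_⟩
  refine tendsto_of_tendsto_of_dist (hΨ h) ?_
  have : ∀ n, dist (Φ (sq h n)) (Φ (g n)) = dist (sq h n) (g n) :=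
    fun n => hiso _ (hsqD h n) _ (hgD n)
  simp only [this]
  have := (hten h).dist hg
  simpa using this

variable {X : Type*} [TopologicalSpace X] [CompactSpace X] [T2Space X]

lemma sep_point {x x' : X} (h : ∀ h : C(X,ℝ), h x = h x') : x = x' := by
  by_contra hne
  obtain ⟨f, hf0, hf1, -⟩ := exists_continuous_zero_one_of_isClosed
    (isClosed_singleton (x := x)) (isClosed_singleton (x := x'))
    (by simpa [Set.disjoint_singleton] using hne)
  have := h f
  rw [hf0 rfl, hf1 rfl] at this
  exact zero_ne_one this

lemma norm_eq_of_ranges {Y : Type*} [TopologicalSpace Y] [CompactSpace Y]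
    (k₁ : C(X,ℝ)) (k₂ : C(Y,ℝ))
    (h : ∀ l : ℝ, (∃ x, k₁ x = l) ↔ (∃ y, k₂ y = l)) : ‖k₁‖ = ‖k₂‖ := by
  refine le_antisymm ?_ ?_
  · refine (ContinuousMap.norm_le _ (norm_nonneg k₂)).2 fun x => ?_
    obtain ⟨y, hy⟩ := (h (k₁ x)).1 ⟨x, rfl⟩
    rw [← hy]
    exact ContinuousMap.norm_coe_le_norm k₂ y
  · refine (ContinuousMap.norm_le _ (norm_nonneg k₁)).2 fun y => ?_
    obtain ⟨x, hx⟩ := (h (k₂ y)).2 ⟨y, rfl⟩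
    rw [← hx]
    exact ContinuousMap.norm_coe_le_norm k₁ x

/-- a unital positive lattice-respecting linear map is pointwise a point evaluation -/
lemma point_eval {Y : Type*} [TopologicalSpace Y] [CompactSpace Y] [T2Space Y] [Nonempty X]
    (Φ : C(X,ℝ) → C(Y,ℝ))
    (hadd : ∀ a b, Φ (a+b) = Φ a + Φ b) (hsmul : ∀ (c:ℝ) (a), Φ (c•a) = c • Φ a)
    (hone : Φ 1 = 1) (habs : ∀ a, Φ |a| = |Φ a|)
    (hpos : ∀ a : C(X,ℝ), (∀ x, 0 ≤ a x) → ∀ y, 0 ≤ Φ a y)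
    (y : Y) : ∃ x, ∀ h : C(X,ℝ), h x = Φ h y := by
  have hzero : Φ 0 = 0 := by
    have := hsmul 0 0; rwa [zero_smul, zero_smul] at this
  have hsum : ∀ (t : Finset C(X,ℝ)) (k : C(X,ℝ) → C(X,ℝ)),
      Φ (∑ h ∈ t, k h) = ∑ h ∈ t, Φ (k h) := by
    intro t k
    classical
    induction t using Finset.cons_induction with
    | empty => simpa using hzero
    | cons a s ha ih => rw [Finset.sum_cons, hadd, ih, Finset.sum_cons]
  set F : C(X,ℝ) → Set X := fun h => {x | h x = Φ h y} with hF
  have hFclosed : ∀ h, IsClosed (F h) := by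
    intro h
    have : F h = (fun x => h x - Φ h y) ⁻¹' {0} := by
      ext x; simp [hF, sub_eq_zero]
    rw [this]
    exact IsClosed.preimage (by continuity) isClosed_singleton
  have hGne : ∀ t : Finset C(X,ℝ), (⋂ h ∈ t, F h).Nonempty := by
    intro t
    by_contra hemp
    rw [Set.not_nonempty_iff_eq_empty] at hemp
    set w : C(X,ℝ) := ∑ h ∈ t, |h - (Φ h y) • 1| with hw
    have hwx : ∀ x, w x = ∑ h ∈ t, |h x - Φ h y| := by
      intro x
      simp [hw, ContinuousMap.sum_apply]
    have hwpos : ∀ x, 0 < w x := by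
      intro x
      have hx : ∃ h ∈ t, h x ≠ Φ h y := by
        by_contra hc
        push_neg at hc
        have : x ∈ ⋂ h ∈ t, F h := by
          simp only [mem_iInter]
          intro h ht; exact hc h ht
        simp [hemp] at this
      obtain ⟨h, hht, hhx⟩ := hx
      rw [hwx x]
      exact Finset.sum_pos' (fun z _ => abs_nonneg _) ⟨h, hht, abs_pos.2 (sub_ne_zero.2 hhx)⟩
    -- w attains a positive minimum δ
    obtain ⟨x₀, -, hx₀⟩ := isCompact_univ.exists_isMinOn univ_nonempty
      (w.continuous.continuousOn)
    set δ := w x₀ with hδ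
    have hδpos : 0 < δ := hwpos x₀
    -- key rewriting fact
    have key : ∀ (h : C(X,ℝ)) (c : ℝ), Φ (h - c • 1) = Φ h - c • 1 := by
      intro h c
      have h1 : h - c • 1 = h + (-c) • (1 : C(X,ℝ)) := by ext x; simp; ring
      rw [h1, hadd, hsmul, hone]
      ext z; simp; ring
    have keyabs : ∀ (h : C(X,ℝ)) (c : ℝ), Φ |h - c • 1| = |Φ h - c • 1| := by
      intro h c
      rw [habs, key]
    have hΦw : Φ w y = 0 := by
      have hw2 : Φ w = ∑ h ∈ t, |Φ h - (Φ h y) • 1| := by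
        rw [hw, hsum]
        exact Finset.sum_congr rfl fun h _ => keyabs h (Φ h y)
      rw [hw2]
      have : (∑ h ∈ t, |Φ h - (Φ h y) • 1|) y = ∑ h ∈ t, |Φ h y - Φ h y| := by
        simp [ContinuousMap.sum_apply]
      rw [this]
      simp
    have hge : ∀ x, 0 ≤ (w - δ • 1) x := by
      intro x
      have : δ ≤ w x := hx₀ (mem_univ x)
      simp only [ContinuousMap.sub_apply, ContinuousMap.smul_apply, ContinuousMap.one_apply,
        smul_eq_mul, mul_one]
      linarith
    have hposy := hpos _ hge y
    rw [key w δ] at hposy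
    simp only [ContinuousMap.sub_apply, ContinuousMap.smul_apply, ContinuousMap.one_apply,
      smul_eq_mul, mul_one, hΦw] at hposy
    linarith
  classical
  have hdir : Directed (· ⊇ ·) (fun t : Finset C(X,ℝ) => ⋂ h ∈ t, F h) := by
    intro t t'
    refine ⟨t ∪ t', ?_, ?_⟩ <;>
    · intro x hx
      simp only [mem_iInter] at hx ⊢
      intro h hh
      exact hx h (by simp [hh])
  have hclosed : ∀ t : Finset C(X,ℝ), IsClosed (⋂ h ∈ t, F h) :=
    fun t => isClosed_biInter fun h _ => hFclosed h
  obtain ⟨x, hx⟩ := IsCompact.nonempty_iInter_of_directed_nonempty_isCompact_isClosed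
    (fun t : Finset C(X,ℝ) => ⋂ h ∈ t, F h) hdir hGne
    (fun t => (hclosed t).isCompact) hclosed
  refine ⟨x, fun h => ?_⟩
  have := mem_iInter.1 hx {h}
  simp only [Finset.mem_singleton, mem_iInter] at this
  exact this h rfl

lemma dense_seq {α : Type*} [MetricSpace α] (D : Set α) (hD : Dense D) (h : α) :
    ∃ g : ℕ → α, (∀ n, g n ∈ D) ∧ Tendsto g atTop (𝓝 h) := by
  have hsq : ∀ n : ℕ, ∃ g, g ∈ D ∧ dist g h < 1/(n+1) := by
    intro n
    have : h ∈ closure D := hD h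
    rw [Metric.mem_closure_iff] at this
    obtain ⟨g, hgD, hgd⟩ := this (1/(n+1)) (by positivity)
    exact ⟨g, hgD, by rwa [dist_comm]⟩
  choose g hgD hgd using hsq
  refine ⟨g, hgD, ?_⟩
  rw [tendsto_iff_dist_tendsto_zero]
  exact squeeze_zero (fun n => dist_nonneg) (fun n => (hgd n).le)
    tendsto_one_div_add_atTop_nhds_zero_nat

theorem main {X Y : Type*}
    [TopologicalSpace X] [CompactSpace X] [T2Space X]
    [TopologicalSpace Y] [CompactSpace Y] [T2Space Y]
    [Nonempty X] [Nonempty Y]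
    (A : Set C(X, ℝ)) (B : Set C(Y, ℝ))
    (hAadd : ∀ f ∈ A, ∀ g ∈ A, f + g ∈ A) (hAsmul : ∀ (c : ℝ), ∀ f ∈ A, c • f ∈ A)
    (hAmax : ∀ f ∈ A, ∀ g ∈ A, ∃ h ∈ A, ∀ x, h x = max (f x) (g x))
    (hAmin : ∀ f ∈ A, ∀ g ∈ A, ∃ h ∈ A, ∀ x, h x = min (f x) (g x))
    (hBadd : ∀ f ∈ B, ∀ g ∈ B, f + g ∈ B) (hBsmul : ∀ (c : ℝ), ∀ f ∈ B, c • f ∈ B)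
    (hBmax : ∀ f ∈ B, ∀ g ∈ B, ∃ h ∈ B, ∀ y, h y = max (f y) (g y))
    (hBmin : ∀ f ∈ B, ∀ g ∈ B, ∃ h ∈ B, ∀ y, h y = min (f y) (g y))
    (hAreg : ∀ (x : X), ∀ U ∈ nhds x, ∀ c : ℝ,
      ∃ f ∈ A, f x = c ∧ closure {x' | f x' ≠ 0} ⊆ U)
    (hBreg : ∀ (y : Y), ∀ U ∈ nhds y, ∀ c : ℝ,
      ∃ g ∈ B, g y = c ∧ closure {y' | g y' ≠ 0} ⊆ U)
    (T : C(X, ℝ) → C(Y, ℝ))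
    (hTbij : Set.BijOn T A B)
    (hTadd : ∀ f ∈ A, ∀ g ∈ A, T (f + g) = T f + T g)
    (hTsmul : ∀ (c : ℝ), ∀ f ∈ A, T (c • f) = c • T f)
    (hTnv : ∀ f ∈ A, ((∃ x, f x = 0) ↔ (∃ y, T f y = 0))) :
    ∃ (φ : Y ≃ₜ X) (p : Y → ℝ), Continuous p ∧ (∀ y, p y ≠ 0) ∧
      ∀ f ∈ A, ∀ y, T f y = p y * f (φ y) := by
  classical
  obtain ⟨u, huA, hupos⟩ := exists_pos hAadd hAsmul hAmax hAreg
  set v : C(Y,ℝ) := T u with hv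
  have hvB : v ∈ B := hTbij.mapsTo huA
  have hvnz : ∀ y, v y ≠ 0 := by
    intro y hy
    have h1 : ¬ ∃ x, u x = 0 := fun ⟨x, hx⟩ => (hupos x).ne' hx
    exact h1 ((hTnv u huA).mpr ⟨y, hy⟩)
  set uinv : C(X,ℝ) := ⟨fun x => (u x)⁻¹,
    u.continuous.inv₀ (fun x => (hupos x).ne')⟩ with huinv
  set vinv : C(Y,ℝ) := ⟨fun y => (v y)⁻¹, v.continuous.inv₀ hvnz⟩ with hvinv
  have huu : ∀ w : C(X,ℝ), u * (uinv * w) = w := by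
    intro w; ext x
    simp only [ContinuousMap.mul_apply, huinv, ContinuousMap.coe_mk]
    exact mul_inv_cancel_left₀ (hupos x).ne' (w x)
  have huu' : ∀ w : C(X,ℝ), uinv * (u * w) = w := by
    intro w; ext x
    simp only [ContinuousMap.mul_apply, huinv, ContinuousMap.coe_mk]
    exact inv_mul_cancel_left₀ (hupos x).ne' (w x)
  have hvv : ∀ w : C(Y,ℝ), v * (vinv * w) = w := by
    intro w; ext y
    simp only [ContinuousMap.mul_apply, hvinv, ContinuousMap.coe_mk]
    exact mul_inv_cancel_left₀ (hvnz y) (w y)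
  have hvv' : ∀ w : C(Y,ℝ), vinv * (v * w) = w := by
    intro w; ext y
    simp only [ContinuousMap.mul_apply, hvinv, ContinuousMap.coe_mk]
    exact inv_mul_cancel_left₀ (hvnz y) (w y)
  -- inverse of T
  set Tinv : C(Y,ℝ) → C(X,ℝ) := Function.invFunOn T A with hTinv
  have hTleft : ∀ f ∈ A, Tinv (T f) = f := fun f hf => hTbij.invOn_invFunOn.1 hf
  have hTright : ∀ k ∈ B, T (Tinv k) = k := fun k hk => hTbij.invOn_invFunOn.2 hk
  have hTinvmem : ∀ k ∈ B, Tinv k ∈ A := fun k hk => hTbij.surjOn.mapsTo_invFunOn hk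
  -- the weighted transforms
  set A' : Set C(X,ℝ) := {g | u * g ∈ A} with hA'
  set B' : Set C(Y,ℝ) := {k | v * k ∈ B} with hB'
  set Ttil : C(X,ℝ) → C(Y,ℝ) := fun g => vinv * T (u * g) with hTtil
  set Stil : C(Y,ℝ) → C(X,ℝ) := fun k => uinv * Tinv (v * k) with hStil
  have hTtilmem : ∀ g ∈ A', Ttil g ∈ B' := by
    intro g hg
    show v * (vinv * T (u * g)) ∈ B
    rw [hvv]
    exact hTbij.mapsTo hg
  have hStilmem : ∀ k ∈ B', Stil k ∈ A' := by
    intro k hk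
    show u * (uinv * Tinv (v * k)) ∈ A
    rw [huu]
    exact hTinvmem _ hk
  have hST : ∀ g ∈ A', Stil (Ttil g) = g := by
    intro g hg
    show uinv * Tinv (v * (vinv * T (u * g))) = g
    rw [hvv, hTleft _ hg, huu']
  have hTS : ∀ k ∈ B', Ttil (Stil k) = k := by
    intro k hk
    show vinv * T (u * (uinv * Tinv (v * k))) = k
    rw [huu, hTright _ hk, hvv']
  have hA'add : ∀ g ∈ A', ∀ g' ∈ A', g + g' ∈ A' := by
    intro g hg g' hg'
    show u * (g + g') ∈ A
    rw [mul_add]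
    exact hAadd _ hg _ hg'
  have hA'smul : ∀ (c : ℝ), ∀ g ∈ A', c • g ∈ A' := by
    intro c g hg
    show u * (c • g) ∈ A
    rw [mul_smul_comm]
    exact hAsmul c _ hg
  have hTtiladd : ∀ g ∈ A', ∀ g' ∈ A', Ttil (g + g') = Ttil g + Ttil g' := by
    intro g hg g' hg'
    show vinv * T (u * (g + g')) = vinv * T (u * g) + vinv * T (u * g')
    rw [mul_add, hTadd _ hg _ hg', mul_add]
  have hTtilsmul : ∀ (c : ℝ), ∀ g ∈ A', Ttil (c • g) = c • Ttil g := by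
    intro c g hg
    show vinv * T (u * (c • g)) = c • (vinv * T (u * g))
    rw [mul_smul_comm, hTsmul c _ hg, mul_smul_comm]
  have hB'add : ∀ k ∈ B', ∀ k' ∈ B', k + k' ∈ B' := by
    intro k hk k' hk'
    show v * (k + k') ∈ B
    rw [mul_add]
    exact hBadd _ hk _ hk'
  have hStiladd : ∀ k ∈ B', ∀ k' ∈ B', Stil (k + k') = Stil k + Stil k' := by
    intro k hk k' hk'
    obtain ⟨f, hfA, hf⟩ := hTbij.surjOn hk
    obtain ⟨f', hf'A, hf'⟩ := hTbij.surjOn hk'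
    show uinv * Tinv (v * (k + k')) = uinv * Tinv (v * k) + uinv * Tinv (v * k')
    rw [mul_add, ← hf, ← hf', ← hTadd _ hfA _ hf'A, hTleft _ (hAadd _ hfA _ hf'A),
      hTleft _ hfA, hTleft _ hf'A, mul_add]
  have hStilsmul : ∀ (c : ℝ), ∀ k ∈ B', Stil (c • k) = c • Stil k := by
    intro c k hk
    obtain ⟨f, hfA, hf⟩ := hTbij.surjOn hk
    show uinv * Tinv (v * (c • k)) = c • (uinv * Tinv (v * k))
    rw [mul_smul_comm, ← hf, ← hTsmul c _ hfA, hTleft _ (hAsmul c _ hfA),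
      hTleft _ hfA, mul_smul_comm]
  -- range preservation on A' and B'
  have hTtilrange : ∀ g ∈ A', ∀ l : ℝ, (∃ x, g x = l) ↔ (∃ y, Ttil g y = l) := by
    intro g hg l
    have hqA : (l • u + (-1 : ℝ) • (u * g)) ∈ A :=
      hAadd _ (hAsmul l u huA) _ (hAsmul (-1) _ hg)
    have hTq : T (l • u + (-1 : ℝ) • (u * g)) = l • v + (-1 : ℝ) • T (u * g) := by
      rw [hTadd _ (hAsmul l u huA) _ (hAsmul (-1) _ hg), hTsmul l u huA,
        hTsmul (-1) _ hg, hv]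
    have := hTnv _ hqA
    rw [hTq] at this
    constructor
    · rintro ⟨x, hx⟩
      obtain ⟨y, hy⟩ := this.1 ⟨x, by
        simp only [ContinuousMap.add_apply, ContinuousMap.smul_apply,
          ContinuousMap.mul_apply, smul_eq_mul, hx]
        ring⟩
      refine ⟨y, ?_⟩
      simp only [ContinuousMap.add_apply, ContinuousMap.smul_apply, smul_eq_mul,
        neg_one_mul] at hy
      show (v y)⁻¹ * T (u * g) y = l
      have h1 : T (u * g) y = l * v y := by linarith
      rw [h1, mul_comm l (v y), inv_mul_cancel_left₀ (hvnz y)]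
    · rintro ⟨y, hy⟩
      have hy0 : (v y)⁻¹ * T (u * g) y = l := hy
      have hy' : T (u * g) y = l * v y := by
        have h0 : v y * ((v y)⁻¹ * T (u * g) y) = v y * l := by rw [hy0]
        rwa [mul_inv_cancel_left₀ (hvnz y), mul_comm (v y) l] at h0
      obtain ⟨x, hx⟩ := this.2 ⟨y, by
        simp only [ContinuousMap.add_apply, ContinuousMap.smul_apply, smul_eq_mul,
          neg_one_mul, hy']
        ring⟩
      refine ⟨x, mul_left_cancel₀ (hupos x).ne' ?_⟩
      simp only [ContinuousMap.add_apply, ContinuousMap.smul_apply,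
        ContinuousMap.mul_apply, smul_eq_mul, neg_one_mul] at hx
      linarith
  have hStilrange : ∀ k ∈ B', ∀ l : ℝ, (∃ y, k y = l) ↔ (∃ x, Stil k x = l) := by
    intro k hk l
    have hmem : Tinv (v * k) ∈ A := hTinvmem _ hk
    have hqA : (l • u + (-1 : ℝ) • Tinv (v * k)) ∈ A :=
      hAadd _ (hAsmul l u huA) _ (hAsmul (-1) _ hmem)
    have hTq : T (l • u + (-1 : ℝ) • Tinv (v * k)) = l • v + (-1 : ℝ) • (v * k) := by
      rw [hTadd _ (hAsmul l u huA) _ (hAsmul (-1) _ hmem), hTsmul l u huA,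
        hTsmul (-1) _ hmem, hTright _ hk, hv]
    have hiff := hTnv _ hqA
    rw [hTq] at hiff
    constructor
    · rintro ⟨y, hy⟩
      obtain ⟨x, hx⟩ := hiff.2 ⟨y, by
        simp only [ContinuousMap.add_apply, ContinuousMap.smul_apply,
          ContinuousMap.mul_apply, smul_eq_mul, neg_one_mul, hy]
        ring⟩
      refine ⟨x, ?_⟩
      simp only [ContinuousMap.add_apply, ContinuousMap.smul_apply, smul_eq_mul,
        neg_one_mul] at hx
      show (u x)⁻¹ * Tinv (v * k) x = l
      have h1 : Tinv (v * k) x = l * u x := by linarith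
      rw [h1, mul_comm l (u x), inv_mul_cancel_left₀ (hupos x).ne']
    · rintro ⟨x, hx⟩
      have hx0 : (u x)⁻¹ * Tinv (v * k) x = l := hx
      have hx' : Tinv (v * k) x = l * u x := by
        have h0 : u x * ((u x)⁻¹ * Tinv (v * k) x) = u x * l := by rw [hx0]
        rwa [mul_inv_cancel_left₀ (hupos x).ne', mul_comm (u x) l] at h0
      obtain ⟨y, hy⟩ := hiff.1 ⟨x, by
        simp only [ContinuousMap.add_apply, ContinuousMap.smul_apply, smul_eq_mul,
          neg_one_mul, hx']
        ring⟩
      refine ⟨y, mul_left_cancel₀ (hvnz y) ?_⟩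
      simp only [ContinuousMap.add_apply, ContinuousMap.smul_apply,
        ContinuousMap.mul_apply, smul_eq_mul, neg_one_mul] at hy
      linarith
  have h1A' : (1 : C(X,ℝ)) ∈ A' := by
    show u * 1 ∈ A; rwa [mul_one]
  have hTtil1 : Ttil (1 : C(X,ℝ)) = 1 := by
    show vinv * T (u * 1) = 1
    rw [mul_one, ← hv]
    ext y
    exact inv_mul_cancel₀ (hvnz y)
  have hA'sub : ∀ g ∈ A', ∀ g' ∈ A', g - g' ∈ A' := by
    intro g hg g' hg'
    have h2 : g - g' = g + (-1 : ℝ) • g' := by ext x; simp; ring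
    rw [h2]; exact hA'add _ hg _ (hA'smul _ _ hg')
  have hTtilsub : ∀ g ∈ A', ∀ g' ∈ A', Ttil (g - g') = Ttil g - Ttil g' := by
    intro g hg g' hg'
    have h2 : g - g' = g + (-1 : ℝ) • g' := by ext x; simp; ring
    rw [h2, hTtiladd _ hg _ (hA'smul _ _ hg'), hTtilsmul _ _ hg']
    ext y; simp; ring
  have hTtiliso : ∀ g ∈ A', ∀ g' ∈ A', dist (Ttil g) (Ttil g') = dist g g' := by
    intro g hg g' hg'
    rw [dist_eq_norm, dist_eq_norm, ← hTtilsub _ hg _ hg']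
    exact (norm_eq_of_ranges _ _ (hTtilrange _ (hA'sub _ hg _ hg'))).symm
  have hB'smul : ∀ (c : ℝ), ∀ k ∈ B', c • k ∈ B' := by
    intro c k hk
    show v * (c • k) ∈ B
    rw [mul_smul_comm]
    exact hBsmul c _ hk
  have hB'sub : ∀ k ∈ B', ∀ k' ∈ B', k - k' ∈ B' := by
    intro k hk k' hk'
    have h2 : k - k' = k + (-1 : ℝ) • k' := by ext y; simp; ring
    rw [h2]; exact hB'add _ hk _ (hB'smul _ _ hk')
  have hStilsub : ∀ k ∈ B', ∀ k' ∈ B', Stil (k - k') = Stil k - Stil k' := by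
    intro k hk k' hk'
    have h2 : k - k' = k + (-1 : ℝ) • k' := by ext y; simp; ring
    rw [h2, hStiladd _ hk _ (hB'smul _ _ hk'), hStilsmul _ _ hk']
    ext x; simp; ring
  have hStiliso : ∀ k ∈ B', ∀ k' ∈ B', dist (Stil k) (Stil k') = dist k k' := by
    intro k hk k' hk'
    rw [dist_eq_norm, dist_eq_norm, ← hStilsub _ hk _ hk']
    exact (norm_eq_of_ranges _ _ (hStilrange _ (hB'sub _ hk _ hk'))).symm
  -- density
  have hDA : Dense A := dense_regular hAadd hAsmul hAmax hAmin hAreg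
  have hDB : Dense B := dense_regular hBadd hBsmul hBmax hBmin hBreg
  have hmdX : ∀ (c a b : C(X,ℝ)), dist (c*a) (c*b) ≤ ‖c‖ * dist a b := by
    intro c a b
    rw [dist_eq_norm, dist_eq_norm, ← mul_sub]
    exact norm_mul_le _ _
  have hmdY : ∀ (c a b : C(Y,ℝ)), dist (c*a) (c*b) ≤ ‖c‖ * dist a b := by
    intro c a b
    rw [dist_eq_norm, dist_eq_norm, ← mul_sub]
    exact norm_mul_le _ _
  have hDA' : Dense A' := by
    intro h
    rw [Metric.mem_closure_iff]
    intro ε hε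
    have hC : (0:ℝ) < ‖uinv‖ + 1 := by positivity
    obtain ⟨f, hfA, hfd⟩ := Metric.mem_closure_iff.1 (hDA (u * h)) (ε / (‖uinv‖+1))
      (by positivity)
    refine ⟨uinv * f, ?_, ?_⟩
    · show u * (uinv * f) ∈ A
      rw [huu]; exact hfA
    · calc dist h (uinv * f) = dist (uinv * (u*h)) (uinv * f) := by rw [huu']
        _ ≤ ‖uinv‖ * dist (u*h) f := hmdX _ _ _
        _ ≤ ‖uinv‖ * (ε / (‖uinv‖+1)) := mul_le_mul_of_nonneg_left hfd.le (norm_nonneg _)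
        _ < (‖uinv‖+1) * (ε / (‖uinv‖+1)) := by
            exact mul_lt_mul_of_pos_right (by linarith) (by positivity)
        _ = ε := by field_simp
  have hDB' : Dense B' := by
    intro h
    rw [Metric.mem_closure_iff]
    intro ε hε
    have hC : (0:ℝ) < ‖vinv‖ + 1 := by positivity
    obtain ⟨f, hfB, hfd⟩ := Metric.mem_closure_iff.1 (hDB (v * h)) (ε / (‖vinv‖+1))
      (by positivity)
    refine ⟨vinv * f, ?_, ?_⟩
    · show v * (vinv * f) ∈ B
      rw [hvv]; exact hfB
    · calc dist h (vinv * f) = dist (vinv * (v*h)) (vinv * f) := by rw [hvv']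
        _ ≤ ‖vinv‖ * dist (v*h) f := hmdY _ _ _
        _ ≤ ‖vinv‖ * (ε / (‖vinv‖+1)) := mul_le_mul_of_nonneg_left hfd.le (norm_nonneg _)
        _ < (‖vinv‖+1) * (ε / (‖vinv‖+1)) := by
            exact mul_lt_mul_of_pos_right (by linarith) (by positivity)
        _ = ε := by field_simp
  -- extensions
  obtain ⟨Tbar, hCT⟩ := exists_extension A' hDA' Ttil hTtiliso
  obtain ⟨Sbar, hCS⟩ := exists_extension B' hDB' Stil hStiliso
  have hseqA : ∀ h : C(X,ℝ), ∃ g : ℕ → C(X,ℝ), (∀ n, g n ∈ A') ∧ Tendsto g atTop (𝓝 h) :=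
    fun h => dense_seq A' hDA' h
  have hseqB : ∀ h : C(Y,ℝ), ∃ g : ℕ → C(Y,ℝ), (∀ n, g n ∈ B') ∧ Tendsto g atTop (𝓝 h) :=
    fun h => dense_seq B' hDB' h
  have hTbarA' : ∀ g ∈ A', Tbar g = Ttil g := by
    intro g hg
    exact tendsto_nhds_unique (hCT g (fun _ => g) (fun _ => hg) tendsto_const_nhds)
      tendsto_const_nhds
  have hSbarB' : ∀ k ∈ B', Sbar k = Stil k := by
    intro k hk
    exact tendsto_nhds_unique (hCS k (fun _ => k) (fun _ => hk) tendsto_const_nhds)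
      tendsto_const_nhds
  have hTbaradd : ∀ a b : C(X,ℝ), Tbar (a + b) = Tbar a + Tbar b := by
    intro a b
    obtain ⟨ga, hgaA, hga⟩ := hseqA a
    obtain ⟨gb, hgbA, hgb⟩ := hseqA b
    have h1 := hCT (a+b) (fun n => ga n + gb n)
      (fun n => hA'add _ (hgaA n) _ (hgbA n)) (hga.add hgb)
    have h2 : Tendsto (fun n => Ttil (ga n + gb n)) atTop (𝓝 (Tbar a + Tbar b)) := by
      have he : ∀ n, Ttil (ga n + gb n) = Ttil (ga n) + Ttil (gb n) :=
        fun n => hTtiladd _ (hgaA n) _ (hgbA n)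
      simp only [he]
      exact (hCT a ga hgaA hga).add (hCT b gb hgbA hgb)
    exact tendsto_nhds_unique h1 h2
  have hTbarsmul : ∀ (c : ℝ) (a : C(X,ℝ)), Tbar (c • a) = c • Tbar a := by
    intro c a
    obtain ⟨ga, hgaA, hga⟩ := hseqA a
    have h1 := hCT (c • a) (fun n => c • ga n)
      (fun n => hA'smul _ _ (hgaA n)) (hga.const_smul c)
    have h2 : Tendsto (fun n => Ttil (c • ga n)) atTop (𝓝 (c • Tbar a)) := by
      have he : ∀ n, Ttil (c • ga n) = c • Ttil (ga n) :=
        fun n => hTtilsmul _ _ (hgaA n)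
      simp only [he]
      exact (hCT a ga hgaA hga).const_smul c
    exact tendsto_nhds_unique h1 h2
  have hTbar1 : Tbar 1 = 1 := by rw [hTbarA' 1 h1A', hTtil1]
  have hTbar0 : Tbar 0 = 0 := by
    have := hTbarsmul 0 0
    rwa [zero_smul, zero_smul] at this
  -- range preservation for Tbar
  have hTbarrange : ∀ (h : C(X,ℝ)) (l : ℝ), (∃ x, h x = l) ↔ (∃ y, Tbar h y = l) := by
    intro h l
    obtain ⟨g, hgA, hg⟩ := hseqA h
    have hTg := hCT h g hgA hg
    constructor
    · rintro ⟨x, rfl⟩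
      have hln : Tendsto (fun n => g n x) atTop (𝓝 (h x)) := by
        rw [tendsto_iff_dist_tendsto_zero]
        exact squeeze_zero (fun n => dist_nonneg)
          (fun n => ContinuousMap.dist_apply_le_dist x)
          (tendsto_iff_dist_tendsto_zero.1 hg)
      have hyn : ∀ n, ∃ y, Ttil (g n) y = g n x :=
        fun n => (hTtilrange _ (hgA n) (g n x)).1 ⟨x, rfl⟩
      choose yn hyn using hyn
      obtain ⟨y, -, hy⟩ := isCompact_univ.exists_mapClusterPt (f := atTop) (u := yn)
        (le_principal_iff.2 univ_mem)
      refine ⟨y, ?_⟩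
      have h2 : Tendsto (fun n => Tbar h (yn n)) atTop (𝓝 (h x)) := by
        rw [tendsto_iff_dist_tendsto_zero]
        have hb : ∀ n, dist (Tbar h (yn n)) (h x) ≤
            dist (Ttil (g n)) (Tbar h) + dist (g n x) (h x) := by
          intro n
          calc dist (Tbar h (yn n)) (h x)
              ≤ dist (Tbar h (yn n)) (Ttil (g n) (yn n)) + dist (Ttil (g n) (yn n)) (h x) :=
                dist_triangle _ _ _
            _ ≤ dist (Ttil (g n)) (Tbar h) + dist (g n x) (h x) := by
                refine add_le_add ?_ ?_
                · rw [dist_comm (Tbar h (yn n))]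
                  exact ContinuousMap.dist_apply_le_dist _
                · rw [hyn n]
        refine squeeze_zero (fun n => dist_nonneg) hb ?_
        have t1 : Tendsto (fun n => dist (Ttil (g n)) (Tbar h)) atTop (𝓝 0) :=
          tendsto_iff_dist_tendsto_zero.1 hTg
        have t2 : Tendsto (fun n => dist (g n x) (h x)) atTop (𝓝 0) :=
          tendsto_iff_dist_tendsto_zero.1 hln
        simpa using t1.add t2
      have h3 : MapClusterPt (Tbar h y) atTop (fun n => Tbar h (yn n)) :=
        hy.tendsto_comp ((Tbar h).continuous.tendsto y)
      exact cluster_eq h3 h2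
    · rintro ⟨y, rfl⟩
      have hln : Tendsto (fun n => Ttil (g n) y) atTop (𝓝 (Tbar h y)) := by
        rw [tendsto_iff_dist_tendsto_zero]
        exact squeeze_zero (fun n => dist_nonneg)
          (fun n => ContinuousMap.dist_apply_le_dist y)
          (tendsto_iff_dist_tendsto_zero.1 hTg)
      have hxn : ∀ n, ∃ x, g n x = Ttil (g n) y :=
        fun n => (hTtilrange _ (hgA n) _).2 ⟨y, rfl⟩
      choose xn hxn using hxn
      obtain ⟨x, -, hx⟩ := isCompact_univ.exists_mapClusterPt (f := atTop) (u := xn)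
        (le_principal_iff.2 univ_mem)
      refine ⟨x, ?_⟩
      have h2 : Tendsto (fun n => h (xn n)) atTop (𝓝 (Tbar h y)) := by
        rw [tendsto_iff_dist_tendsto_zero]
        have hb : ∀ n, dist (h (xn n)) (Tbar h y) ≤
            dist (g n) h + dist (Ttil (g n) y) (Tbar h y) := by
          intro n
          calc dist (h (xn n)) (Tbar h y)
              ≤ dist (h (xn n)) (g n (xn n)) + dist (g n (xn n)) (Tbar h y) :=
                dist_triangle _ _ _
            _ ≤ dist (g n) h + dist (Ttil (g n) y) (Tbar h y) := by
                refine add_le_add ?_ ?_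
                · rw [dist_comm (h (xn n))]
                  exact ContinuousMap.dist_apply_le_dist _
                · rw [hxn n]
        refine squeeze_zero (fun n => dist_nonneg) hb ?_
        have t1 : Tendsto (fun n => dist (g n) h) atTop (𝓝 0) :=
          tendsto_iff_dist_tendsto_zero.1 hg
        have t2 : Tendsto (fun n => dist (Ttil (g n) y) (Tbar h y)) atTop (𝓝 0) :=
          tendsto_iff_dist_tendsto_zero.1 hln
        simpa using t1.add t2
      have h3 : MapClusterPt (h x) atTop (fun n => h (xn n)) :=
        hx.tendsto_comp (h.continuous.tendsto x)
      exact cluster_eq h3 h2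
  -- inverse relations
  have hSTbar : ∀ h : C(X,ℝ), Sbar (Tbar h) = h := by
    intro h
    obtain ⟨g, hgA, hg⟩ := hseqA h
    have h1 := hCT h g hgA hg
    have h2 := hCS (Tbar h) (fun n => Ttil (g n)) (fun n => hTtilmem _ (hgA n)) h1
    have h3 : Tendsto (fun n => Stil (Ttil (g n))) atTop (𝓝 h) := by
      have he : ∀ n, Stil (Ttil (g n)) = g n := fun n => hST _ (hgA n)
      simp only [he]
      exact hg
    exact tendsto_nhds_unique h2 h3
  have hTSbar : ∀ k : C(Y,ℝ), Tbar (Sbar k) = k := by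
    intro k
    obtain ⟨g, hgB, hg⟩ := hseqB k
    have h1 := hCS k g hgB hg
    have h2 := hCT (Sbar k) (fun n => Stil (g n)) (fun n => hStilmem _ (hgB n)) h1
    have h3 : Tendsto (fun n => Ttil (Stil (g n))) atTop (𝓝 k) := by
      have he : ∀ n, Ttil (Stil (g n)) = g n := fun n => hTS _ (hgB n)
      simp only [he]
      exact hg
    exact tendsto_nhds_unique h2 h3
  have hTbarinj : Function.Injective Tbar := by
    intro a b hab
    rw [← hSTbar a, hab, hSTbar b]
  -- order and lattice
  have hTbarpos : ∀ h : C(X,ℝ), (∀ x, 0 ≤ h x) ↔ (∀ y, 0 ≤ Tbar h y) := by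
    intro h
    constructor
    · intro hp y
      obtain ⟨x, hx⟩ := (hTbarrange h (Tbar h y)).2 ⟨y, rfl⟩
      rw [← hx]; exact hp x
    · intro hp x
      obtain ⟨y, hy⟩ := (hTbarrange h (h x)).1 ⟨x, rfl⟩
      rw [← hy]; exact hp y
  have hTbarsub : ∀ a b : C(X,ℝ), Tbar (a - b) = Tbar a - Tbar b := by
    intro a b
    have h2 : a - b = a + (-1 : ℝ) • b := by ext x; simp; ring
    rw [h2, hTbaradd, hTbarsmul]
    ext y; simp; ring
  have hTbarmono : ∀ a b : C(X,ℝ), a ≤ b → Tbar a ≤ Tbar b := by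
    intro a b hab
    rw [ContinuousMap.le_def] at hab ⊢
    intro y
    have h0 : ∀ x, 0 ≤ (b - a) x := by
      intro x
      simp only [ContinuousMap.sub_apply, sub_nonneg]
      exact hab x
    have h1 := (hTbarpos (b - a)).1 h0 y
    rw [hTbarsub] at h1
    simp only [ContinuousMap.sub_apply, sub_nonneg] at h1
    exact h1
  have hTbarmono' : ∀ a b : C(X,ℝ), Tbar a ≤ Tbar b → a ≤ b := by
    intro a b hab
    rw [ContinuousMap.le_def] at hab ⊢
    intro x
    have h0 : ∀ y, 0 ≤ (Tbar b - Tbar a) y := by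
      intro y
      simp only [ContinuousMap.sub_apply, sub_nonneg]
      exact hab y
    have h0' : ∀ y, 0 ≤ Tbar (b - a) y := by
      intro y
      rw [hTbarsub]
      exact h0 y
    have h1 := (hTbarpos (b - a)).2 h0' x
    simp only [ContinuousMap.sub_apply, sub_nonneg] at h1
    exact h1
  have hTbarsup : ∀ a b : C(X,ℝ), Tbar (a ⊔ b) = Tbar a ⊔ Tbar b := by
    intro a b
    refine le_antisymm ?_ ?_
    · have hk : Tbar (Sbar (Tbar a ⊔ Tbar b)) = Tbar a ⊔ Tbar b := hTSbar _
      have ha : a ≤ Sbar (Tbar a ⊔ Tbar b) := hTbarmono' _ _ (by rw [hk]; exact le_sup_left)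
      have hb : b ≤ Sbar (Tbar a ⊔ Tbar b) := hTbarmono' _ _ (by rw [hk]; exact le_sup_right)
      have := hTbarmono _ _ (sup_le ha hb)
      rwa [hk] at this
    · exact sup_le (hTbarmono _ _ le_sup_left) (hTbarmono _ _ le_sup_right)
  have hTbarneg : ∀ a : C(X,ℝ), Tbar (-a) = -Tbar a := by
    intro a
    have h2 : -a = (0 : C(X,ℝ)) - a := (zero_sub a).symm
    rw [h2, hTbarsub, hTbar0, zero_sub]
  have habsX : ∀ c : C(X,ℝ), |c| = c ⊔ (-c) := by
    intro c; ext z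
    simp only [ContinuousMap.abs_apply, ContinuousMap.sup_apply, ContinuousMap.neg_apply]
    exact abs_eq_max_neg
  have habsY : ∀ c : C(Y,ℝ), |c| = c ⊔ (-c) := by
    intro c; ext z
    simp only [ContinuousMap.abs_apply, ContinuousMap.sup_apply, ContinuousMap.neg_apply]
    exact abs_eq_max_neg
  have hTbarabs : ∀ a : C(X,ℝ), Tbar |a| = |Tbar a| := by
    intro a
    rw [habsX a, hTbarsup, hTbarneg, ← habsY (Tbar a)]
  -- transfer to Sbar
  have hSbaradd : ∀ a b : C(Y,ℝ), Sbar (a + b) = Sbar a + Sbar b := by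
    intro a b
    apply hTbarinj
    rw [hTSbar, hTbaradd, hTSbar, hTSbar]
  have hSbarsmul : ∀ (c : ℝ) (a : C(Y,ℝ)), Sbar (c • a) = c • Sbar a := by
    intro c a
    apply hTbarinj
    rw [hTSbar, hTbarsmul, hTSbar]
  have hSbar1 : Sbar 1 = 1 := by
    apply hTbarinj
    rw [hTSbar, hTbar1]
  have hSbarsup : ∀ a b : C(Y,ℝ), Sbar (a ⊔ b) = Sbar a ⊔ Sbar b := by
    intro a b
    apply hTbarinj
    rw [hTSbar, hTbarsup, hTSbar, hTSbar]
  have hSbarneg : ∀ a : C(Y,ℝ), Sbar (-a) = -Sbar a := by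
    intro a
    apply hTbarinj
    rw [hTSbar, hTbarneg, hTSbar]
  have hSbarabs : ∀ a : C(Y,ℝ), Sbar |a| = |Sbar a| := by
    intro a
    rw [habsY a, hSbarsup, hSbarneg, ← habsX (Sbar a)]
  have hSbarpos : ∀ k : C(Y,ℝ), (∀ y, 0 ≤ k y) → ∀ x, 0 ≤ Sbar k x := by
    intro k hk x
    have hr := hTbarrange (Sbar k) (Sbar k x)
    rw [hTSbar] at hr
    obtain ⟨y', hy'⟩ := hr.1 ⟨x, rfl⟩
    rw [← hy']
    exact hk y'
  have hTbarposf : ∀ a : C(X,ℝ), (∀ x, 0 ≤ a x) → ∀ y, 0 ≤ Tbar a y :=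
    fun a ha => (hTbarpos a).1 ha
  -- point evaluations
  have hpe : ∀ y : Y, ∃ x, ∀ h : C(X,ℝ), h x = Tbar h y :=
    fun y => point_eval Tbar hTbaradd hTbarsmul hTbar1 hTbarabs hTbarposf y
  choose φ0 hφ0 using hpe
  have hpe' : ∀ x : X, ∃ y, ∀ k : C(Y,ℝ), k y = Sbar k x :=
    fun x => point_eval Sbar hSbaradd hSbarsmul hSbar1 hSbarabs hSbarpos x
  choose ψ0 hψ0 using hpe'
  have hψφ : ∀ y, ψ0 (φ0 y) = y := by
    intro y
    refine sep_point (fun k => ?_)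
    rw [hψ0 (φ0 y) k, hφ0 y (Sbar k), hTSbar]
  have hφψ : ∀ x, φ0 (ψ0 x) = x := by
    intro x
    refine sep_point (fun h => ?_)
    rw [hφ0 (ψ0 x) h, hψ0 x (Tbar h), hSTbar]
  have hcontφ : Continuous φ0 := by
    rw [continuous_iff_isClosed]
    intro C hC
    have hCeq : φ0 ⁻¹' C =
        ⋂ (h : {h : C(X,ℝ) // ∀ x ∈ C, h x = 0}), (fun y => Tbar h.1 y) ⁻¹' {0} := by
      ext y
      simp only [mem_preimage, mem_iInter, mem_singleton_iff]
      constructor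
      · rintro hyC ⟨h, hh⟩
        rw [← hφ0 y h]
        exact hh _ hyC
      · intro hall
        by_contra hnot
        obtain ⟨f, hf0, hf1, -⟩ := exists_continuous_zero_one_of_isClosed hC
          (isClosed_singleton (x := φ0 y))
          (by simpa [disjoint_singleton_right] using hnot)
        have h1 := hall ⟨f, fun x hx => by simpa using hf0 hx⟩
        rw [← hφ0 y f] at h1
        have h2 : f (φ0 y) = 1 := by simpa using hf1 rfl
        rw [h2] at h1
        exact one_ne_zero h1
    rw [hCeq]
    exact isClosed_iInter (fun h => IsClosed.preimage (Tbar h.1).continuous isClosed_singleton)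
  have hcontψ : Continuous ψ0 := by
    rw [continuous_iff_isClosed]
    intro C hC
    have hCeq : ψ0 ⁻¹' C =
        ⋂ (k : {k : C(Y,ℝ) // ∀ y ∈ C, k y = 0}), (fun x => Sbar k.1 x) ⁻¹' {0} := by
      ext x
      simp only [mem_preimage, mem_iInter, mem_singleton_iff]
      constructor
      · rintro hxC ⟨k, hk⟩
        rw [← hψ0 x k]
        exact hk _ hxC
      · intro hall
        by_contra hnot
        obtain ⟨f, hf0, hf1, -⟩ := exists_continuous_zero_one_of_isClosed hC
          (isClosed_singleton (x := ψ0 x))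
          (by simpa [disjoint_singleton_right] using hnot)
        have h1 := hall ⟨f, fun z hz => by simpa using hf0 hz⟩
        rw [← hψ0 x f] at h1
        have h2 : f (ψ0 x) = 1 := by simpa using hf1 rfl
        rw [h2] at h1
        exact one_ne_zero h1
    rw [hCeq]
    exact isClosed_iInter (fun k => IsClosed.preimage (Sbar k.1).continuous isClosed_singleton)
  -- conclusion
  refine ⟨⟨⟨φ0, ψ0, hψφ, hφψ⟩, hcontφ, hcontψ⟩, fun y => v y * (u (φ0 y))⁻¹, ?_, ?_, ?_⟩
  · exact v.continuous.mul ((u.continuous.comp hcontφ).inv₀ (fun y => (hupos _).ne'))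
  · intro y
    exact mul_ne_zero (hvnz y) (inv_ne_zero (hupos _).ne')
  · intro f hfA y
    have hgA' : uinv * f ∈ A' := by
      show u * (uinv * f) ∈ A
      rw [huu]; exact hfA
    have h1 : Tbar (uinv * f) = Ttil (uinv * f) := hTbarA' _ hgA'
    have h2 : Ttil (uinv * f) = vinv * T f := by
      show vinv * T (u * (uinv * f)) = vinv * T f
      rw [huu]
    have h3 := hφ0 y (uinv * f)
    rw [h1, h2] at h3
    have h4 : (u (φ0 y))⁻¹ * f (φ0 y) = (v y)⁻¹ * T f y := h3
    show T f y = (v y * (u (φ0 y))⁻¹) * f (φ0 y)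
    have h5 : v y * ((u (φ0 y))⁻¹ * f (φ0 y)) = v y * ((v y)⁻¹ * T f y) := by rw [h4]
    rw [mul_inv_cancel_left₀ (hvnz y)] at h5
    rw [← h5]; ring

end LiWongAux

/-- **Li–Wong theorem.** Let `X`, `Y` be compact Hausdorff spaces and `𝒜(X)`, `𝒜(Y)`
regular vector sublattices of `C(X,ℝ)`, `C(Y,ℝ)`. Every linear bijection
`T : 𝒜(X) → 𝒜(Y)` preserving non-vanishing functions is a weighted composition operator:
`Tf(y) = p(y)·f(φ(y))` for a homeomorphism `φ : Y → X` and a continuous nowhere-zero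
`p : Y → ℝ`. -/
theorem stmt_15 {X Y : Type*}
    [TopologicalSpace X] [CompactSpace X] [T2Space X]
    [TopologicalSpace Y] [CompactSpace Y] [T2Space Y]
    (A : Set C(X, ℝ)) (B : Set C(Y, ℝ))
    -- `A` and `B` are vector sublattices
    (hAadd : ∀ f ∈ A, ∀ g ∈ A, f + g ∈ A) (hAsmul : ∀ (c : ℝ), ∀ f ∈ A, c • f ∈ A)
    (hAmax : ∀ f ∈ A, ∀ g ∈ A, ∃ h ∈ A, ∀ x, h x = max (f x) (g x))
    (hAmin : ∀ f ∈ A, ∀ g ∈ A, ∃ h ∈ A, ∀ x, h x = min (f x) (g x))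
    (hBadd : ∀ f ∈ B, ∀ g ∈ B, f + g ∈ B) (hBsmul : ∀ (c : ℝ), ∀ f ∈ B, c • f ∈ B)
    (hBmax : ∀ f ∈ B, ∀ g ∈ B, ∃ h ∈ B, ∀ y, h y = max (f y) (g y))
    (hBmin : ∀ f ∈ B, ∀ g ∈ B, ∃ h ∈ B, ∀ y, h y = min (f y) (g y))
    -- `A` and `B` are regular
    (hAreg : ∀ (x : X), ∀ U ∈ nhds x, ∀ c : ℝ,
      ∃ f ∈ A, f x = c ∧ closure {x' | f x' ≠ 0} ⊆ U)
    (hBreg : ∀ (y : Y), ∀ U ∈ nhds y, ∀ c : ℝ,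
      ∃ g ∈ B, g y = c ∧ closure {y' | g y' ≠ 0} ⊆ U)
    -- `T` is a linear bijection from `A` onto `B` preserving non-vanishing functions
    (T : C(X, ℝ) → C(Y, ℝ))
    (hTbij : Set.BijOn T A B)
    (hTadd : ∀ f ∈ A, ∀ g ∈ A, T (f + g) = T f + T g)
    (hTsmul : ∀ (c : ℝ), ∀ f ∈ A, T (c • f) = c • T f)
    (hTnv : ∀ f ∈ A, ((∃ x, f x = 0) ↔ (∃ y, T f y = 0))) :
    ∃ (φ : Y ≃ₜ X) (p : Y → ℝ), Continuous p ∧ (∀ y, p y ≠ 0) ∧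
      ∀ f ∈ A, ∀ y, T f y = p y * f (φ y) := by
  by_cases hX : Nonempty X
  · have hY : Nonempty Y := by
      by_contra hY
      rw [not_nonempty_iff] at hY
      obtain ⟨x₀⟩ := hX
      obtain ⟨f, hfA, hfx, -⟩ := hAreg x₀ univ univ_mem 1
      have h0A : (0:ℝ) • f ∈ A := hAsmul 0 f hfA
      have hsub : T f = T ((0:ℝ) • f) := ContinuousMap.ext (fun y => isEmptyElim y)
      have heq : f = (0:ℝ) • f := hTbij.injOn hfA h0A hsub
      have := congrArg (fun g : C(X,ℝ) => g x₀) heq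
      simp only [hfx, ContinuousMap.smul_apply, zero_smul, smul_eq_mul, zero_mul] at this
      exact one_ne_zero this
    exact LiWongAux.main A B hAadd hAsmul hAmax hAmin hBadd hBsmul hBmax hBmin
      hAreg hBreg T hTbij hTadd hTsmul hTnv
  · rw [not_nonempty_iff] at hX
    have hY : IsEmpty Y := by
      by_contra hY
      rw [not_isEmpty_iff] at hY
      obtain ⟨y₀⟩ := hY
      obtain ⟨g, hgB, hgy, -⟩ := hBreg y₀ univ univ_mem 1
      obtain ⟨f, hfA, hf⟩ := hTbij.surjOn hgB
      have hfeq : f = (0:ℝ) • f := ContinuousMap.ext (fun x => isEmptyElim x)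
      have h1 : T f = (0:ℝ) • T f := by
        calc T f = T ((0:ℝ) • f) := congrArg T hfeq
          _ = (0:ℝ) • T f := hTsmul 0 f hfA
      have h2 : g y₀ = 0 := by
        rw [← hf, h1]
        simp
      rw [hgy] at h2
      exact one_ne_zero h2
    haveI := hX
    haveI := hY
    let e : Y ≃ X := ⟨fun y => isEmptyElim y, fun x => isEmptyElim x,
      fun y => isEmptyElim y, fun x => isEmptyElim x⟩
    have hc1 : Continuous e.toFun := continuous_def.2 (fun s _ => by
      rw [eq_empty_of_isEmpty (e.toFun ⁻¹' s)]; exact isOpen_empty)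
    have hc2 : Continuous e.invFun := continuous_def.2 (fun s _ => by
      rw [eq_empty_of_isEmpty (e.invFun ⁻¹' s)]; exact isOpen_empty)
    refine ⟨Homeomorph.mk e hc1 hc2,
      fun _ => 1, continuous_const, fun _ => one_ne_zero, ?_⟩
    intro f _ y
    exact isEmptyElim y
end

section
/- Let 𝕂 be ℝ or ℂ, let X and Y be locally compact Hausdorff spaces, and let T : C_c(X,𝕂) → C_c(Y,𝕂) be a linear bijection such that for all f,g ∈ C_c(X,𝕂): ({f ≠ 0} ∩ {g ≠ 0} = ∅) if and only if ({Tf ≠ 0} ∩ {Tg ≠ 0} = ∅). Then there exist a homeomorphism φ : Y → X and a continuous nowhere-zero function p : Y → 𝕂 such that Tf(y) = p(y)·f(φ(y)) for all f ∈ C_c(X,𝕂) and all y ∈ Y. -/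
/-!
Because `T` preserves disjointness of cozero sets, for each `y` the value `T f y` only depends on
the germ of `f` at one point `φ y`: splitting `f` by a partition of unity shows that such a point
exists. The same construction for `T⁻¹` inverts `φ`, so `φ` is a homeomorphism.

The heart of the proof is that `T f y = 0` as soon as `f (φ y) = 0`. Otherwise `f` takes
arbitrarily small nonzero values `f (u n)` near `φ y`, at points where `|T f ∘ φ⁻¹|` is bounded
below. Cutting `f` off to disjoint bands around the values `‖f (u n)‖` and gluing these pieces with
weights `n` gives a compactly supported `G` with `G = n • f` near `u n`, so `T G` is unbounded.
Hence `T f y = p y * f (φ y)` with `p y = T e y` for any `e` equal to `1` at `φ y`.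
-/

open Set Function Topology Filter CompactlySupported

theorem exists_seq_four_mul_le {α : Type*} {a : α → ℝ} {s : Set α}
    (h : ∀ ε > 0, ∃ x ∈ s, 0 < a x ∧ a x < ε) :
    ∃ u : ℕ → α, ∀ n, u n ∈ s ∧ 0 < a (u n) ∧ 4 * a (u (n + 1)) ≤ a (u n) := by
  have : Nonempty α := let ⟨x, _⟩ := h 1 one_pos; ⟨x⟩
  choose! v hvs hvpos hvlt using h
  let u : ℕ → α := fun n => Nat.rec (v 1) (fun _ x => v (a x / 4)) n
  have hu : ∀ n, u n ∈ s ∧ 0 < a (u n) := by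
    intro n
    induction n with
    | zero => exact ⟨hvs 1 one_pos, hvpos 1 one_pos⟩
    | succ n ih => exact ⟨hvs _ (by linarith [ih.2]), hvpos _ (by linarith [ih.2])⟩
  refine ⟨u, fun n => ⟨(hu n).1, (hu n).2, ?_⟩⟩
  linarith [hvlt (a (u n) / 4) (by linarith [(hu n).2])]

section FourfoldDecay

variable {δ : ℕ → ℝ} (hδ : ∀ n, 4 * δ (n + 1) ≤ δ n)
include hδ

theorem four_pow_mul_le {m n : ℕ} (hmn : m ≤ n) : 4 ^ (n - m) * δ n ≤ δ m := by
  induction n, hmn using Nat.le_induction with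
  | base => simp
  | succ n hmn ih =>
    calc 4 ^ (n + 1 - m) * δ (n + 1) = 4 ^ (n - m) * (4 * δ (n + 1)) := by
          rw [Nat.sub_add_comm hmn, pow_succ]; ring
      _ ≤ 4 ^ (n - m) * δ n := by gcongr; exact hδ n
      _ ≤ δ m := ih

theorem le_mul_quarter_pow (n : ℕ) : δ n ≤ δ 0 * (1 / 4) ^ n := by
  have := four_pow_mul_le hδ n.zero_le
  rw [Nat.sub_zero] at this
  rw [one_div, inv_pow, ← div_eq_mul_inv, le_div_iff₀ (by positivity)]
  linarith

theorem eq_of_dist_lt_half (hpos : ∀ n, 0 < δ n) {t : ℝ} {m n : ℕ}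
    (hm : dist t (δ m) < δ m / 2) (hn : dist t (δ n) < δ n / 2) : m = n := by
  wlog hmn : m < n generalizing m n
  · rcases (not_lt.1 hmn).eq_or_lt with h | h
    exacts [h.symm, (this hn hm h).symm]
  have h4 : (4 : ℝ) ≤ 4 ^ (n - m) := le_self_pow₀ (by norm_num) (by omega)
  have := four_pow_mul_le hδ hmn.le
  have := hpos n
  rw [Real.dist_eq, abs_lt] at hm hn
  nlinarith

end FourfoldDecay

noncomputable def bandBump {δ : ℝ} (hδ : 0 < δ) : ContDiffBump δ :=
  ⟨δ / 4, δ / 2, by positivity, by linarith⟩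

namespace ContinuousMap

variable {𝕜 X : Type*} [RCLike 𝕜] [TopologicalSpace X] (f : C(X, 𝕜)) {δ : ℝ} (hδ : 0 < δ)

noncomputable def bandPart : C(X, 𝕜) :=
  ⟨fun x => (bandBump hδ ‖f x‖ : 𝕜) * f x, by have := (bandBump hδ).continuous; fun_prop⟩

theorem bandPart_apply (x : X) : f.bandPart hδ x = (bandBump hδ ‖f x‖ : 𝕜) * f x := rfl

variable {f hδ}

theorem dist_lt_of_bandPart_ne_zero {x : X} (hx : f.bandPart hδ x ≠ 0) :
    dist ‖f x‖ δ < δ / 2 := by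
  have : ‖f x‖ ∈ support (bandBump hδ) := fun h => hx (by simp [bandPart_apply, h])
  rwa [(bandBump hδ).support_eq] at this

theorem bandPart_apply_of_dist_lt {x : X} (hx : dist ‖f x‖ δ < δ / 4) :
    f.bandPart hδ x = f x := by
  simp [bandPart_apply, (bandBump hδ).one_of_mem_closedBall (Metric.mem_closedBall.2 hx.le)]

theorem norm_bandPart_le (x : X) : ‖f.bandPart hδ x‖ ≤ 2 * δ := by
  by_cases hx : f.bandPart hδ x = 0
  · rw [hx, norm_zero]; positivity
  have h := dist_lt_of_bandPart_ne_zero hx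
  rw [Real.dist_eq, abs_lt] at h
  calc ‖f.bandPart hδ x‖ ≤ ‖f x‖ := by
        rw [bandPart_apply, norm_mul, RCLike.norm_ofReal, abs_of_nonneg (bandBump hδ).nonneg]
        exact mul_le_of_le_one_left (norm_nonneg _) (bandBump hδ).le_one
    _ ≤ 2 * δ := by linarith

end ContinuousMap

namespace CompactlySupportedContinuousMap

variable {𝕜 X : Type*} [RCLike 𝕜] [TopologicalSpace X]

theorem exists_apply_eq_one_of_mem_nhds [LocallyCompactSpace X] [R1Space X] {x : X}
    {U : Set X} (hU : U ∈ 𝓝 x) : ∃ f : C_c(X, 𝕜), tsupport f ⊆ U ∧ f x = 1 := by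
  obtain ⟨g, hg1, hgc, hgU, -⟩ := exists_continuousMap_one_of_isCompact_subset_isOpen
    isCompact_singleton isOpen_interior (singleton_subset_iff.2 (mem_interior_iff_mem_nhds.2 hU))
  refine ⟨⟨(⟨RCLike.ofReal, RCLike.continuous_ofReal⟩ : C(ℝ, 𝕜)).comp g, ?_⟩, ?_, ?_⟩
  · exact .of_support_subset_isCompact hgc fun y hy => subset_closure fun h => hy (by simp [h])
  · refine (closure_mono fun y hy => ?_).trans (hgU.trans interior_subset)
    exact fun h => hy (by simp [h])
  · simp [hg1 rfl]

theorem exists_sum_eq_of_tsupport_subset [LocallyCompactSpace X] [T2Space X] {ι : Type*}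
    [Fintype ι] (f : C_c(X, 𝕜)) {U : ι → Set X} (hU : ∀ i, IsOpen (U i))
    (hf : tsupport f ⊆ ⋃ i, U i) :
    ∃ g : ι → C_c(X, 𝕜), (∀ i, tsupport (g i) ⊆ U i) ∧ ∑ i, g i = f := by
  obtain ⟨ρ, hρU, -⟩ := PartitionOfUnity.exists_isSubordinate_of_locallyFinite_t2space
    f.hasCompactSupport.isCompact U hU (locallyFinite_of_finite U) hf
  refine ⟨fun i => ρ i • f, fun i => (tsupport_smul_subset_left _ _).trans (hρU i), ?_⟩
  ext x
  simp only [coe_sum, Finset.sum_apply, coe_smulc, ← Finset.sum_smul]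
  by_cases hx : x ∈ tsupport f
  · rw [← finsum_eq_sum_of_fintype, ρ.sum_eq_one hx, one_smul]
  · rw [image_eq_zero_of_notMem_tsupport hx, smul_zero]

/-- `G = ∑ₙ n • bandPart f` at the scales `‖f (u n)‖`, whose bands the fourfold decay keeps
pairwise disjoint. -/
theorem exists_eventuallyEq_natCast_smul (f : C_c(X, 𝕜)) {u : ℕ → X}
    (hpos : ∀ n, 0 < ‖f (u n)‖) (hdecay : ∀ n, 4 * ‖f (u (n + 1))‖ ≤ ‖f (u n)‖) :
    ∃ G : C_c(X, 𝕜), ∀ n, ⇑G =ᶠ[𝓝 (u n)] ⇑((n : 𝕜) • f) := by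
  set δ := fun n => ‖f (u n)‖
  let k : ℕ → C(X, 𝕜) := fun n => (f : C(X, 𝕜)).bandPart (hpos n)
  have hsum : Summable fun n : ℕ => (n : ℝ) * (2 * (δ 0 * (1 / 4) ^ n)) :=
    ((summable_pow_mul_geometric_of_norm_lt_one 1 (r := (1 / 4 : ℝ)) (by norm_num)).mul_left
      (2 * δ 0)).congr fun n => by ring
  have hbound : ∀ (n : ℕ) x, ‖(n : 𝕜) * k n x‖ ≤ n * (2 * (δ 0 * (1 / 4) ^ n)) := fun n x => by
    rw [norm_mul, RCLike.norm_natCast]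
    gcongr
    exact (ContinuousMap.norm_bandPart_le x).trans
      (by gcongr; exact le_mul_quarter_pow (δ := δ) hdecay n)
  let G : C(X, 𝕜) := ⟨fun x => ∑' n : ℕ, (n : 𝕜) * k n x,
    continuous_tsum (fun n => continuous_const.mul (k n).continuous) hsum hbound⟩
  have hG : ∀ n x, dist ‖f x‖ (δ n) < δ n / 2 → G x = n * k n x := fun n x hx =>
    tsum_eq_single n fun m hm => by
      by_cases hkm : k m x = 0
      · rw [hkm, mul_zero]
      · exact absurd (eq_of_dist_lt_half (δ := δ) hdecay hpos
          (ContinuousMap.dist_lt_of_bandPart_ne_zero hkm) hx) hm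
  refine ⟨⟨G, f.hasCompactSupport.mono fun x hx hfx => hx ?_⟩, fun n => ?_⟩
  · simp [G, k, ContinuousMap.bandPart_apply, hfx]
  have hopen : IsOpen {x | dist ‖f x‖ (δ n) < δ n / 4} := isOpen_lt (by fun_prop) continuous_const
  have hun : dist ‖f (u n)‖ (δ n) < δ n / 4 := by rw [dist_self]; linarith [hpos n]
  filter_upwards [hopen.mem_nhds hun] with x (hx : dist ‖f x‖ (δ n) < δ n / 4)
  have hGx := hG n x (by linarith [hpos n])
  rw [show k n x = f x from ContinuousMap.bandPart_apply_of_dist_lt hx] at hGx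
  simpa [G] using hGx

end CompactlySupportedContinuousMap

section SupportPoint

variable {𝕜 X Y : Type*} [RCLike 𝕜] [TopologicalSpace X] [TopologicalSpace Y]

def PreservesDisjointSupport (T : C_c(X, 𝕜) →ₗ[𝕜] C_c(Y, 𝕜)) : Prop :=
  ∀ f g : C_c(X, 𝕜), Disjoint (support f) (support g) → Disjoint (support (T f)) (support (T g))

def IsSupportPoint (T : C_c(X, 𝕜) →ₗ[𝕜] C_c(Y, 𝕜)) (y : Y) (x : X) : Prop :=
  ∀ U ∈ 𝓝 x, ∃ f : C_c(X, 𝕜), tsupport f ⊆ U ∧ T f y ≠ 0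

variable {T : C_c(X, 𝕜) →ₗ[𝕜] C_c(Y, 𝕜)}

theorem exists_isSupportPoint [LocallyCompactSpace X] [T2Space X] {y : Y} {f : C_c(X, 𝕜)}
    (hf : T f y ≠ 0) : ∃ x, IsSupportPoint T y x := by
  by_contra! h
  simp only [IsSupportPoint, not_forall, not_exists, not_and, not_not] at h
  choose U hU hTU using h
  obtain ⟨t, ht⟩ := f.hasCompactSupport.isCompact.elim_finite_subcover (fun x => interior (U x))
    (fun _ => isOpen_interior) fun x _ => mem_iUnion.2 ⟨x, mem_interior_iff_mem_nhds.2 (hU x)⟩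
  obtain ⟨g, hgU, rfl⟩ := f.exists_sum_eq_of_tsupport_subset (U := fun x : t => interior (U x))
    (fun _ => isOpen_interior) (by simpa only [iUnion_subtype] using ht)
  simp only [map_sum, CompactlySupportedContinuousMap.sum_apply] at hf
  obtain ⟨x, -, hx⟩ := Finset.exists_ne_zero_of_sum_ne_zero hf
  exact hx (hTU x (g x) ((hgU x).trans interior_subset))

namespace IsSupportPoint

variable {y : Y} {x : X}

theorem apply_eq_zero (hx : IsSupportPoint T y x) (hT : PreservesDisjointSupport T)
    {f : C_c(X, 𝕜)} (hf : f =ᶠ[𝓝 x] 0) : T f y = 0 := by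
  obtain ⟨g, hgU, hgy⟩ := hx _ hf
  have hfg : Disjoint (support f) (support g) :=
    disjoint_left.2 fun z hfz hgz => hfz (hgU (subset_closure hgz))
  exact notMem_support.1 fun hfy => disjoint_left.1 (hT f g hfg) hfy hgy

theorem apply_eq_of_eventuallyEq (hx : IsSupportPoint T y x) (hT : PreservesDisjointSupport T)
    {f g : C_c(X, 𝕜)} (hfg : f =ᶠ[𝓝 x] g) : T f y = T g y := by
  have : ⇑(f - g) =ᶠ[𝓝 x] 0 := by
    filter_upwards [hfg] with z hz
    simp [hz]
  simpa [sub_eq_zero] using hx.apply_eq_zero hT this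

theorem mem_tsupport (hx : IsSupportPoint T y x) (hT : PreservesDisjointSupport T)
    {f : C_c(X, 𝕜)} (hf : T f y ≠ 0) : x ∈ tsupport f := by
  by_contra h
  exact hf (hx.apply_eq_zero hT (notMem_tsupport_iff_eventuallyEq.1 h))

theorem exists_mem_norm_lt (hx : IsSupportPoint T y x) (hT : PreservesDisjointSupport T)
    {f : C_c(X, 𝕜)} (hfx : f x = 0) (hfy : T f y ≠ 0) {U : Set X} (hU : U ∈ 𝓝 x) :
    ∀ ε > 0, ∃ z ∈ U, 0 < ‖f z‖ ∧ ‖f z‖ < ε := by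
  intro ε hε
  by_contra! h
  refine hfy (hx.apply_eq_zero hT ?_)
  have hε' : ∀ᶠ z in 𝓝 x, ‖f z‖ < ε :=
    (map_continuous f).norm.continuousAt.eventually_lt continuousAt_const (by simp [hfx, hε])
  filter_upwards [hU, hε'] with z hzU hzε
  by_contra hz
  exact (h z hzU (norm_pos_iff.2 hz)).not_gt hzε

end IsSupportPoint

namespace PreservesDisjointSupport

variable (hT : PreservesDisjointSupport T)
include hT

theorem continuous_of_isSupportPoint {φ : Y → X} (hφ : ∀ y, IsSupportPoint T y (φ y)) :
    Continuous φ := by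
  refine continuous_iff_continuousAt.2 fun y U hU => mem_map.2 ?_
  obtain ⟨f, hfU, hfy⟩ := hφ y U hU
  filter_upwards [(map_continuous (T f)).continuousAt.eventually_ne hfy] with z hz
  exact hfU ((hφ z).mem_tsupport hT hz)

theorem tsupport_apply_subset_preimage {φ : Y → X} (hφ : ∀ y, IsSupportPoint T y (φ y))
    (f : C_c(X, 𝕜)) : tsupport (T f) ⊆ φ ⁻¹' tsupport f :=
  closure_minimal (fun y hy => (hφ y).mem_tsupport hT hy)
    ((isClosed_tsupport f).preimage (hT.continuous_of_isSupportPoint hφ))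

theorem apply_eq_zero_of_apply_eq_zero {φ : Y ≃ₜ X} (hφ : ∀ y, IsSupportPoint T y (φ y))
    {f : C_c(X, 𝕜)} {y : Y} (hf : f (φ y) = 0) : T f y = 0 := by
  by_contra hne
  obtain ⟨c, hc, hcy⟩ := exists_between (norm_pos_iff.2 hne)
  have hΩ : φ.symm ⁻¹' {y' | c < ‖T f y'‖} ∈ 𝓝 (φ y) :=
    ((isOpen_lt continuous_const (map_continuous (T f)).norm).preimage
      φ.symm.continuous).mem_nhds (by simpa using hcy)
  obtain ⟨u, hu⟩ := exists_seq_four_mul_le ((hφ y).exists_mem_norm_lt hT hf hne hΩ)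
  obtain ⟨G, hG⟩ := f.exists_eventuallyEq_natCast_smul (fun n => (hu n).2.1) fun n => (hu n).2.2
  have hTG : ∀ n : ℕ, ‖T G (φ.symm (u n))‖ = n * ‖T f (φ.symm (u n))‖ := by
    intro n
    have hGn := hG n
    rw [← φ.apply_symm_apply (u n)] at hGn
    rw [(hφ (φ.symm (u n))).apply_eq_of_eventuallyEq hT hGn, map_smul]
    simp
  obtain ⟨C, hC⟩ := (map_continuous (T G)).bounded_above_of_compact_support (T G).hasCompactSupport
  obtain ⟨n, hn⟩ := exists_nat_gt (C / c)
  have h1 := hC (φ.symm (u n))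
  have h2 : c < ‖T f (φ.symm (u n))‖ := (hu n).1
  rw [hTG] at h1
  rw [div_lt_iff₀ hc] at hn
  nlinarith

theorem exists_continuous_weight [LocallyCompactSpace X] [R1Space X] {φ : Y ≃ₜ X}
    (hφ : ∀ y, IsSupportPoint T y (φ y)) :
    ∃ p : Y → 𝕜, Continuous p ∧ ∀ f y, T f y = p y * f (φ y) := by
  choose e _ he using fun y => CompactlySupportedContinuousMap.exists_apply_eq_one_of_mem_nhds
    (𝕜 := 𝕜) (univ_mem (f := 𝓝 (φ y)))
  have hTf : ∀ f y, T f y = T (e y) y * f (φ y) := fun f y => by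
    have := hT.apply_eq_zero_of_apply_eq_zero hφ (y := y) (f := f - f (φ y) • e y) (by simp [he])
    simpa [sub_eq_zero, mul_comm] using this
  refine ⟨fun y => T (e y) y, continuous_iff_continuousAt.2 fun y₀ => ?_, hTf⟩
  have he₀ : ContinuousAt (fun y => e y₀ (φ y)) y₀ :=
    ((map_continuous _).comp φ.continuous).continuousAt
  refine ((map_continuous (T (e y₀))).continuousAt.div he₀ (by simp [he])).congr ?_
  filter_upwards [he₀.eventually_ne (by simp [he] : e y₀ (φ y₀) ≠ 0)] with y hy
  rw [Pi.div_apply, hTf (e y₀) y, mul_div_cancel_right₀ _ hy]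

end PreservesDisjointSupport

theorem leftInverse_of_isSupportPoint [LocallyCompactSpace X] [T2Space X]
    {T : C_c(X, 𝕜) ≃ₗ[𝕜] C_c(Y, 𝕜)} (hT : PreservesDisjointSupport T.toLinearMap)
    (hT' : PreservesDisjointSupport T.symm.toLinearMap) {φ : Y → X} {ψ : X → Y}
    (hφ : ∀ y, IsSupportPoint T.toLinearMap y (φ y))
    (hψ : ∀ x, IsSupportPoint T.symm.toLinearMap x (ψ x)) : LeftInverse φ ψ := by
  intro x
  by_contra hne
  obtain ⟨f, hfU, hfx⟩ := CompactlySupportedContinuousMap.exists_apply_eq_one_of_mem_nhds (𝕜 := 𝕜)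
    (isOpen_compl_singleton.mem_nhds (Ne.symm hne))
  have hψx : ψ x ∈ tsupport (T f) := (hψ x).mem_tsupport hT' (by simp [hfx])
  exact hfU (hT.tsupport_apply_subset_preimage hφ f hψx) rfl

theorem LinearEquiv.exists_isSupportPoint [LocallyCompactSpace X] [T2Space X]
    [LocallyCompactSpace Y] [R1Space Y] (T : C_c(X, 𝕜) ≃ₗ[𝕜] C_c(Y, 𝕜)) (y : Y) :
    ∃ x, IsSupportPoint T.toLinearMap y x := by
  obtain ⟨g, -, hgy⟩ :=
    CompactlySupportedContinuousMap.exists_apply_eq_one_of_mem_nhds (𝕜 := 𝕜) (univ_mem (f := 𝓝 y))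
  exact _root_.exists_isSupportPoint (f := T.symm g) (by simp [hgy])

theorem LinearEquiv.exists_homeomorph_isSupportPoint [LocallyCompactSpace X] [T2Space X]
    [LocallyCompactSpace Y] [T2Space Y] (T : C_c(X, 𝕜) ≃ₗ[𝕜] C_c(Y, 𝕜))
    (hT : PreservesDisjointSupport T.toLinearMap)
    (hT' : PreservesDisjointSupport T.symm.toLinearMap) :
    ∃ φ : Y ≃ₜ X, ∀ y, IsSupportPoint T.toLinearMap y (φ y) := by
  choose φ hφ using T.exists_isSupportPoint
  choose ψ hψ using T.symm.exists_isSupportPoint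
  exact ⟨{ toFun := φ, invFun := ψ
           left_inv := leftInverse_of_isSupportPoint (T := T.symm) hT' hT hψ hφ
           right_inv := leftInverse_of_isSupportPoint hT hT' hφ hψ
           continuous_toFun := hT.continuous_of_isSupportPoint hφ
           continuous_invFun := hT'.continuous_of_isSupportPoint hψ }, hφ⟩

theorem LinearEquiv.exists_homeomorph_apply_eq_mul [LocallyCompactSpace X] [T2Space X]
    [LocallyCompactSpace Y] [T2Space Y] (T : C_c(X, 𝕜) ≃ₗ[𝕜] C_c(Y, 𝕜))
    (hT : ∀ f g : C_c(X, 𝕜),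
      Disjoint (support f) (support g) ↔ Disjoint (support (T f)) (support (T g))) :
    ∃ (φ : Y ≃ₜ X) (p : Y → 𝕜), Continuous p ∧ (∀ y, p y ≠ 0) ∧
      ∀ f y, T f y = p y * f (φ y) := by
  have hT' : PreservesDisjointSupport T.symm.toLinearMap := fun f g hfg => by
    simpa using (hT (T.symm f) (T.symm g)).2 (by simpa using hfg)
  obtain ⟨φ, hφ⟩ := T.exists_homeomorph_isSupportPoint (fun f g => (hT f g).1) hT'
  obtain ⟨p, hp, hTp⟩ :=
    PreservesDisjointSupport.exists_continuous_weight (fun f g => (hT f g).1) hφ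
  refine ⟨φ, p, hp, fun y hy => ?_, hTp⟩
  obtain ⟨g, -, hg⟩ :=
    CompactlySupportedContinuousMap.exists_apply_eq_one_of_mem_nhds (𝕜 := 𝕜) (univ_mem (f := 𝓝 y))
  simpa [hg, hy] using hTp (T.symm g) y

theorem exists_linearEquiv_of_bijOn (T : C(X, 𝕜) → C(Y, 𝕜))
    (hTbij : BijOn T {f | HasCompactSupport ⇑f} {g | HasCompactSupport ⇑g})
    (hTadd : ∀ f g : C(X, 𝕜), HasCompactSupport ⇑f → HasCompactSupport ⇑g →
      T (f + g) = T f + T g)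
    (hTsmul : ∀ (c : 𝕜), ∀ f : C(X, 𝕜), HasCompactSupport ⇑f → T (c • f) = c • T f) :
    ∃ L : C_c(X, 𝕜) ≃ₗ[𝕜] C_c(Y, 𝕜), ∀ f : C_c(X, 𝕜), ⇑(L f) = ⇑(T f) := by
  let L : C_c(X, 𝕜) →ₗ[𝕜] C_c(Y, 𝕜) :=
    { toFun := fun f => ⟨T f, hTbij.mapsTo f.hasCompactSupport⟩
      map_add' := fun f g => CompactlySupportedContinuousMap.ext fun y =>
        DFunLike.congr_fun (hTadd f g f.hasCompactSupport g.hasCompactSupport) y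
      map_smul' := fun c f => CompactlySupportedContinuousMap.ext fun y =>
        DFunLike.congr_fun (hTsmul c f f.hasCompactSupport) y }
  have hL : Bijective L := by
    refine ⟨fun f g hfg => ?_, fun g => ?_⟩
    · have := hTbij.injOn f.hasCompactSupport g.hasCompactSupport
        (congrArg CompactlySupportedContinuousMap.toContinuousMap hfg)
      exact CompactlySupportedContinuousMap.ext fun x => DFunLike.congr_fun this x
    · obtain ⟨f, hf, hTf⟩ := hTbij.surjOn g.hasCompactSupport
      exact ⟨⟨f, hf⟩, CompactlySupportedContinuousMap.ext fun y => DFunLike.congr_fun hTf y⟩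
  exact ⟨LinearEquiv.ofBijective L hL, fun f => rfl⟩

end SupportPoint

/-- **Jarosz' theorem.** A linear `⊥`-isomorphism `T : C_c(X,𝕂) → C_c(Y,𝕂)` (with `𝕂 = ℝ`
or `ℂ`) is a weighted composition operator: `Tf(y) = p(y)·f(φ(y))` for a homeomorphism
`φ : Y → X` and a continuous nowhere-zero function `p : Y → 𝕂`. -/
theorem stmt_16 {𝕜 X Y : Type*} [RCLike 𝕜]
    [TopologicalSpace X] [LocallyCompactSpace X] [T2Space X]
    [TopologicalSpace Y] [LocallyCompactSpace Y] [T2Space Y]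
    (T : C(X, 𝕜) → C(Y, 𝕜))
    (hTbij : Set.BijOn T {f | HasCompactSupport ⇑f} {g | HasCompactSupport ⇑g})
    (hTadd : ∀ f g : C(X, 𝕜), HasCompactSupport ⇑f → HasCompactSupport ⇑g →
      T (f + g) = T f + T g)
    (hTsmul : ∀ (c : 𝕜), ∀ f : C(X, 𝕜), HasCompactSupport ⇑f → T (c • f) = c • T f)
    (hTperp : ∀ f g : C(X, 𝕜), HasCompactSupport ⇑f → HasCompactSupport ⇑g →
      ({x | f x ≠ 0} ∩ {x | g x ≠ 0} = ∅ ↔ {y | T f y ≠ 0} ∩ {y | T g y ≠ 0} = ∅)) :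
    ∃ (φ : Y ≃ₜ X) (p : Y → 𝕜), Continuous p ∧ (∀ y, p y ≠ 0) ∧
      ∀ f : C(X, 𝕜), HasCompactSupport ⇑f → ∀ y, T f y = p y * f (φ y) := by
  obtain ⟨L, hL⟩ := exists_linearEquiv_of_bijOn T hTbij hTadd hTsmul
  obtain ⟨φ, p, hp, hp0, hLp⟩ := L.exists_homeomorph_apply_eq_mul fun f g => by
    rw [disjoint_iff_inter_eq_empty, disjoint_iff_inter_eq_empty, hL, hL]
    exact hTperp f g f.hasCompactSupport g.hasCompactSupport
  exact ⟨φ, p, hp, hp0, fun f hf y => (congrFun (hL ⟨f, hf⟩) y).symm.trans (hLp ⟨f, hf⟩ y)⟩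
end

section
/- Let 𝕂 be ℝ or ℂ, X a locally compact Hausdorff space, and μ a Borel measure on X which is fully supported (every nonempty open subset has positive measure) and finite on compact sets. Then for all f,g ∈ C_c(X,𝕂): ({f ≠ 0} ∩ {g ≠ 0} = ∅) if and only if for all A,B ∈ 𝕂, ∫_X |A·f + B·g| dμ = |A|·∫_X |f| dμ + |B|·∫_X |g| dμ. -/
open Set Topology MeasureTheory

/-- Let `μ` be a fully supported Borel measure on a locally compact Hausdorff space `X`,
finite on compact sets. Two functions `f, g ∈ C_c(X,𝕂)` are weakly disjoint iff the
`L¹`-norm is additive on all linear combinations `A·f + B·g`. -/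
theorem stmt_17 {𝕜 X : Type*} [RCLike 𝕜]
    [TopologicalSpace X] [LocallyCompactSpace X] [T2Space X]
    [MeasurableSpace X] [BorelSpace X]
    (μ : Measure X)
    (hfull : ∀ U : Set X, IsOpen U → U.Nonempty → 0 < μ U)
    (hfin : ∀ K : Set X, IsCompact K → μ K < ⊤)
    (f g : C(X, 𝕜)) (hf : HasCompactSupport ⇑f) (hg : HasCompactSupport ⇑g) :
    {x | f x ≠ 0} ∩ {x | g x ≠ 0} = ∅ ↔
      ∀ A B : 𝕜,
        ∫ x, ‖A * f x + B * g x‖ ∂μ = ‖A‖ * ∫ x, ‖f x‖ ∂μ + ‖B‖ * ∫ x, ‖g x‖ ∂μ := by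
  have : IsFiniteMeasureOnCompacts μ := ⟨fun _ hK => hfin _ hK⟩
  have hif : Integrable (fun x => ‖f x‖) μ :=
    f.continuous.norm.integrable_of_hasCompactSupport hf.norm
  have hig : Integrable (fun x => ‖g x‖) μ :=
    g.continuous.norm.integrable_of_hasCompactSupport hg.norm
  constructor
  · intro hdisj A B
    have hpt : ∀ x, ‖A * f x + B * g x‖ = ‖A‖ * ‖f x‖ + ‖B‖ * ‖g x‖ := by
      intro x
      by_cases hfx : f x = 0
      · simp [hfx, norm_mul]
      · have hgx : g x = 0 := by
          by_contra hgx
          exact eq_empty_iff_forall_notMem.mp hdisj x ⟨hfx, hgx⟩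
        simp [hgx, norm_mul]
    simp only [hpt]
    rw [integral_add (hif.const_mul _) (hig.const_mul _),
      integral_const_mul, integral_const_mul]
  · intro hadd
    rw [eq_empty_iff_forall_notMem]
    rintro x₀ ⟨hfx₀, hgx₀⟩
    set A : 𝕜 := -(g x₀) / (f x₀) with hA
    have hkey := hadd A 1
    set φ : X → ℝ := fun x => ‖A‖ * ‖f x‖ + ‖(1:𝕜)‖ * ‖g x‖ - ‖A * f x + 1 * g x‖ with hφ
    have hφnn : ∀ x, 0 ≤ φ x := by
      intro x
      have := norm_add_le (A * f x) (1 * g x)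
      simp only [norm_mul] at this
      simp only [hφ, norm_mul]
      linarith
    have hφcont : Continuous φ := by fun_prop
    have hφint : Integrable φ μ := by
      refine ((hif.const_mul _).add (hig.const_mul _)).sub ?_
      have hcs : HasCompactSupport fun x => A * f x + 1 * g x :=
        hf.mul_left.add hg.mul_left
      exact (Continuous.norm (by fun_prop)).integrable_of_hasCompactSupport hcs.norm
    have hφ0 : ∫ x, φ x ∂μ = 0 := by
      have h1 : ∫ x, (‖A‖ * ‖f x‖ + ‖(1:𝕜)‖ * ‖g x‖) ∂μ =
          ∫ x, ‖A * f x + 1 * g x‖ ∂μ := by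
        rw [hkey, integral_add (hif.const_mul _) (hig.const_mul _),
          integral_const_mul, integral_const_mul]
      have hcs : HasCompactSupport fun x => A * f x + 1 * g x :=
        hf.mul_left.add hg.mul_left
      have hint2 : Integrable (fun x => ‖A * f x + 1 * g x‖) μ :=
        (Continuous.norm (by fun_prop)).integrable_of_hasCompactSupport hcs.norm
      have ha : Integrable (fun x => ‖A‖ * ‖f x‖ + ‖(1:𝕜)‖ * ‖g x‖) μ :=
        (hif.const_mul _).add (hig.const_mul _)
      rw [show φ = fun x => (‖A‖ * ‖f x‖ + ‖(1:𝕜)‖ * ‖g x‖) - ‖A * f x + 1 * g x‖ from rfl,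
        integral_sub ha hint2, h1, sub_self]
    have hae : φ =ᵐ[μ] 0 := (integral_eq_zero_iff_of_nonneg hφnn hφint).mp hφ0
    have hφx₀ : 0 < φ x₀ := by
      have hmul : A * f x₀ = -(g x₀) := by
        rw [hA, div_mul_cancel₀ _ hfx₀]
      have hz : A * f x₀ + g x₀ = 0 := by rw [hmul]; ring
      have hval : φ x₀ = ‖A‖ * ‖f x₀‖ + ‖g x₀‖ := by
        simp [hφ, hz]
      rw [hval]
      have h1 : 0 < ‖g x₀‖ := norm_pos_iff.mpr hgx₀
      have h2 : 0 ≤ ‖A‖ * ‖f x₀‖ := by positivity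
      linarith
    have hU : IsOpen {x | 0 < φ x} := isOpen_lt continuous_const hφcont
    have hμU : 0 < μ {x | 0 < φ x} := hfull _ hU ⟨x₀, hφx₀⟩
    have hz : μ {x | 0 < φ x} = 0 := by
      refine measure_mono_null ?_ hae
      intro x hx
      simp only [mem_setOf_eq] at hx
      simp [hx.ne']
    exact absurd hz hμU.ne'
end
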